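/- arXiv:2510.25715 — 10 statements merged into one kernel-verified Lean document; each statement's English description precedes it below -/
import Mathlib

section
/- Let (α_i) be a sequence of positive reals such that for every subset I of ℕ with ∑_{i∈I} α_i < ∞ we have inf{α_i : i ∉ I} = 0. Then for every subset I ⊆ ℕ and every real t with ∑_{i∈I} α_i < t < ∞, there exists J ⊇ I with ∑_{i∈J} α_i = t. -/
/-!
Among the sets `J ⊇ I` with `∑_{i ∈ J} α i ≤ t`, Zorn's lemma gives a maximal one: the bound passes
to unions of chains because every finite subset of such a union lies in a single member. If the
sum over a maximal `J` were below `t`, the hypothesis would provide some `i ∉ J` with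
`α i < t - ∑_{j ∈ J} α j`, and `insert i J` would contradict maximality.
-/

open scoped ENNReal

variable {ι : Type*}

theorem ENNReal.tsum_sUnion_le_of_directedOn (f : ι → ℝ≥0∞) {c : Set (Set ι)}
    (hne : c.Nonempty) (hc : DirectedOn (· ⊆ ·) c) {t : ℝ≥0∞}
    (h : ∀ s ∈ c, ∑' i : s, f i ≤ t) : ∑' i : ⋃₀ c, f i ≤ t := by
  rw [ENNReal.tsum_eq_iSup_sum]
  refine iSup_le fun F => ?_
  set F' := F.map (Function.Embedding.subtype _)
  obtain ⟨s, hs, hF's⟩ := hc.exists_mem_subset_of_finite_of_subset_sUnion hne F'.finite_toSet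
    fun x hx => by obtain ⟨i, -, rfl⟩ := Finset.mem_map.mp hx; exact i.2
  calc ∑ i ∈ F, f i = ∑ i ∈ F', f i := (Finset.sum_map F (Function.Embedding.subtype _) f).symm
    _ = ∑' i : (F' : Set ι), f i := (Finset.tsum_subtype _ f).symm
    _ ≤ ∑' i : s, f i := ENNReal.tsum_mono_subtype f hF's
    _ ≤ t := h s hs

theorem ENNReal.tsum_insert_le (f : ι → ℝ≥0∞) (s : Set ι) (a : ι) :
    ∑' i : (insert a s : Set ι), f i ≤ f a + ∑' i : s, f i := by
  rw [Set.insert_eq, ← tsum_singleton a f]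
  exact ENNReal.tsum_union_le f {a} s

theorem ENNReal.exists_maximal_superset_tsum_le (f : ι → ℝ≥0∞) {I : Set ι} {t : ℝ≥0∞}
    (hI : ∑' i : I, f i ≤ t) :
    ∃ J, I ⊆ J ∧ Maximal (fun J : Set ι => ∑' i : J, f i ≤ t) J :=
  zorn_subset_nonempty {J : Set ι | ∑' i : J, f i ≤ t}
    (fun c hcS hc hne => ⟨⋃₀ c, ENNReal.tsum_sUnion_le_of_directedOn f hne hc.directedOn hcS,
      fun _ => Set.subset_sUnion_of_mem⟩) I hI

theorem ENNReal.exists_superset_tsum_eq (f : ι → ℝ≥0∞)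
    (hf : ∀ J : Set ι, ∑' i : J, f i < ⊤ → ⨅ i : ↥Jᶜ, f i = 0) {I : Set ι} {t : ℝ≥0∞}
    (hI : ∑' i : I, f i ≤ t) (ht : t < ⊤) : ∃ J, I ⊆ J ∧ ∑' i : J, f i = t := by
  obtain ⟨J, hIJ, hJ⟩ := ENNReal.exists_maximal_superset_tsum_le f hI
  refine ⟨J, hIJ, hJ.prop.eq_of_not_lt fun hlt => ?_⟩
  obtain ⟨⟨a, haJ⟩, ha⟩ :=
    iInf_lt_iff.mp ((hf J (hlt.trans ht)).trans_lt (tsub_pos_of_lt hlt))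
  exact haJ <| hJ.mem_of_prop_insert <|
    (ENNReal.tsum_insert_le f J a).trans (lt_tsub_iff_right.mp ha).le

theorem stmt0_general (α : ℕ → ℝ)
    (h : ∀ I : Set ℕ, (∑' i : I, ENNReal.ofReal (α (i : ℕ))) < ⊤ →
      (⨅ i : ↥Iᶜ, ENNReal.ofReal (α (i : ℕ))) = 0) :
    ∀ (I : Set ℕ) (t : ℝ≥0∞), (∑' i : I, ENNReal.ofReal (α (i : ℕ))) < t → t < ⊤ →
      ∃ J : Set ℕ, I ⊆ J ∧ (∑' i : J, ENNReal.ofReal (α (i : ℕ))) = t :=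
  fun _ _ hIt ht => ENNReal.exists_superset_tsum_eq (fun i => ENNReal.ofReal (α i)) h hIt.le ht

/-- If `(α i)` is a sequence of positive reals such that
`inf {α i : i ∉ I} = 0` for every `I ⊆ ℕ` with `∑_{i ∈ I} α i < ∞`, then for every
`I ⊆ ℕ` and every `t` with `∑_{i ∈ I} α i < t < ∞` there is `J ⊇ I` with
`∑_{i ∈ J} α i = t`. -/
theorem stmt0 (α : ℕ → ℝ) (hα : ∀ i, 0 < α i)
    (h : ∀ I : Set ℕ, (∑' i : I, ENNReal.ofReal (α (i : ℕ))) < ⊤ →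
      (⨅ i : ↥Iᶜ, ENNReal.ofReal (α (i : ℕ))) = 0) :
    ∀ (I : Set ℕ) (t : ℝ≥0∞), (∑' i : I, ENNReal.ofReal (α (i : ℕ))) < t → t < ⊤ →
      ∃ J : Set ℕ, I ⊆ J ∧ (∑' i : J, ENNReal.ofReal (α (i : ℕ))) = t :=
  stmt0_general α h
end

section
/- Let (α_i) be a sequence of positive reals such that inf{α_i : i ∉ I} = 0 whenever ∑_{i∈I} α_i < ∞. Then there exists a subsequence (α_{i_j}) with ∑_j α_{i_j} = ∞ and ∑_j α_{i_j}^p < ∞ for every p ∈ (1,∞). -/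
/-!
Write `a i = ofReal (α i)`. The hypothesis says that `∑_{a i < ε} a i = ∞` for every `ε > 0`, so
for each `n` there is a finite block `F n ⊆ {a < 2⁻ⁿ}` with sum in `[1, 2]` (the terms are at most
`1`, so a minimal subfamily of sum `≥ 1` has sum `≤ 2`). On the union `S` of the blocks,
`∑_S a^p ≤ ∑_n 2^{-n(p-1)} ∑_{F n} a ≤ 2 ∑_n 2^{-n(p-1)} < ∞`, while `∑_S a = ∞`: were it
finite, then, all `a i` being positive, the mass of `S ∩ {a < ε}` would tend to `0` with `ε`,
yet it contains a whole block. Enumerating `S` increasingly gives the subsequence.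
-/

open scoped ENNReal

variable {ι : Type*}

theorem Finset.exists_subset_one_le_sum_le_two {f : ι → ℝ≥0∞} (u : Finset ι)
    (hf : ∀ i ∈ u, f i ≤ 1) (hu : 1 ≤ ∑ i ∈ u, f i) :
    ∃ t ⊆ u, 1 ≤ ∑ i ∈ t, f i ∧ ∑ i ∈ t, f i ≤ 2 := by
  classical
  induction u using Finset.induction_on with
  | empty => simp at hu
  | insert a u ha ih =>
    by_cases hsmall : ∑ i ∈ u, f i < 1
    · refine ⟨insert a u, subset_rfl, hu, ?_⟩
      rw [Finset.sum_insert ha, ← one_add_one_eq_two]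
      exact add_le_add (hf a (mem_insert_self a u)) hsmall.le
    · obtain ⟨t, htu, ht⟩ := ih (fun i hi => hf i (mem_insert_of_mem hi)) (not_lt.1 hsmall)
      exact ⟨t, htu.trans (subset_insert a u), ht⟩

theorem Set.Infinite.exists_strictMono_tsum_comp_eq {M : Type*} [AddCommMonoid M]
    [TopologicalSpace M] {S : Set ℕ} (hS : S.Infinite) :
    ∃ σ : ℕ → ℕ, StrictMono σ ∧ ∀ f : ℕ → M, ∑' j, f (σ j) = ∑' i : S, f i := by
  refine ⟨Nat.nth (· ∈ S), Nat.nth_strictMono hS, fun f => ?_⟩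
  rw [← tsum_range f (Nat.nth_injective (p := (· ∈ S)) hS),
    Nat.range_nth_of_infinite (p := (· ∈ S)) hS]
  rfl

namespace ENNReal

theorem exists_finset_subset_one_le_sum_le_two {f : ι → ℝ≥0∞} {s : Set ι}
    (hf : ∀ i ∈ s, f i ≤ 1) (hs : ∑' i : s, f i = ∞) :
    ∃ t : Finset ι, ↑t ⊆ s ∧ 1 ≤ ∑ i ∈ t, f i ∧ ∑ i ∈ t, f i ≤ 2 := by
  have : 1 < ⨆ v : Finset s, ∑ i ∈ v, f i := by
    rw [← ENNReal.tsum_eq_iSup_sum, hs]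
    exact one_lt_top
  obtain ⟨v, hv⟩ := lt_iSup_iff.1 this
  obtain ⟨t, htv, ht⟩ := (v.map (Function.Embedding.subtype _)).exists_subset_one_le_sum_le_two
    (by simpa using fun i hi _ => hf i hi) (by simpa using hv.le)
  refine ⟨t, fun i hi => ?_, ht⟩
  obtain ⟨j, -, rfl⟩ := Finset.mem_map.1 (htv hi)
  exact j.2

theorem tsum_setOf_lt_eq_top {a : ι → ℝ≥0∞}
    (h : ∀ I : Set ι, ∑' i : I, a i < ∞ → ⨅ i : ↥Iᶜ, a i = 0) {ε : ℝ≥0∞} (hε : 0 < ε) :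
    ∑' i : {i | a i < ε}, a i = ∞ := by
  by_contra hne
  have hinf : ε ≤ ⨅ i : ↥{i | a i < ε}ᶜ, a i := le_iInf fun i => not_lt.1 i.2
  rw [h _ (lt_top_iff_ne_top.2 hne)] at hinf
  exact hε.not_ge hinf

theorem exists_pos_tsum_inter_setOf_lt_lt {f g : ι → ℝ≥0∞} (hg : ∀ i, g i ≠ 0)
    {s : Set ι} (hs : ∑' i : s, f i ≠ ∞) {δ : ℝ≥0∞} (hδ : 0 < δ) :
    ∃ ε > 0, ∑' i : ↥(s ∩ {i | g i < ε}), f i < δ := by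
  obtain ⟨u, hu⟩ := ((tendsto_tsum_compl_atTop_zero hs).eventually (gt_mem_nhds hδ)).exists
  refine ⟨u.inf fun j : s => g j, (Finset.lt_inf_iff zero_lt_top).2 fun i _ => pos_iff_ne_zero.2
    (hg i), lt_of_le_of_lt ?_ hu⟩
  let e : ↥(s ∩ {i | g i < u.inf fun j : s => g j}) → {x : s // x ∉ u} := fun i =>
    ⟨⟨i, i.2.1⟩, fun hi => (Finset.inf_le (f := fun j : s => g j) hi).not_gt i.2.2⟩
  exact tsum_comp_le_tsum_of_injective (f := e)
    (fun i j hij => Subtype.ext (congrArg (fun x => (x.1 : ι)) hij)) (fun x => f x.1)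

theorem tsum_eq_top_of_one_le_tsum_inter_setOf_lt {f : ι → ℝ≥0∞} (hf : ∀ i, f i ≠ 0)
    {s : Set ι} (hs : ∀ ε > 0, 1 ≤ ∑' i : ↥(s ∩ {i | f i < ε}), f i) :
    ∑' i : s, f i = ∞ := by
  by_contra hne
  obtain ⟨ε, hε, hlt⟩ := exists_pos_tsum_inter_setOf_lt_lt hf hne one_pos
  exact (hs ε hε).not_gt hlt

theorem infinite_of_tsum_eq_top {f : ι → ℝ≥0∞} {s : Set ι} (hf : ∀ i ∈ s, f i ≠ ∞)
    (hs : ∑' i : s, f i = ∞) : s.Infinite := by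
  intro hfin
  lift s to Finset ι using hfin
  rw [Finset.tsum_subtype' s f] at hs
  exact sum_ne_top.2 hf hs

theorem rpow_le_rpow_sub_one_mul {x ε : ℝ≥0∞} (hx : x ≤ ε) {p : ℝ} (hp : 1 ≤ p) :
    x ^ p ≤ ε ^ (p - 1) * x := by
  calc x ^ p = x ^ (p - 1) * x ^ (1 : ℝ) := by
        rw [← rpow_add_of_nonneg _ _ (by linarith) zero_le_one, sub_add_cancel]
    _ ≤ ε ^ (p - 1) * x := by
        rw [rpow_one]
        gcongr

theorem pow_rpow_comm (x : ℝ≥0∞) (n : ℕ) (y : ℝ) : (x ^ n) ^ y = (x ^ y) ^ n := by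
  rw [← rpow_natCast, ← rpow_natCast, ← rpow_mul, ← rpow_mul, mul_comm]

theorem tsum_iUnion_rpow_lt_top {a : ι → ℝ≥0∞} {F : ℕ → Finset ι} {r C : ℝ≥0∞} (hr : r < 1)
    (hC : C ≠ ∞) (hF_le : ∀ n, ∀ i ∈ F n, a i ≤ r ^ n) (hF_sum : ∀ n, ∑ i ∈ F n, a i ≤ C)
    {p : ℝ} (hp : 1 < p) : ∑' i : ↥(⋃ n, (F n : Set ι)), a i ^ p < ∞ := by
  have hblock (n : ℕ) : ∑' i : (F n : Set ι), a i ^ p ≤ C * (r ^ (p - 1)) ^ n := by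
    calc ∑' i : (F n : Set ι), a i ^ p = ∑ i ∈ F n, a i ^ p := Finset.tsum_subtype' (F n) (a · ^ p)
      _ ≤ ∑ i ∈ F n, (r ^ n) ^ (p - 1) * a i :=
        Finset.sum_le_sum fun i hi => rpow_le_rpow_sub_one_mul (hF_le n i hi) hp.le
      _ ≤ (r ^ n) ^ (p - 1) * C := by
        rw [← Finset.mul_sum]
        exact mul_le_mul_right (hF_sum n) _
      _ = C * (r ^ (p - 1)) ^ n := by rw [pow_rpow_comm, mul_comm]
  calc ∑' i : ↥(⋃ n, (F n : Set ι)), a i ^ p ≤ ∑' n, ∑' i : (F n : Set ι), a i ^ p :=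
        tsum_iUnion_le_tsum (a · ^ p) _
    _ ≤ ∑' n, C * (r ^ (p - 1)) ^ n := ENNReal.tsum_le_tsum hblock
    _ < ∞ := by
      rw [ENNReal.tsum_mul_left]
      exact mul_lt_top hC.lt_top (tsum_geometric_lt_top.2 (rpow_lt_one hr (by linarith)))

theorem exists_strictMono_tsum_eq_top_tsum_rpow_lt_top (a : ℕ → ℝ≥0∞)
    (ha : ∀ i, a i ≠ 0) (h : ∀ I : Set ℕ, ∑' i : I, a i < ∞ → ⨅ i : ↥Iᶜ, a i = 0) :
    ∃ σ : ℕ → ℕ, StrictMono σ ∧ ∑' j, a (σ j) = ∞ ∧ ∀ p : ℝ, 1 < p → ∑' j, a (σ j) ^ p < ∞ := by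
  have hle_one {n i} (hi : a i < 2⁻¹ ^ n) : a i ≤ 1 :=
    hi.le.trans (pow_le_one₀ zero_le (by norm_num))
  have hblock (n : ℕ) : ∃ t : Finset ℕ, ↑t ⊆ {i | a i < 2⁻¹ ^ n} ∧
      1 ≤ ∑ i ∈ t, a i ∧ ∑ i ∈ t, a i ≤ 2 :=
    exists_finset_subset_one_le_sum_le_two (fun _ => hle_one)
      (tsum_setOf_lt_eq_top h (ENNReal.pow_pos (by norm_num) n))
  choose F hF_lt hF_ge hF_le using hblock
  set S := ⋃ n, (F n : Set ℕ)
  have hS_div : ∑' i : S, a i = ∞ := tsum_eq_top_of_one_le_tsum_inter_setOf_lt ha fun ε hε => by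
    obtain ⟨n, hn⟩ := ((tendsto_pow_atTop_nhds_zero_of_lt_one
      (by norm_num : (2⁻¹ : ℝ≥0∞) < 1)).eventually (gt_mem_nhds hε)).exists
    have hFS : (F n : Set ℕ) ⊆ S ∩ {i | a i < ε} := fun i hi =>
      ⟨Set.mem_iUnion.2 ⟨n, hi⟩, (hF_lt n hi).trans hn⟩
    calc 1 ≤ ∑ i ∈ F n, a i := hF_ge n
      _ = ∑' i : (F n : Set ℕ), a i := (Finset.tsum_subtype' (F n) a).symm
      _ ≤ ∑' i : ↥(S ∩ {i | a i < ε}), a i := ENNReal.tsum_mono_subtype _ hFS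
  have hS_inf : S.Infinite := infinite_of_tsum_eq_top (fun i hi => by
    obtain ⟨n, hn⟩ := Set.mem_iUnion.1 hi
    exact ne_top_of_le_ne_top one_ne_top (hle_one (hF_lt n hn))) hS_div
  obtain ⟨σ, hσ, hsum⟩ := hS_inf.exists_strictMono_tsum_comp_eq (M := ℝ≥0∞)
  refine ⟨σ, hσ, (hsum a).trans hS_div, fun p hp => (hsum (a · ^ p)).trans_lt ?_⟩
  exact tsum_iUnion_rpow_lt_top (by norm_num) ofNat_ne_top (fun n i hi => (hF_lt n hi).le)
    hF_le hp

end ENNReal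

/-- If `(α i)` is a sequence of positive reals such that
`inf {α i : i ∉ I} = 0` whenever `∑_{i ∈ I} α i < ∞`, then there is a subsequence
`(α (σ j))` with `∑_j α (σ j) = ∞` and `∑_j (α (σ j))^p < ∞` for every `p ∈ (1, ∞)`. -/
theorem stmt1 (α : ℕ → ℝ) (hα : ∀ i, 0 < α i)
    (h : ∀ I : Set ℕ, (∑' i : I, ENNReal.ofReal (α (i : ℕ))) < ⊤ →
      (⨅ i : ↥Iᶜ, ENNReal.ofReal (α (i : ℕ))) = 0) :
    ∃ σ : ℕ → ℕ, StrictMono σ ∧ (∑' j : ℕ, ENNReal.ofReal (α (σ j))) = ⊤ ∧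
      ∀ p : ℝ, 1 < p → (∑' j : ℕ, ENNReal.ofReal (α (σ j) ^ p)) < ⊤ := by
  obtain ⟨σ, hσ, hdiv, hconv⟩ := ENNReal.exists_strictMono_tsum_eq_top_tsum_rpow_lt_top
    (fun i => ENNReal.ofReal (α i)) (fun i => (ENNReal.ofReal_pos.2 (hα i)).ne') h
  refine ⟨σ, hσ, hdiv, fun p hp => ?_⟩
  simpa only [ENNReal.ofReal_rpow_of_nonneg (hα _).le (by linarith : 0 ≤ p)] using hconv p hp
end

section
/- Let (Ω, 𝔽, ℙ) be a probability space and (A_i) a sequence of events. Suppose there exist C ≥ 1 and n ∈ ℕ such that ℙ(A_i ∩ A_j) ≤ C·ℙ(A_i)·ℙ(A_j) for all j > i ≥ n. If ∑_i ℙ(A_i) = ∞, then ℙ(limsup_i A_i) ≥ 1/C. -/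
open MeasureTheory Filter
open scoped ENNReal Topology

lemma chung_erdos {Ω : Type*} [MeasurableSpace Ω] (μ : Measure Ω)
    (A : ℕ → Set Ω) (hA : ∀ i, MeasurableSet (A i)) (F : Finset ℕ) :
    (∑ i ∈ F, μ (A i)) * (∑ i ∈ F, μ (A i)) ≤
      (∑ i ∈ F, ∑ j ∈ F, μ (A i ∩ A j)) * μ (⋃ i ∈ F, A i) := by
  set f : Ω → ℝ≥0∞ := fun ω => ∑ i ∈ F, (A i).indicator 1 ω with hf
  set U : Set Ω := ⋃ i ∈ F, A i with hU
  have hUm : MeasurableSet U := F.measurableSet_biUnion (fun i _ => hA i)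
  set g : Ω → ℝ≥0∞ := U.indicator 1 with hg
  have hfm : Measurable f := Finset.measurable_sum _ fun i _ =>
    (measurable_const.indicator (hA i))
  have hgm : Measurable g := measurable_const.indicator hUm
  have hfg : ∀ ω, (f * g) ω = f ω := by
    intro ω
    by_cases h : ω ∈ U
    · simp [hg, Set.indicator_of_mem h]
    · have : f ω = 0 := by
        refine Finset.sum_eq_zero fun i hi => ?_
        have : ω ∉ A i := fun hm => h (Set.mem_biUnion hi hm)
        simp [Set.indicator_of_notMem this]
      simp [this]
  have h1 : ∫⁻ ω, f ω ∂μ = ∑ i ∈ F, μ (A i) := by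
    simp only [hf]
    rw [lintegral_finset_sum F (f := fun i ω => (A i).indicator 1 ω) (fun i _ => measurable_const.indicator (hA i))]
    simp [lintegral_indicator_one, hA]
  have h2 : ∫⁻ ω, f ω ^ (2:ℝ) ∂μ = ∑ i ∈ F, ∑ j ∈ F, μ (A i ∩ A j) := by
    have hsq : ∀ ω, f ω ^ (2:ℝ) = ∑ i ∈ F, ∑ j ∈ F, (A i ∩ A j).indicator 1 ω := by
      intro ω
      rw [show ((2:ℝ)) = ((2:ℕ):ℝ) by norm_num, ENNReal.rpow_natCast, sq, hf,
        Finset.sum_mul_sum]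
      refine Finset.sum_congr rfl fun i _ => Finset.sum_congr rfl fun j _ => ?_
      rw [Set.inter_indicator_one]
      rfl
    simp_rw [hsq]
    rw [lintegral_finset_sum F (f := fun i ω => ∑ j ∈ F, (A i ∩ A j).indicator 1 ω) (fun i _ => Finset.measurable_sum _ fun j _ =>
      measurable_const.indicator ((hA i).inter (hA j)))]
    refine Finset.sum_congr rfl fun i _ => ?_
    rw [lintegral_finset_sum F (f := fun j ω => (A i ∩ A j).indicator 1 ω) (fun j _ => measurable_const.indicator ((hA i).inter (hA j)))]
    simp [lintegral_indicator_one, (hA _).inter (hA _)]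
  have h3 : ∫⁻ ω, g ω ^ (2:ℝ) ∂μ = μ U := by
    have : ∀ ω, g ω ^ (2:ℝ) = g ω := by
      intro ω
      by_cases h : ω ∈ U <;> simp [hg, Set.indicator_of_mem, Set.indicator_of_notMem, h,
        ENNReal.rpow_two]
    simp_rw [this]
    rw [hg, lintegral_indicator_one hUm]
  have holder := ENNReal.lintegral_mul_le_Lp_mul_Lq μ (Real.holderConjugate_iff_eq_conjExponent
    (by norm_num) |>.mpr (by norm_num) : Real.HolderConjugate 2 2)
    hfm.aemeasurable hgm.aemeasurable
  simp_rw [hfg] at holder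
  rw [h1, h2, h3] at holder
  calc (∑ i ∈ F, μ (A i)) * (∑ i ∈ F, μ (A i))
      ≤ ((∑ i ∈ F, ∑ j ∈ F, μ (A i ∩ A j)) ^ (1/2:ℝ) * μ U ^ (1/2:ℝ)) *
        ((∑ i ∈ F, ∑ j ∈ F, μ (A i ∩ A j)) ^ (1/2:ℝ) * μ U ^ (1/2:ℝ)) :=
        mul_le_mul' holder holder
    _ = (∑ i ∈ F, ∑ j ∈ F, μ (A i ∩ A j)) * μ U := by
        rw [mul_mul_mul_comm, ← ENNReal.rpow_add_of_nonneg _ _ (by norm_num) (by norm_num),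
          ← ENNReal.rpow_add_of_nonneg _ _ (by norm_num) (by norm_num)]
        norm_num

/-- Kochen–Stone / Petrov refinement of the second Borel–Cantelli lemma.
If `ℙ(A i ∩ A j) ≤ C ℙ(A i) ℙ(A j)` for all `j > i ≥ n` and `∑ ℙ(A i) = ∞`, then
`ℙ(limsup A i) ≥ 1/C`. -/
theorem stmt2 {Ω : Type*} [MeasurableSpace Ω] (μ : Measure Ω) [IsProbabilityMeasure μ]
    (A : ℕ → Set Ω) (hA : ∀ i, MeasurableSet (A i))
    (C : ℝ) (hC : 1 ≤ C) (n : ℕ)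
    (hcorr : ∀ i j, n ≤ i → i < j →
      μ (A i ∩ A j) ≤ ENNReal.ofReal C * μ (A i) * μ (A j))
    (hdiv : (∑' i, μ (A i)) = ⊤) :
    ENNReal.ofReal (1 / C) ≤ μ (Filter.limsup A Filter.atTop) := by
  have hCpos : (0:ℝ) < C := lt_of_lt_of_le one_pos hC
  set C' : ℝ≥0∞ := ENNReal.ofReal C with hC'
  have hC'0 : C' ≠ 0 := by simp [hC', hCpos]
  have hC'top : C' ≠ ⊤ := ENNReal.ofReal_ne_top
  have hgoal : ENNReal.ofReal (1 / C) = C'⁻¹ := by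
    rw [one_div, ENNReal.ofReal_inv_of_pos hCpos]
  rw [hgoal]
  set U : ℕ → Set Ω := fun m => ⋃ i, ⋃ (_ : m ≤ i), A i with hUdef
  have hUmeas : ∀ m, MeasurableSet (U m) :=
    fun m => MeasurableSet.iUnion fun i => MeasurableSet.iUnion fun _ => hA i
  -- key bound for each m
  have hU : ∀ m, C'⁻¹ ≤ μ (U m) := by
    intro m
    set m' : ℕ := max m n with hm'
    set S : ℕ → ℝ≥0∞ := fun N => ∑ i ∈ Finset.Icc m' N, μ (A i) with hS
    have hSfin : ∀ N, S N ≠ ⊤ := by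
      intro N
      exact (ENNReal.sum_lt_top.2 fun i _ => measure_lt_top μ _).ne
    -- S tends to ⊤
    have hStop : Tendsto S atTop (𝓝 ⊤) := by
      set q : ℕ → ℝ≥0∞ := fun i => if m' ≤ i then μ (A i) else 0 with hq
      have htq : ∑' i, q i = ⊤ := by
        by_contra h
        set r : ℕ → ℝ≥0∞ := fun i => if m' ≤ i then 0 else μ (A i) with hr
        have hsplit : ∀ i, μ (A i) = q i + r i := by
          intro i; by_cases hi : m' ≤ i <;> simp [hq, hr, hi]
        have hrfin : ∑' i, r i ≠ ⊤ := by
          have : ∑' i, r i = ∑ i ∈ Finset.range m', r i := by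
            refine tsum_eq_sum fun i hi => ?_
            have : m' ≤ i := by simpa using Nat.le_of_not_lt (by simpa using hi)
            simp [hr, this]
          rw [this]
          exact (ENNReal.sum_lt_top.2 fun i _ => by
            by_cases hi : m' ≤ i <;> simp [hr, hi, measure_lt_top]).ne
        have : (∑' i, μ (A i)) ≠ ⊤ := by
          simp_rw [hsplit]
          rw [ENNReal.tsum_add]
          exact ENNReal.add_ne_top.mpr ⟨h, hrfin⟩
        exact this hdiv
      have hqsum : ∀ N, ∑ i ∈ Finset.range (N+1), q i = S N := by
        intro N
        simp only [hS, hq]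
        rw [← Finset.sum_filter]
        congr 1
        ext i
        simp only [Finset.mem_filter, Finset.mem_range, Finset.mem_Icc, Nat.lt_succ_iff]
        omega
      have h1 : Tendsto (fun N => ∑ i ∈ Finset.range (N+1), q i) atTop (𝓝 ⊤) := by
        rw [← htq]
        exact (ENNReal.tendsto_nat_tsum q).comp (tendsto_add_atTop_nat 1)
      simpa [hqsum] using h1
    -- bound for each N with S N ≠ 0
    have hbound : ∀ N, S N ≠ 0 → ((S N)⁻¹ + C')⁻¹ ≤ μ (U m) := by
      intro N hS0
      set F : Finset ℕ := Finset.Icc m' N with hF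
      have hsub : (⋃ i ∈ F, A i) ⊆ U m := by
        refine Set.iUnion₂_subset fun i hi => ?_
        have : m ≤ i := le_trans (le_max_left m n) (Finset.mem_Icc.mp hi).1
        exact fun x hx => Set.mem_iUnion₂.mpr ⟨i, this, hx⟩
      have hT : (∑ i ∈ F, ∑ j ∈ F, μ (A i ∩ A j)) ≤ S N + C' * (S N * S N) := by
        have hterm : ∀ i ∈ F, ∀ j ∈ F, μ (A i ∩ A j) ≤
            (if i = j then μ (A i) else 0) + C' * (μ (A i) * μ (A j)) := by
          intro i hi j hj
          rcases lt_trichotomy i j with hij | hij | hij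
          · have hni : n ≤ i := le_trans (le_max_right m n) (Finset.mem_Icc.mp hi).1
            have := hcorr i j hni hij
            simp only [if_neg hij.ne]
            calc μ (A i ∩ A j) ≤ C' * μ (A i) * μ (A j) := this
              _ ≤ 0 + C' * (μ (A i) * μ (A j)) := by rw [zero_add, mul_assoc]
          · subst hij; simp
          · have hnj : n ≤ j := le_trans (le_max_right m n) (Finset.mem_Icc.mp hj).1
            have := hcorr j i hnj hij
            rw [Set.inter_comm]
            simp only [if_neg hij.ne']
            calc μ (A j ∩ A i) ≤ C' * μ (A j) * μ (A i) := this
              _ = 0 + C' * (μ (A i) * μ (A j)) := by ring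
        calc (∑ i ∈ F, ∑ j ∈ F, μ (A i ∩ A j))
            ≤ ∑ i ∈ F, ∑ j ∈ F, ((if i = j then μ (A i) else 0) + C' * (μ (A i) * μ (A j))) :=
              Finset.sum_le_sum fun i hi => Finset.sum_le_sum fun j hj => hterm i hi j hj
          _ = S N + C' * (S N * S N) := by
              have d1 : ∑ i ∈ F, ∑ j ∈ F, (if i = j then μ (A i) else 0) = S N := by
                rw [hS]
                refine Finset.sum_congr rfl fun i hi => ?_
                rw [Finset.sum_ite_eq F i (fun _ => μ (A i)), if_pos hi]
              have d2 : ∑ i ∈ F, ∑ j ∈ F, C' * (μ (A i) * μ (A j)) = C' * (S N * S N) := by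
                symm
                rw [hS, Finset.sum_mul_sum, Finset.mul_sum]
                exact Finset.sum_congr rfl fun i _ => by rw [Finset.mul_sum]
              simp only [Finset.sum_add_distrib, d1, d2]
      have hce := chung_erdos μ A hA F
      have hmu : μ (⋃ i ∈ F, A i) ≤ μ (U m) := measure_mono hsub
      have key : S N * S N ≤ (S N + C' * (S N * S N)) * μ (U m) := by
        calc S N * S N ≤ (∑ i ∈ F, ∑ j ∈ F, μ (A i ∩ A j)) * μ (⋃ i ∈ F, A i) := hce
          _ ≤ (S N + C' * (S N * S N)) * μ (U m) := mul_le_mul' hT hmu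
      -- rearrange : S N + C' * (S N * S N) = S N * (1 + C' * S N)
      have hre : S N + C' * (S N * S N) = S N * (1 + C' * S N) := by ring
      rw [hre, mul_assoc] at key
      have key2 : S N ≤ (1 + C' * S N) * μ (U m) :=
        (ENNReal.mul_le_mul_iff_right hS0 (hSfin N)).mp key
      have hden0 : (1 + C' * S N) ≠ 0 := by
        intro h; rw [add_eq_zero] at h; exact one_ne_zero h.1
      have hdentop : (1 + C' * S N) ≠ ⊤ := by
        simp [ENNReal.add_ne_top, ENNReal.mul_ne_top hC'top (hSfin N)]
      have key3 : S N / (1 + C' * S N) ≤ μ (U m) :=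
        ENNReal.div_le_of_le_mul' key2
      have hsum : (S N)⁻¹ + C' = (1 + C' * S N) * (S N)⁻¹ := by
        rw [add_mul, one_mul, mul_assoc, ENNReal.mul_inv_cancel hS0 (hSfin N), mul_one]
      have hid : ((S N)⁻¹ + C')⁻¹ = S N / (1 + C' * S N) := by
        rw [hsum, ENNReal.mul_inv (Or.inl hden0) (Or.inl hdentop), inv_inv,
          div_eq_mul_inv, mul_comm]
      rw [hid]; exact key3
    -- take limits
    have hlim : Tendsto (fun N => ((S N)⁻¹ + C')⁻¹) atTop (𝓝 C'⁻¹) := by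
      have h1 : Tendsto (fun N => (S N)⁻¹) atTop (𝓝 0) := by
        rw [show (0:ℝ≥0∞) = ⊤⁻¹ by simp]
        exact ENNReal.tendsto_inv_iff.2 hStop
      have h2 : Tendsto (fun N => (S N)⁻¹ + C') atTop (𝓝 (0 + C')) := h1.add tendsto_const_nhds
      rw [zero_add] at h2
      exact ENNReal.tendsto_inv_iff.2 h2
    have hev : ∀ᶠ N in atTop, ((S N)⁻¹ + C')⁻¹ ≤ μ (U m) := by
      have : ∀ᶠ N in atTop, (1:ℝ≥0∞) < S N := hStop.eventually (lt_mem_nhds ENNReal.one_lt_top)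
      filter_upwards [this] with N hN
      exact hbound N (zero_lt_one.trans hN).ne'
    exact le_of_tendsto hlim hev
  -- conclude via continuity from above
  have hls : Filter.limsup A Filter.atTop = ⋂ m, U m := by
    rw [limsup_eq_iInf_iSup_of_nat]
    simp only [hUdef, Set.iInf_eq_iInter, Set.iSup_eq_iUnion]
  rw [hls]
  have hanti : Antitone U := by
    intro a b hab
    exact Set.iUnion₂_subset fun i hi x hx => Set.mem_iUnion₂.mpr ⟨i, le_trans hab hi, hx⟩
  have := tendsto_measure_iInter_atTop (μ := μ) (fun m => (hUmeas m).nullMeasurableSet)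
    hanti ⟨0, measure_ne_top μ _⟩
  exact ge_of_tendsto this (Eventually.of_forall fun m => hU m)
end

section
/- Let X be a metric space, E ⊆ X a subset, and x ∈ E. Then the following are equivalent: (1) E is not porous at x; (2) for every metric space Y and every Lipschitz map f : X → Y, Lip(f|_E; x) = Lip(f; x); (3) Lip(d(E,·); x) = 0. -/
open Filter Set
open scoped ENNReal NNReal Topology

/-- The pointwise Lipschitz constant `Lip(f; x)`:
`limsup_{y → x, y ≠ x} d(f x, f y) / d(x, y)` (equal to `0` at isolated points). -/
noncomputable def pLip {X Y : Type*} [MetricSpace X] [MetricSpace Y]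
    (f : X → Y) (x : X) : ℝ≥0∞ :=
  Filter.limsup (fun y => edist (f x) (f y) / edist x y) (𝓝[≠] x)

/-- The pointwise Lipschitz constant of the restriction `f|_E` at `x`. -/
noncomputable def pLipOn {X Y : Type*} [MetricSpace X] [MetricSpace Y]
    (f : X → Y) (E : Set X) (x : X) : ℝ≥0∞ :=
  Filter.limsup (fun y => edist (f x) (f y) / edist x y) (𝓝[E \ {x}] x)

/-- `E` is porous at `x ∈ E`: there are `ε > 0` and `y i → x` with
`E ∩ B(y i, ε · d(x, y i)) = ∅` for all `i`. -/
def PorousAt {X : Type*} [MetricSpace X] (E : Set X) (x : X) : Prop :=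
  ∃ ε : ℝ, 0 < ε ∧ ∃ y : ℕ → X, Tendsto y atTop (𝓝 x) ∧
    ∀ i, E ∩ Metric.closedBall (y i) (ε * dist x (y i)) = ∅

open Metric Asymptotics

/-! A point `y` near `x` whose distance to `E` is not `o(d(x, y))` is the centre of a hole of
radius comparable to `d(x, y)`; so non-porosity at `x` says exactly that `d(E, ·) = o(d(x, ·))`,
i.e. `Lip(d(E, ·); x) = 0`. Conversely, if `d(E, ·) = o(d(x, ·))`, every `y` near `x` has a point
`z ∈ E` with `d(y, z) ≤ ε d(x, y)`, and then `d(f x, f y) ≤ d(f x, f z) + K d(z, y)` bounds the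
difference quotient of `f` at `y` by that of `f|_E` at `z`, up to `O(ε)`. Since `d(E, ·)`
vanishes on `E`, the equality `Lip(f|_E; x) = Lip(f; x)` for `f = d(E, ·)` gives back
`Lip(d(E, ·); x) = 0`. -/

section PointwiseLipschitz

variable {X Y Z : Type*} [MetricSpace X] [MetricSpace Y] [MetricSpace Z]

theorem pLipOn_univ (f : X → Y) (x : X) : pLipOn f univ x = pLip f x := by
  rw [pLipOn, pLip, ← compl_eq_univ_sdiff]

theorem pLipOn_le_pLip (f : X → Y) (E : Set X) (x : X) : pLipOn f E x ≤ pLip f x :=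
  limsup_le_limsup_of_le (nhdsWithin_mono x fun _ hy => hy.2)

theorem Isometry.pLipOn_comp {g : Y → Z} (hg : Isometry g) (f : X → Y) (E : Set X) (x : X) :
    pLipOn (g ∘ f) E x = pLipOn f E x := by
  simp only [pLipOn, Function.comp_apply, hg.edist_eq]

theorem Isometry.pLip_comp {g : Y → Z} (hg : Isometry g) (f : X → Y) (x : X) :
    pLip (g ∘ f) x = pLip f x := by
  rw [← pLipOn_univ, hg.pLipOn_comp, pLipOn_univ]

theorem pLip_le_of_eventually_dist_le {f : X → Y} {x : X} {c : ℝ≥0}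
    (h : ∀ᶠ y in 𝓝 x, dist (f x) (f y) ≤ c * dist x y) : pLip f x ≤ c := by
  refine limsup_le_of_le (by isBoundedDefault) ?_
  filter_upwards [nhdsWithin_le_nhds h] with y hy
  refine ENNReal.div_le_of_le_mul ?_
  rw [edist_nndist, edist_nndist, ← ENNReal.coe_mul, ENNReal.coe_le_coe, ← NNReal.coe_le_coe]
  exact hy

theorem eventually_dist_le_of_pLipOn_lt {f : X → Y} {E : Set X} {x : X} {c : ℝ≥0}
    (h : pLipOn f E x < c) : ∀ᶠ z in 𝓝[E] x, dist (f x) (f z) ≤ c * dist x z := by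
  have hlt := eventually_lt_of_limsup_lt h
  rw [eventually_nhdsWithin_iff] at hlt ⊢
  filter_upwards [hlt] with z hz hzE
  rcases eq_or_ne z x with rfl | hzx
  · simp
  have hq := hz ⟨hzE, hzx⟩
  rw [ENNReal.div_lt_iff (Or.inl (edist_pos.2 hzx.symm).ne') (Or.inl (edist_ne_top x z)),
    edist_nndist, edist_nndist, ← ENNReal.coe_mul, ENNReal.coe_lt_coe, ← NNReal.coe_lt_coe] at hq
  exact hq.le

theorem pLip_eq_zero_iff_isLittleO {f : X → Y} {x : X} :
    pLip f x = 0 ↔ (fun y => dist (f x) (f y)) =o[𝓝 x] fun y => dist x y := by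
  simp only [isLittleO_iff, Real.norm_of_nonneg dist_nonneg]
  constructor
  · intro h c hc
    have hlt : pLipOn f univ x < c.toNNReal := by
      rw [pLipOn_univ, h]
      exact ENNReal.coe_pos.2 (Real.toNNReal_pos.2 hc)
    simpa [Real.coe_toNNReal _ hc.le] using eventually_dist_le_of_pLipOn_lt hlt
  · intro h
    refine le_antisymm (ENNReal.le_of_forall_pos_le_add fun ε hε _ => ?_) zero_le
    rw [zero_add]
    exact pLip_le_of_eventually_dist_le (h (NNReal.coe_pos.2 hε))

end PointwiseLipschitz

section Porosity

variable {X : Type*} [MetricSpace X] {E : Set X} {x : X}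

theorem porousAt_iff_frequently (hx : x ∈ E) :
    PorousAt E x ↔ ∃ ε > 0, ∃ᶠ y in 𝓝 x, ε * dist x y < infDist y E := by
  constructor
  · rintro ⟨ε, hε, y, hy, hhole⟩
    have hgap : ∀ i, ∀ z ∈ E, ε * dist x (y i) < dist (y i) z := fun i z hz => by
      by_contra! hle
      exact (hhole i).subset ⟨hz, mem_closedBall'.2 hle⟩
    refine ⟨ε / 2, half_pos hε, hy.frequently (Frequently.of_forall fun i => ?_)⟩
    have hpos : 0 < dist x (y i) := dist_pos.2 fun h => by simpa [h] using hgap i x hx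
    calc ε / 2 * dist x (y i) < ε * dist x (y i) := by gcongr; linarith
      _ ≤ infDist (y i) E := (le_infDist ⟨x, hx⟩).2 fun z hz => (hgap i z hz).le
  · rintro ⟨ε, hε, hfreq⟩
    obtain ⟨y, hy, hhole⟩ := frequently_iff_seq_forall.1 hfreq
    refine ⟨ε, hε, y, hy, fun i => eq_empty_iff_forall_notMem.2 ?_⟩
    rintro z ⟨hzE, hz⟩
    exact (hhole i).not_ge ((infDist_le_dist_of_mem hzE).trans (mem_closedBall'.1 hz))

theorem not_porousAt_iff_isLittleO (hx : x ∈ E) :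
    ¬ PorousAt E x ↔ (fun y => infDist y E) =o[𝓝 x] fun y => dist x y := by
  simp only [porousAt_iff_frequently hx, isLittleO_iff, Real.norm_of_nonneg infDist_nonneg,
    Real.norm_of_nonneg dist_nonneg]
  push Not
  rfl

theorem pLip_infDist_eq_zero_iff (hx : x ∈ E) :
    pLip (fun z => infDist z E) x = 0 ↔ (fun y => infDist y E) =o[𝓝 x] fun y => dist x y := by
  rw [pLip_eq_zero_iff_isLittleO, infDist_zero_of_mem hx]
  simp only [dist_zero_left, isLittleO_norm_left]

theorem pLipOn_infDist_self (hx : x ∈ E) : pLipOn (fun z => infDist z E) E x = 0 := by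
  refine le_antisymm (limsup_le_of_le (by isBoundedDefault) ?_) zero_le
  filter_upwards [eventually_mem_nhdsWithin] with z hz
  simp [infDist_zero_of_mem hx, infDist_zero_of_mem hz.1]

theorem eventually_exists_mem_dist_le_and (hx : x ∈ E)
    (hE : (fun y => infDist y E) =o[𝓝 x] fun y => dist x y) {P : X → Prop}
    (hP : ∀ᶠ z in 𝓝[E] x, P z) {ε : ℝ} (hε : 0 < ε) :
    ∀ᶠ y in 𝓝 x, ∃ z ∈ E, dist y z ≤ ε * dist x y ∧ P z := by
  obtain ⟨δ, hδ, hPδ⟩ := Metric.eventually_nhds_iff.1 (eventually_nhdsWithin_iff.1 hP)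
  have hε1 : 0 < 1 + ε := by linarith
  filter_upwards [hE.def (half_pos hε), ball_mem_nhds x (div_pos hδ hε1)] with y hyE hy
  rcases eq_or_ne y x with rfl | hyx
  · exact ⟨y, hx, by simp, hPδ (by simpa) hx⟩
  have hpos : 0 < dist x y := dist_pos.2 hyx.symm
  rw [Real.norm_of_nonneg infDist_nonneg, Real.norm_of_nonneg dist_nonneg] at hyE
  have hlt : infDist y E < ε * dist x y :=
    hyE.trans_lt (mul_lt_mul_of_pos_right (half_lt_self hε) hpos)
  obtain ⟨z, hzE, hyz⟩ := (infDist_lt_iff ⟨x, hx⟩).1 hlt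
  refine ⟨z, hzE, hyz.le, hPδ ?_ hzE⟩
  rw [mem_ball, dist_comm, lt_div_iff₀ hε1] at hy
  calc dist z x ≤ dist x y + dist y z := by rw [dist_comm z x]; exact dist_triangle x y z
    _ ≤ dist x y + ε * dist x y := by gcongr
    _ < δ := by linarith

variable {Y : Type*} [MetricSpace Y] {f : X → Y} {K : ℝ≥0}

theorem eventually_dist_le_of_isLittleO_infDist (hf : LipschitzWith K f) (hx : x ∈ E)
    (hE : (fun y => infDist y E) =o[𝓝 x] fun y => dist x y) {c : ℝ≥0}
    (hc : ∀ᶠ z in 𝓝[E] x, dist (f x) (f z) ≤ c * dist x z) {ε : ℝ≥0} (hε : 0 < ε) :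
    ∀ᶠ y in 𝓝 x, dist (f x) (f y) ≤ ↑(c * (1 + ε) + K * ε) * dist x y := by
  filter_upwards [eventually_exists_mem_dist_le_and hx hE hc (NNReal.coe_pos.2 hε)]
    with y hy
  obtain ⟨z, -, hyz, hfz⟩ := hy
  calc dist (f x) (f y) ≤ dist (f x) (f z) + dist (f z) (f y) := dist_triangle _ _ _
    _ ≤ c * dist x z + K * dist y z := by
        rw [dist_comm y z]; exact add_le_add hfz (hf.dist_le_mul z y)
    _ ≤ c * (dist x y + dist y z) + K * dist y z := by gcongr; exact dist_triangle x y z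
    _ ≤ c * (dist x y + ε * dist x y) + K * (ε * dist x y) := by gcongr
    _ = ↑(c * (1 + ε) + K * ε) * dist x y := by push_cast; ring

theorem pLip_le_pLipOn_of_isLittleO_infDist (hf : LipschitzWith K f) (hx : x ∈ E)
    (hE : (fun y => infDist y E) =o[𝓝 x] fun y => dist x y) : pLip f x ≤ pLipOn f E x := by
  refine le_of_forall_gt_imp_ge_of_dense fun c hc => ?_
  induction c using ENNReal.recTopCoe with
  | top => exact le_top
  | coe c =>
    have hlim : Tendsto (fun ε : ℝ≥0 => ((c * (1 + ε) + K * ε : ℝ≥0) : ℝ≥0∞)) (𝓝[>] 0) (𝓝 c) :=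
      ENNReal.tendsto_coe.2 <| tendsto_nhdsWithin_of_tendsto_nhds <|
        (Continuous.tendsto' (by fun_prop) 0 c (by simp))
    refine ge_of_tendsto hlim (eventually_nhdsWithin_of_forall fun ε hε => ?_)
    exact pLip_le_of_eventually_dist_le <|
      eventually_dist_le_of_isLittleO_infDist hf hx hE (eventually_dist_le_of_pLipOn_lt hc) hε

theorem pLipOn_eq_pLip_of_not_porousAt (hx : x ∈ E) (hP : ¬ PorousAt E x)
    (hf : LipschitzWith K f) : pLipOn f E x = pLip f x :=
  (pLipOn_le_pLip f E x).antisymm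
    (pLip_le_pLipOn_of_isLittleO_infDist hf hx ((not_porousAt_iff_isLittleO hx).1 hP))

universe u in
theorem pLip_infDist_eq_zero_of_forall_pLipOn_eq (hx : x ∈ E)
    (h : ∀ (Y : Type u) [MetricSpace Y] (f : X → Y) (K : ℝ≥0), LipschitzWith K f →
      pLipOn f E x = pLip f x) :
    pLip (fun z => infDist z E) x = 0 := by
  -- the test map `d(E, ·)` is real-valued, so it is lifted into the universe `u`
  have hup : Isometry (ULift.up : ℝ → ULift ℝ) := fun _ _ => rfl
  have := h _ _ 1 (by simpa using hup.lipschitz.comp (lipschitz_infDist_pt E))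
  rwa [hup.pLipOn_comp, hup.pLip_comp, pLipOn_infDist_self hx, eq_comm] at this

end Porosity

/-- For `x ∈ E ⊆ X`, the following are equivalent: `E` is not porous at `x`;
`Lip(f|_E; x) = Lip(f; x)` for every Lipschitz map `f` into any metric space;
`Lip(d(E, ·); x) = 0`. -/
theorem stmt6 {X : Type*} [MetricSpace X] (E : Set X) (x : X) (hx : x ∈ E) :
    (¬ PorousAt E x ↔
      (∀ (Y : Type*) [MetricSpace Y] (f : X → Y) (K : ℝ≥0), LipschitzWith K f →
        pLipOn f E x = pLip f x)) ∧
    ((∀ (Y : Type*) [MetricSpace Y] (f : X → Y) (K : ℝ≥0), LipschitzWith K f →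
        pLipOn f E x = pLip f x) ↔
      pLip (fun z => Metric.infDist z E) x = 0) := by
  have hPR : ¬ PorousAt E x ↔ pLip (fun z => infDist z E) x = 0 :=
    (not_porousAt_iff_isLittleO hx).trans (pLip_infDist_eq_zero_iff hx).symm
  exact ⟨⟨fun hP _ _ _ _ => pLipOn_eq_pLip_of_not_porousAt hx hP,
      fun h => hPR.2 (pLip_infDist_eq_zero_of_forall_pLipOn_eq hx h)⟩,
    ⟨pLip_infDist_eq_zero_of_forall_pLipOn_eq hx,
      fun h _ _ _ _ => pLipOn_eq_pLip_of_not_porousAt hx (hPR.2 h)⟩⟩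
end

section
/- Let X be a quasiconvex metric space and C₀ the infimum of constants C for which X is C-quasiconvex. Let Y be a metric space, 𝒬 a locally finite cover of X by closed sets, and f : X → Y a function with L := sup_{Q∈𝒬} Lip(f|_Q) < ∞. Then f is C₀·L-Lipschitz on X. In particular, if X is a length space then f is L-Lipschitz. -/
open Set
open scoped ENNReal NNReal

/-- `X` is `C`-quasiconvex: any two points are joined by a continuous curve on `[0,1]`
of variation at most `C · d(x, y)`. -/
def IsQuasiconvexWith (X : Type*) [MetricSpace X] (C : ℝ) : Prop :=
  ∀ x y : X, ∃ γ : ℝ → X, ContinuousOn γ (Icc 0 1) ∧ γ 0 = x ∧ γ 1 = y ∧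
    eVariationOn γ (Icc 0 1) ≤ ENNReal.ofReal (C * dist x y)

/-- The variation of `eVariationOn` additivity on intervals. -/
lemma myIccAdd {X : Type*} [MetricSpace X] (γ : ℝ → X) {a b c : ℝ}
    (hab : a ≤ b) (hbc : b ≤ c) :
    eVariationOn γ (Icc a b) + eVariationOn γ (Icc b c) = eVariationOn γ (Icc a c) := by
  have := eVariationOn.Icc_add_Icc γ (s := univ) hab hbc (mem_univ b)
  simpa using this

/-- Local Lipschitz estimate from a locally finite closed cover. -/
lemma local_est {X Y ι : Type*} [MetricSpace X] [MetricSpace Y]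
    (Q : ι → Set X) (hlf : LocallyFinite Q) (hcl : ∀ i, IsClosed (Q i))
    (hcov : (⋃ i, Q i) = univ)
    (f : X → Y) (L : ℝ≥0) (hf : ∀ i, LipschitzOnWith L f (Q i)) (x : X) :
    ∃ U ∈ nhds x, ∀ z ∈ U, edist (f x) (f z) ≤ L * edist x z := by
  obtain ⟨V, hV, hVfin⟩ := hlf x
  set F : Set ι := {i | (Q i ∩ V).Nonempty}
  set B : Set X := ⋃ i ∈ {i ∈ F | x ∉ Q i}, Q i with hB
  have hBfin : {i ∈ F | x ∉ Q i}.Finite := hVfin.subset (fun i hi => hi.1)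
  have hBcl : IsClosed B := hBfin.isClosed_biUnion (fun i _ => hcl i)
  have hxB : x ∉ B := by
    intro hx
    rcases mem_iUnion₂.mp hx with ⟨i, hi, hxi⟩
    exact hi.2 hxi
  refine ⟨V ∩ Bᶜ, Filter.inter_mem hV (hBcl.isOpen_compl.mem_nhds hxB), ?_⟩
  rintro z ⟨hzV, hzB⟩
  have hz : z ∈ ⋃ i, Q i := hcov ▸ mem_univ z
  rcases mem_iUnion.mp hz with ⟨i, hzi⟩
  have hiF : i ∈ F := ⟨z, hzi, hzV⟩
  have hxi : x ∈ Q i := by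
    by_contra hx
    exact hzB (mem_iUnion₂.mpr ⟨i, ⟨hiF, hx⟩, hzi⟩)
  exact hf i hxi hzi

/-- Key lemma: along a continuous curve, `f` changes by at most `L` times the variation. -/
lemma curve_est {X Y ι : Type*} [MetricSpace X] [MetricSpace Y]
    (Q : ι → Set X) (hlf : LocallyFinite Q) (hcl : ∀ i, IsClosed (Q i))
    (hcov : (⋃ i, Q i) = univ)
    (f : X → Y) (L : ℝ≥0) (hf : ∀ i, LipschitzOnWith L f (Q i))
    (γ : ℝ → X) (hγ : ContinuousOn γ (Icc 0 1)) :
    edist (f (γ 0)) (f (γ 1)) ≤ L * eVariationOn γ (Icc 0 1) := by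
  set A : Set ℝ := {t | t ∈ Icc (0:ℝ) 1 ∧
    edist (f (γ 0)) (f (γ t)) ≤ L * eVariationOn γ (Icc 0 t)} with hA
  have h0 : (0:ℝ) ∈ A := ⟨⟨le_refl 0, zero_le_one⟩, by simp⟩
  have hbdd : BddAbove A := ⟨1, fun t ht => ht.1.2⟩
  set T := sSup A with hTdef
  have hT0 : 0 ≤ T := le_csSup hbdd h0
  have hT1 : T ≤ 1 := csSup_le ⟨0, h0⟩ (fun t ht => ht.1.2)
  have hTmem : T ∈ Icc (0:ℝ) 1 := ⟨hT0, hT1⟩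
  -- neighbourhood at γ T
  obtain ⟨U, hU, hUe⟩ := local_est Q hlf hcl hcov f L hf (γ T)
  have hpre : γ ⁻¹' U ∈ nhdsWithin T (Icc 0 1) := (hγ T hTmem) hU
  rw [Metric.mem_nhdsWithin_iff] at hpre
  obtain ⟨δ, hδ, hδsub⟩ := hpre
  have hTA : T ∈ A := by
    obtain ⟨s, hsA, hs⟩ := exists_lt_of_lt_csSup ⟨0, h0⟩ (show T - δ < T by linarith)
    have hsT : s ≤ T := le_csSup hbdd hsA
    have hsU : γ s ∈ U := by
      apply hδsub
      refine ⟨?_, hsA.1⟩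
      simp only [Metric.mem_ball, Real.dist_eq]
      rw [abs_lt]; constructor <;> linarith
    have h1 : edist (f (γ T)) (f (γ s)) ≤ L * edist (γ T) (γ s) := hUe _ hsU
    have h2 : edist (γ T) (γ s) ≤ eVariationOn γ (Icc s T) :=
      eVariationOn.edist_le γ ⟨hsT, le_refl T⟩ ⟨le_refl s, hsT⟩
    refine ⟨hTmem, ?_⟩
    calc edist (f (γ 0)) (f (γ T))
        ≤ edist (f (γ 0)) (f (γ s)) + edist (f (γ s)) (f (γ T)) := edist_triangle _ _ _
      _ ≤ L * eVariationOn γ (Icc 0 s) + L * eVariationOn γ (Icc s T) := by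
          refine add_le_add hsA.2 ?_
          rw [edist_comm]
          exact h1.trans (mul_le_mul_right h2 _)
      _ = L * eVariationOn γ (Icc 0 T) := by
          rw [← mul_add, myIccAdd γ hsA.1.1 hsT]
  have hTeq : T = 1 := by
    by_contra hne
    have hTlt : T < 1 := lt_of_le_of_ne hT1 hne
    set t := min 1 (T + δ / 2) with ht
    have htT : T < t := lt_min hTlt (by linarith)
    have htmem : t ∈ Icc (0:ℝ) 1 := ⟨le_trans hT0 htT.le, min_le_left _ _⟩
    have htU : γ t ∈ U := by
      apply hδsub
      refine ⟨?_, htmem⟩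
      simp only [Metric.mem_ball, Real.dist_eq]
      have h2 : t ≤ T + δ / 2 := min_le_right _ _
      rw [abs_lt]; constructor <;> linarith
    have h1 : edist (f (γ T)) (f (γ t)) ≤ L * edist (γ T) (γ t) := hUe _ htU
    have h2 : edist (γ T) (γ t) ≤ eVariationOn γ (Icc T t) :=
      eVariationOn.edist_le γ ⟨le_refl T, htT.le⟩ ⟨htT.le, le_refl t⟩
    have htA : t ∈ A := by
      refine ⟨htmem, ?_⟩
      calc edist (f (γ 0)) (f (γ t))
          ≤ edist (f (γ 0)) (f (γ T)) + edist (f (γ T)) (f (γ t)) := edist_triangle _ _ _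
        _ ≤ L * eVariationOn γ (Icc 0 T) + L * eVariationOn γ (Icc T t) :=
            add_le_add hTA.2 (h1.trans (mul_le_mul_right h2 _))
        _ = L * eVariationOn γ (Icc 0 t) := by
            rw [← mul_add, myIccAdd γ hT0 htT.le]
    exact absurd (le_csSup hbdd htA) (not_le.mpr htT)
  rw [hTeq] at hTA
  exact hTA.2

/-- If `X` is `C`-quasiconvex (with `C ≥ 0`) then `f` is `C·L`-Lipschitz. -/
lemma qc_est {X Y ι : Type*} [MetricSpace X] [MetricSpace Y]
    (Q : ι → Set X) (hlf : LocallyFinite Q) (hcl : ∀ i, IsClosed (Q i))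
    (hcov : (⋃ i, Q i) = univ)
    (f : X → Y) (L : ℝ≥0) (hf : ∀ i, LipschitzOnWith L f (Q i))
    {C : ℝ} (hC : 0 ≤ C) (hqc : IsQuasiconvexWith X C) (x y : X) :
    dist (f x) (f y) ≤ C * L * dist x y := by
  obtain ⟨γ, hγc, hγ0, hγ1, hγv⟩ := hqc x y
  have key := curve_est Q hlf hcl hcov f L hf γ hγc
  rw [hγ0, hγ1] at key
  have h2 : edist (f x) (f y) ≤ L * ENNReal.ofReal (C * dist x y) :=
    key.trans (mul_le_mul_right hγv _)
  have hnn : 0 ≤ C * dist x y := mul_nonneg hC dist_nonneg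
  rw [edist_dist] at h2
  have h3 : (L : ℝ≥0∞) * ENNReal.ofReal (C * dist x y)
      = ENNReal.ofReal ((L : ℝ) * (C * dist x y)) := by
    rw [ENNReal.ofReal_mul L.coe_nonneg, ENNReal.ofReal_coe_nnreal]
  rw [h3] at h2
  have := (ENNReal.ofReal_le_ofReal_iff (mul_nonneg L.coe_nonneg hnn)).mp h2
  calc dist (f x) (f y) ≤ (L : ℝ) * (C * dist x y) := this
    _ = C * L * dist x y := by ring

/-- Let `X` be quasiconvex with
`C₀ := inf {C ∈ [1, ∞) : X is C-quasiconvex}`. If `𝒬` is a locally finite closed cover of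
`X` and `f` is `L`-Lipschitz on each member of `𝒬`, then `f` is `C₀·L`-Lipschitz.
In particular, if `X` is a length space, `f` is `L`-Lipschitz. -/
theorem stmt8 {X Y ι : Type*} [MetricSpace X] [MetricSpace Y]
    (hqc : ∃ C : ℝ, 1 ≤ C ∧ IsQuasiconvexWith X C)
    (Q : ι → Set X) (hlf : LocallyFinite Q) (hcl : ∀ i, IsClosed (Q i))
    (hcov : (⋃ i, Q i) = univ)
    (f : X → Y) (L : ℝ≥0) (hf : ∀ i, LipschitzOnWith L f (Q i)) :
    (∀ x y : X,
      dist (f x) (f y) ≤ sInf {C : ℝ | 1 ≤ C ∧ IsQuasiconvexWith X C} * L * dist x y) ∧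
    ((∀ C : ℝ, 1 < C → IsQuasiconvexWith X C) →
      ∀ x y : X, dist (f x) (f y) ≤ L * dist x y) := by
  set S := {C : ℝ | 1 ≤ C ∧ IsQuasiconvexWith X C} with hS
  have hSne : S.Nonempty := hqc
  have hSbdd : BddBelow S := ⟨1, fun C hC => hC.1⟩
  have hInf1 : 1 ≤ sInf S := le_csInf hSne (fun C hC => hC.1)
  have hall : ∀ C ∈ S, ∀ x y : X, dist (f x) (f y) ≤ C * L * dist x y := by
    intro C hC x y
    exact qc_est Q hlf hcl hcov f L hf (le_trans zero_le_one hC.1) hC.2 x y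
  constructor
  · intro x y
    by_contra hcon
    push_neg at hcon
    have hLd : 0 ≤ (L : ℝ) * dist x y := mul_nonneg L.coe_nonneg dist_nonneg
    rcases eq_or_lt_of_le hLd with hz | hpos
    · -- L * dist x y = 0
      obtain ⟨C, hC⟩ := hSne
      have := hall C hC x y
      rw [show C * L * dist x y = C * ((L:ℝ) * dist x y) by ring, ← hz, mul_zero] at this
      have h2 : sInf S * ↑L * dist x y = sInf S * ((L:ℝ) * dist x y) := by ring
      rw [h2, ← hz, mul_zero] at hcon
      exact absurd this (not_le.mpr hcon)
    · have hlt : sInf S < dist (f x) (f y) / ((L:ℝ) * dist x y) := by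
        rw [lt_div_iff₀ hpos]
        calc sInf S * ((L:ℝ) * dist x y) = sInf S * ↑L * dist x y := by ring
          _ < dist (f x) (f y) := hcon
      obtain ⟨C, hCS, hClt⟩ := exists_lt_of_csInf_lt hSne hlt
      have := hall C hCS x y
      rw [show C * ↑L * dist x y = C * ((L:ℝ) * dist x y) by ring] at this
      have h2 : C * ((L:ℝ) * dist x y) < dist (f x) (f y) := by
        calc C * ((L:ℝ) * dist x y)
            < (dist (f x) (f y) / ((L:ℝ) * dist x y)) * ((L:ℝ) * dist x y) :=
              mul_lt_mul_of_pos_right hClt hpos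
          _ = dist (f x) (f y) := div_mul_cancel₀ _ (ne_of_gt hpos)
      exact absurd this (not_le.mpr h2)
  · intro hlen x y
    by_contra hcon
    push_neg at hcon
    have hLd : 0 ≤ (L : ℝ) * dist x y := mul_nonneg L.coe_nonneg dist_nonneg
    rcases eq_or_lt_of_le hLd with hz | hpos
    · have := hall _ ⟨by norm_num, hlen 2 one_lt_two⟩ x y
      rw [show (2:ℝ) * ↑L * dist x y = 2 * ((L:ℝ) * dist x y) by ring, ← hz, mul_zero] at this
      rw [← hz] at hcon
      exact absurd this (not_le.mpr hcon)
    · have h1 : (1:ℝ) < dist (f x) (f y) / ((L:ℝ) * dist x y) := by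
        rw [lt_div_iff₀ hpos]; linarith
      obtain ⟨C, hC1, hC2⟩ := exists_between h1
      have := hall C ⟨hC1.le, hlen C hC1⟩ x y
      have h2 : C * ↑L * dist x y < dist (f x) (f y) := by
        calc C * ↑L * dist x y = C * ((L:ℝ) * dist x y) := by ring
          _ < (dist (f x) (f y) / ((L:ℝ) * dist x y)) * ((L:ℝ) * dist x y) :=
              mul_lt_mul_of_pos_right hC2 hpos
          _ = dist (f x) (f y) := div_mul_cancel₀ _ (ne_of_gt hpos)
      exact absurd this (not_le.mpr h2)
end

section
/- Let X be a metric space with shortcuts {(𝒥_i, δ_i)} with constants a₀, a, b, M, let η = (η_i) ⊆ (0,1], and let d_η be the shortcut pseudo-distance. Then for all x, y ∈ X with d_η(x,y) < d(x,y) and all ε > 0, there exist points p₋ ≠ p₊ in some shortcut S ∈ 𝒥 such that d_η(x,y)·(1 + a/b + ε) ≥ d(x,p₋) + ρ_η(p₋,p₊) + d(p₊,y). In particular d_η is a genuine distance on X. -/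
open Filter Set
open scoped ENNReal NNReal Topology

open scoped Classical in
/-- The distorted cost `ρ_η`: `η i · d(x, y)` if `x, y` lie in a common shortcut of level
`i`, and `d(x, y)` otherwise. -/
noncomputable def rhoEta {X : Type*} [MetricSpace X]
    (J : ℕ → Set (Set X)) (η : ℕ → ℝ) (x y : X) : ℝ :=
  if h : ∃ i, ∃ S ∈ J i, x ∈ S ∧ y ∈ S then η h.choose * dist x y else dist x y

/-- The shortcut (pseudo-)distance `d_η`: the infimum over finite chains
`x = x₀, …, x_n = y` of `∑ ρ_η(x_{k-1}, x_k)`. -/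
noncomputable def dEta {X : Type*} [MetricSpace X]
    (J : ℕ → Set (Set X)) (η : ℕ → ℝ) (x y : X) : ℝ :=
  sInf { t : ℝ | ∃ (n : ℕ) (c : ℕ → X), c 0 = x ∧ c n = y ∧
    t = ∑ k ∈ Finset.range n, rhoEta J η (c k) (c (k + 1)) }

/-- `X` is a metric space with shortcuts `{(𝒥 i, δ i)}` and constants `a₀, a, b, M`. -/
def HasShortcuts {X : Type*} [MetricSpace X]
    (J : ℕ → Set (Set X)) (δ : ℕ → ℝ) (a₀ a b M : ℝ) : Prop :=
  0 < a₀ ∧ 0 < a ∧ 0 < b ∧ 0 < M ∧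
  (∀ i, 0 < δ i) ∧ Tendsto δ atTop (𝓝 0) ∧
  (∀ i, (J i).Nonempty) ∧
  (∀ i j, ∀ S ∈ J i, ∀ S' ∈ J j, S ≠ S' → Disjoint S S') ∧
  (∀ i, ∀ S ∈ J i, ∀ x ∈ S, ∀ y ∈ S, x ≠ y → a₀ * δ i ≤ dist x y ∧ dist x y ≤ a * δ i) ∧
  (∀ i j, i ≤ j → ∀ S ∈ J i, ∀ S' ∈ J j, S ≠ S' → ∀ x ∈ S, ∀ y ∈ S', b * δ j ≤ dist x y) ∧
  (∀ i, ∀ S ∈ J i, ∀ x y : X, (∀ z ∈ S, b * δ i ≤ dist x z) → (∀ z ∈ S, b * δ i ≤ dist y z) →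
    ∀ z ∈ S, ∀ w ∈ S, dist x y ≤ dist x z + dist w y) ∧
  (∀ i, ∀ S ∈ J i, S.Finite ∧ 2 ≤ S.ncard ∧ (S.ncard : ℝ) ≤ M) ∧
  (∀ i, ∀ x : X, ∃ S ∈ J i, ∃ z ∈ S, dist x z ≤ M * δ i)

namespace Stmt11Aux

private lemma exists_choose_congr {A B : ℕ → Prop} (h : A = B) (hA : ∃ i, A i) (hB : ∃ i, B i) :
    hA.choose = hB.choose := by subst h; rfl

variable {X : Type*} [MetricSpace X]

lemma rho_nonneg (J : ℕ → Set (Set X)) {η : ℕ → ℝ} (hη : ∀ i, 0 < η i ∧ η i ≤ 1) (x y : X) :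
    0 ≤ rhoEta J η x y := by
  unfold rhoEta; split_ifs with h
  · exact mul_nonneg (hη _).1.le dist_nonneg
  · exact dist_nonneg

lemma rho_le_dist (J : ℕ → Set (Set X)) {η : ℕ → ℝ} (hη : ∀ i, 0 < η i ∧ η i ≤ 1) (x y : X) :
    rhoEta J η x y ≤ dist x y := by
  unfold rhoEta; split_ifs with h
  · exact mul_le_of_le_one_left dist_nonneg (hη _).2
  · exact le_rfl

lemma rho_of_mem (J : ℕ → Set (Set X)) {η : ℕ → ℝ}
    (hdisj : ∀ i j, ∀ S ∈ J i, ∀ S' ∈ J j, S ≠ S' → Disjoint S S')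
    {S : Set X} (hex : ∃ i, S ∈ J i) {x y : X} (hx : x ∈ S) (hy : y ∈ S) :
    rhoEta J η x y = η hex.choose * dist x y := by
  have hpred : (fun i => ∃ S' ∈ J i, x ∈ S' ∧ y ∈ S') = (fun i => S ∈ J i) := by
    funext i; apply propext
    constructor
    · rintro ⟨S', hS', hx', hy'⟩
      by_cases hss : S' = S
      · exact hss ▸ hS'
      · exact absurd hx (Set.disjoint_left.mp
          (hdisj i hex.choose S' hS' S hex.choose_spec hss) hx')
    · intro hs; exact ⟨S, hs, hx, hy⟩
  have hP : ∃ i, ∃ S' ∈ J i, x ∈ S' ∧ y ∈ S' := ⟨hex.choose, S, hex.choose_spec, hx, hy⟩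
  unfold rhoEta
  rw [dif_pos hP]
  rw [exists_choose_congr hpred hP hex]

lemma dist_le_sum_dist (c : ℕ → X) {i j : ℕ} (hij : i ≤ j) :
    dist (c i) (c j) ≤ ∑ l ∈ Finset.Ico i j, dist (c l) (c (l + 1)) := by
  induction j, hij using Nat.le_induction with
  | base => simp
  | succ j hij ih =>
    rw [Finset.sum_Ico_succ_top hij]
    exact (dist_triangle (c i) (c j) (c (j + 1))).trans (by linarith)

lemma weighted_dist_le_sum (c : ℕ → X) (f : ℕ → ℝ) {w : ℝ} (hw : 0 ≤ w) {i j : ℕ} (hij : i ≤ j)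
    (h : ∀ l, i ≤ l → l < j → w * dist (c l) (c (l + 1)) ≤ f l) :
    w * dist (c i) (c j) ≤ ∑ l ∈ Finset.Ico i j, f l := by
  calc w * dist (c i) (c j) ≤ w * ∑ l ∈ Finset.Ico i j, dist (c l) (c (l + 1)) :=
        mul_le_mul_of_nonneg_left (dist_le_sum_dist c hij) hw
    _ = ∑ l ∈ Finset.Ico i j, w * dist (c l) (c (l + 1)) := Finset.mul_sum _ _ _
    _ ≤ _ := Finset.sum_le_sum fun l hl =>
        h l (Finset.mem_Ico.mp hl).1 (Finset.mem_Ico.mp hl).2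

lemma tail_sum (F : X → X → ℝ) (c : ℕ → X) {o n : ℕ} (h : o ≤ n) :
    ∑ k ∈ Finset.range (n - o), F (c (k + o)) (c (k + o + 1)) =
      ∑ k ∈ Finset.Ico o n, F (c k) (c (k + 1)) := by
  rw [Finset.sum_Ico_eq_sum_range]
  apply Finset.sum_congr rfl
  intro i _
  rw [Nat.add_comm i o]

lemma splice_sum (F : X → X → ℝ) (c c' : ℕ → X) {p q n : ℕ} (h1 : p + 1 < q) (h2 : q ≤ n)
    (hc1 : ∀ m, m ≤ p → c' m = c m) (hc2 : ∀ m, p < m → c' m = c (m + (q - p - 1))) :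
    (∑ k ∈ Finset.range (p + 1 + (n - q)), F (c' k) (c' (k + 1))) =
    ((∑ k ∈ Finset.range p, F (c k) (c (k + 1))) + F (c p) (c q)) +
      ∑ k ∈ Finset.Ico q n, F (c k) (c (k + 1)) := by
  rw [Finset.range_eq_Ico,
    ← Finset.sum_Ico_consecutive _ (Nat.zero_le (p + 1)) (by omega : p + 1 ≤ p + 1 + (n - q))]
  congr 1
  · rw [← Finset.range_eq_Ico, Finset.sum_range_succ]
    congr 1
    · exact Finset.sum_congr rfl fun k hk => by
        have hk' := Finset.mem_range.mp hk
        rw [hc1 k (by omega), hc1 (k + 1) (by omega)]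
    · rw [hc1 p le_rfl, hc2 (p + 1) (by omega)]
      have : p + 1 + (q - p - 1) = q := by omega
      rw [this]
  · rw [Finset.sum_Ico_eq_sum_range, Finset.sum_Ico_eq_sum_range]
    have hlen : p + 1 + (n - q) - (p + 1) = n - q := by omega
    rw [hlen]
    apply Finset.sum_congr rfl
    intro i _
    rw [hc2 (p + 1 + i) (by omega), hc2 (p + 1 + i + 1) (by omega)]
    have e1 : p + 1 + i + (q - p - 1) = q + i := by omega
    have e2 : p + 1 + i + 1 + (q - p - 1) = q + i + 1 := by omega
    rw [e1, e2]


set_option maxHeartbeats 1000000 in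
lemma main_lemma {J : ℕ → Set (Set X)} {δ : ℕ → ℝ} {a₀ a b M : ℝ} {η : ℕ → ℝ}
    (hS : HasShortcuts J δ a₀ a b M) (hη : ∀ i, 0 < η i ∧ η i ≤ 1) :
    ∀ n : ℕ, ∀ c : ℕ → X,
      (∑ k ∈ Finset.range n, rhoEta J η (c k) (c (k + 1))) < dist (c 0) (c n) →
      ∃ i, ∃ S ∈ J i, ∃ pm ∈ S, ∃ pp ∈ S, pm ≠ pp ∧
        rhoEta J η pm pp = η i * dist pm pp ∧
        dist (c 0) pm + rhoEta J η pm pp + dist pp (c n) ≤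
          (1 + a / b) * ∑ k ∈ Finset.range n, rhoEta J η (c k) (c (k + 1)) := by
  classical
  obtain ⟨ha₀, ha, hb, hM, hδ, hδ0, hJne, hdisj, hpair, hsep, hquad, hcard, hcov⟩ := hS
  intro n
  induction n using Nat.strong_induction_on with
  | _ n IH =>
  intro c hL
  have hRnn : ∀ x y : X, 0 ≤ rhoEta J η x y := fun x y => Stmt11Aux.rho_nonneg J hη x y
  have hRd : ∀ x y : X, rhoEta J η x y ≤ dist x y := fun x y => rho_le_dist J hη x y
  have habnn : 0 ≤ a / b := div_nonneg ha.le hb.le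
  have hLnn : 0 ≤ ∑ k ∈ Finset.range n, rhoEta J η (c k) (c (k + 1)) :=
    Finset.sum_nonneg fun l _ => hRnn _ _
  -- existence of a jump
  have hex_jump : ∃ k, k < n ∧ (∃ i, ∃ S' ∈ J i, c k ∈ S' ∧ c (k + 1) ∈ S') ∧
      c k ≠ c (k + 1) := by
    by_contra hno
    push_neg at hno
    have hall : ∀ k, k < n → rhoEta J η (c k) (c (k + 1)) = dist (c k) (c (k + 1)) := by
      intro k hk
      by_cases hp : ∃ i, ∃ S' ∈ J i, c k ∈ S' ∧ c (k + 1) ∈ S'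
      · have heq := hno k hk hp
        have h0 : dist (c k) (c (k + 1)) = 0 := by rw [heq]; exact dist_self _
        unfold rhoEta
        rw [dif_pos hp, h0, mul_zero]
      · unfold rhoEta; rw [dif_neg hp]
    have hge : dist (c 0) (c n) ≤ ∑ k ∈ Finset.range n, rhoEta J η (c k) (c (k + 1)) := by
      calc dist (c 0) (c n) ≤ ∑ l ∈ Finset.Ico 0 n, dist (c l) (c (l + 1)) :=
            dist_le_sum_dist c (Nat.zero_le n)
        _ = ∑ l ∈ Finset.Ico 0 n, rhoEta J η (c l) (c (l + 1)) :=
            Finset.sum_congr rfl fun l hl =>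
              (hall l (by simpa using (Finset.mem_Ico.mp hl).2)).symm
        _ = _ := by rw [← Finset.range_eq_Ico]
    exact absurd hL (not_lt.mpr hge)
  obtain ⟨k₀, hk₀n, hk₀P, hk₀ne⟩ := hex_jump
  -- the level function and the maximal jump level
  set lv : ℕ → ℕ := fun k =>
    if h : ∃ i, ∃ S' ∈ J i, c k ∈ S' ∧ c (k + 1) ∈ S' then h.choose else 0 with hlvdef
  set F : Finset ℕ := (Finset.range n).filter
      (fun k => (∃ i, ∃ S' ∈ J i, c k ∈ S' ∧ c (k + 1) ∈ S') ∧ c k ≠ c (k + 1)) with hFdef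
  have hk₀F : k₀ ∈ F := by
    rw [hFdef]
    exact Finset.mem_filter.mpr ⟨Finset.mem_range.mpr hk₀n, hk₀P, hk₀ne⟩
  have hFne : F.Nonempty := ⟨k₀, hk₀F⟩
  obtain ⟨kₘ, hkₘF, hkₘlv⟩ : ∃ k ∈ F, lv k = (F.image lv).max' (hFne.image lv) := by
    obtain ⟨k, hk, hkeq⟩ := Finset.mem_image.mp ((F.image lv).max'_mem (hFne.image lv))
    exact ⟨k, hk, hkeq⟩
  have hkₘP : ∃ i, ∃ S' ∈ J i, c kₘ ∈ S' ∧ c (kₘ + 1) ∈ S' :=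
    ((Finset.mem_filter.mp hkₘF).2).1
  have hkₘn : kₘ < n := Finset.mem_range.mp (Finset.mem_filter.mp hkₘF).1
  obtain ⟨S, hSJ', hcm1, hcm2⟩ := hkₘP.choose_spec
  have hexS : ∃ i, S ∈ J i := ⟨hkₘP.choose, hSJ'⟩
  set σ : ℕ := hexS.choose with hσdef
  have hSσ : S ∈ J σ := hexS.choose_spec
  have hpredS : ∀ x y : X, x ∈ S → y ∈ S →
      (fun i => ∃ S' ∈ J i, x ∈ S' ∧ y ∈ S') = (fun i => S ∈ J i) := by
    intro x y hx hy
    funext i; apply propext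
    constructor
    · rintro ⟨S', hS', hx', _⟩
      by_cases hss : S' = S
      · exact hss ▸ hS'
      · exact absurd hx (Set.disjoint_left.mp (hdisj i σ S' hS' S hSσ hss) hx')
    · intro hs; exact ⟨S, hs, hx, hy⟩
  have hσmax : σ = (F.image lv).max' (hFne.image lv) := by
    rw [← hkₘlv]
    have h1 : lv kₘ = hkₘP.choose := dif_pos hkₘP
    rw [h1, hσdef]
    exact (exists_choose_congr (hpredS _ _ hcm1 hcm2) hkₘP hexS).symm
  have hmax : ∀ l, l < n → ∀ (hp : ∃ i, ∃ S' ∈ J i, c l ∈ S' ∧ c (l + 1) ∈ S'),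
      c l ≠ c (l + 1) → hp.choose ≤ σ := by
    intro l hln hp hne'
    have hlF : l ∈ F := by
      rw [hFdef]; exact Finset.mem_filter.mpr ⟨Finset.mem_range.mpr hln, hp, hne'⟩
    have h2 : lv l ≤ (F.image lv).max' (hFne.image lv) :=
      Finset.le_max' _ _ (Finset.mem_image.mpr ⟨l, hlF, rfl⟩)
    have h1 : lv l = hp.choose := dif_pos hp
    rw [← hσmax, h1] at h2
    exact h2
  -- uniform rho on S
  have hrhoS : ∀ x y : X, x ∈ S → y ∈ S → rhoEta J η x y = η σ * dist x y := by
    intro x y hx hy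
    rw [rho_of_mem J hdisj hexS hx hy, hσdef]
  have hbδ : 0 < b * δ σ := mul_pos hb (hδ σ)
  have haδnn : 0 ≤ a * δ σ := le_of_lt (mul_pos ha (hδ σ))
  have hmemS_in : ∀ m : ℕ, c m ∈ S → ¬ (∀ w ∈ S, b * δ σ ≤ dist (c m) w) := by
    intro m hm hO
    have := hO (c m) hm
    rw [dist_self] at this
    linarith
  -- genuine steps
  have hgen : ∀ l, l < n →
      (¬ (∀ w ∈ S, b * δ σ ≤ dist (c l) w) ∨ ¬ (∀ w ∈ S, b * δ σ ≤ dist (c (l + 1)) w)) →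
      ¬ (c l ∈ S ∧ c (l + 1) ∈ S) →
      rhoEta J η (c l) (c (l + 1)) = dist (c l) (c (l + 1)) := by
    intro l hln hins hnot
    by_cases hp : ∃ i, ∃ S' ∈ J i, c l ∈ S' ∧ c (l + 1) ∈ S'
    · by_cases hne' : c l = c (l + 1)
      · have h0 : dist (c l) (c (l + 1)) = 0 := by rw [hne']; exact dist_self _
        unfold rhoEta
        rw [dif_pos hp, h0, mul_zero]
      · exfalso
        obtain ⟨S', hS', hx', hy'⟩ := hp.choose_spec
        by_cases hss : S' = S
        · exact hnot ⟨hss ▸ hx', hss ▸ hy'⟩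
        · have hfar : ∀ x ∈ S', ∀ y ∈ S, b * δ σ ≤ dist x y :=
            hsep hp.choose σ (hmax l hln hp hne') S' hS' S hSσ hss
          rcases hins with h | h
          · exact h fun w hw => hfar _ hx' _ hw
          · exact h fun w hw => hfar _ hy' _ hw
    · unfold rhoEta; rw [dif_neg hp]
  -- S-jump extremal indices
  have hSJex : ∃ l, l < n ∧ c l ∈ S ∧ c (l + 1) ∈ S := ⟨kₘ, hkₘn, hcm1, hcm2⟩
  set κ₁ : ℕ := Nat.find hSJex with hκ₁def
  have hκ₁ : κ₁ < n ∧ c κ₁ ∈ S ∧ c (κ₁ + 1) ∈ S := Nat.find_spec hSJex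
  have hκ₁min : ∀ l, l < κ₁ → ¬(l < n ∧ c l ∈ S ∧ c (l + 1) ∈ S) :=
    fun l hl => Nat.find_min hSJex hl
  set κ₂ : ℕ := Nat.findGreatest (fun l => l < n ∧ c l ∈ S ∧ c (l + 1) ∈ S) n with hκ₂def
  have hκ₂ : κ₂ < n ∧ c κ₂ ∈ S ∧ c (κ₂ + 1) ∈ S :=
    Nat.findGreatest_spec (P := fun l => l < n ∧ c l ∈ S ∧ c (l + 1) ∈ S)
      (le_of_lt hκ₁.1) (Nat.find_spec hSJex)
  have hκ₂max : ∀ l, κ₂ < l → l ≤ n → ¬(l < n ∧ c l ∈ S ∧ c (l + 1) ∈ S) :=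
    fun l h1 h2 => Nat.findGreatest_is_greatest
      (P := fun l => l < n ∧ c l ∈ S ∧ c (l + 1) ∈ S) h1 h2
  have hκ₁₂ : κ₁ ≤ κ₂ := Nat.le_findGreatest
    (P := fun l => l < n ∧ c l ∈ S ∧ c (l + 1) ∈ S) (le_of_lt hκ₁.1) hκ₁
  -- the three sums
  have hsplit : (∑ l ∈ Finset.Ico 0 κ₁, rhoEta J η (c l) (c (l + 1)))
      + (∑ l ∈ Finset.Ico κ₁ (κ₂ + 1), rhoEta J η (c l) (c (l + 1)))
      + (∑ l ∈ Finset.Ico (κ₂ + 1) n, rhoEta J η (c l) (c (l + 1)))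
      = ∑ k ∈ Finset.range n, rhoEta J η (c k) (c (k + 1)) := by
    rw [Finset.sum_Ico_consecutive _ (Nat.zero_le κ₁) (by omega : κ₁ ≤ κ₂ + 1),
      Finset.sum_Ico_consecutive _ (Nat.zero_le (κ₂ + 1)) (by omega : κ₂ + 1 ≤ n),
      ← Finset.range_eq_Ico]
  have hSAnn : 0 ≤ ∑ l ∈ Finset.Ico 0 κ₁, rhoEta J η (c l) (c (l + 1)) :=
    Finset.sum_nonneg fun l _ => hRnn _ _
  have hSBnn : 0 ≤ ∑ l ∈ Finset.Ico κ₁ (κ₂ + 1), rhoEta J η (c l) (c (l + 1)) :=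
    Finset.sum_nonneg fun l _ => hRnn _ _
  have hSCnn : 0 ≤ ∑ l ∈ Finset.Ico (κ₂ + 1) n, rhoEta J η (c l) (c (l + 1)) :=
    Finset.sum_nonneg fun l _ => hRnn _ _
  have hdist_le : ∀ α β : ℕ, α ≤ β →
      (∀ l, α ≤ l → l < β → rhoEta J η (c l) (c (l + 1)) = dist (c l) (c (l + 1))) →
      dist (c α) (c β) ≤ ∑ l ∈ Finset.Ico α β, rhoEta J η (c l) (c (l + 1)) := by
    intro α β hab h
    have := weighted_dist_le_sum c (fun l => rhoEta J η (c l) (c (l + 1))) zero_le_one hab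
      (fun l h1 h2 => by simpa using le_of_eq (h l h1 h2).symm)
    simpa using this
  have hdiam : dist (c κ₁) (c (κ₂ + 1)) ≤ a * δ σ := by
    by_cases he : c κ₁ = c (κ₂ + 1)
    · rw [he, dist_self]; exact haδnn
    · exact (hpair σ S hSσ _ hκ₁.2.1 _ hκ₂.2.2 he).2
  have hfinish : ∀ A B C : ℝ, dist (c 0) (c κ₁) ≤ A →
      rhoEta J η (c κ₁) (c (κ₂ + 1)) ≤ B → dist (c (κ₂ + 1)) (c n) ≤ C →
      A + C ≤ (∑ k ∈ Finset.range n, rhoEta J η (c k) (c (k + 1))) →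
      A + B + C ≤ (1 + a / b) * (∑ k ∈ Finset.range n, rhoEta J η (c k) (c (k + 1))) →
      (∃ i, ∃ S' ∈ J i, ∃ pm ∈ S', ∃ pp ∈ S', pm ≠ pp ∧
        rhoEta J η pm pp = η i * dist pm pp ∧
        dist (c 0) pm + rhoEta J η pm pp + dist pp (c n) ≤
          (1 + a / b) * ∑ k ∈ Finset.range n, rhoEta J η (c k) (c (k + 1))) := by
    intro A B C hA hB hC hAC hABC
    by_cases hne : c κ₁ = c (κ₂ + 1)
    · exfalso
      have h1 : dist (c 0) (c n) ≤ dist (c 0) (c κ₁) + dist (c (κ₂ + 1)) (c n) := by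
        calc dist (c 0) (c n) ≤ dist (c 0) (c κ₁) + dist (c κ₁) (c n) := dist_triangle _ _ _
          _ = _ := by rw [hne]
      linarith
    · exact ⟨σ, S, hSσ, c κ₁, hκ₁.2.1, c (κ₂ + 1), hκ₂.2.2, hne,
        hrhoS _ _ hκ₁.2.1 hκ₂.2.2, by linarith⟩
  -- SURGERY case
  by_cases hsurg : ∃ k, (k < n ∧ c k ∈ S ∧ c (k + 1) ∈ S) ∧
      (∃ p', p' ≤ k ∧ (∀ w ∈ S, b * δ σ ≤ dist (c p') w)) ∧
      (∃ q', (k + 1 < q' ∧ q' ≤ n) ∧ (∀ w ∈ S, b * δ σ ≤ dist (c q') w))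
  · obtain ⟨k, hkSJ, hbef, haft⟩ := hsurg
    set p : ℕ := Nat.findGreatest (fun m => ∀ w ∈ S, b * δ σ ≤ dist (c m) w) k with hpdef
    have hpOut : ∀ w ∈ S, b * δ σ ≤ dist (c p) w := by
      obtain ⟨p', hp'1, hp'2⟩ := hbef
      exact Nat.findGreatest_spec (P := fun m => ∀ w ∈ S, b * δ σ ≤ dist (c m) w) hp'1 hp'2
    have hpk : p ≤ k := Nat.findGreatest_le k
    have hpmax : ∀ m, p < m → m ≤ k → ¬(∀ w ∈ S, b * δ σ ≤ dist (c m) w) :=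
      fun m h1 h2 => Nat.findGreatest_is_greatest
        (P := fun m => ∀ w ∈ S, b * δ σ ≤ dist (c m) w) h1 h2
    have hpltk : p < k := lt_of_le_of_ne hpk (by
      intro hpk'
      exact hmemS_in k hkSJ.2.1 (hpk' ▸ hpOut))
    set q : ℕ := Nat.find haft with hqdef
    have hq : (k + 1 < q ∧ q ≤ n) ∧ (∀ w ∈ S, b * δ σ ≤ dist (c q) w) := Nat.find_spec haft
    have hqmin : ∀ m, m < q → ¬((k + 1 < m ∧ m ≤ n) ∧ (∀ w ∈ S, b * δ σ ≤ dist (c m) w)) :=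
      fun m hm => Nat.find_min haft hm
    have hinside : ∀ m, p < m → m < q → ¬(∀ w ∈ S, b * δ σ ≤ dist (c m) w) := by
      intro m h1 h2 ho
      by_cases hmk : m ≤ k
      · exact hpmax m h1 hmk ho
      · by_cases hmk1 : m = k + 1
        · exact hmemS_in m (by rw [hmk1]; exact hkSJ.2.2) ho
        · exact hqmin m h2 ⟨⟨by omega, by omega⟩, ho⟩
    -- first and last S-jump in the window
    have hk₁ex : ∃ l, p < l ∧ (l < n ∧ c l ∈ S ∧ c (l + 1) ∈ S) := ⟨k, hpltk, hkSJ⟩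
    set k₁ : ℕ := Nat.find hk₁ex with hk₁def
    have hk₁spec : p < k₁ ∧ (k₁ < n ∧ c k₁ ∈ S ∧ c (k₁ + 1) ∈ S) := Nat.find_spec hk₁ex
    have hk₁min : ∀ l, l < k₁ → ¬(p < l ∧ (l < n ∧ c l ∈ S ∧ c (l + 1) ∈ S)) :=
      fun l hl => Nat.find_min hk₁ex hl
    have hk₁k : k₁ ≤ k := Nat.find_min' hk₁ex ⟨hpltk, hkSJ⟩
    set k₂ : ℕ := Nat.findGreatest
      (fun l => (l < n ∧ c l ∈ S ∧ c (l + 1) ∈ S) ∧ l + 1 < q) n with hk₂def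
    have hk₂spec : (k₂ < n ∧ c k₂ ∈ S ∧ c (k₂ + 1) ∈ S) ∧ k₂ + 1 < q :=
      Nat.findGreatest_spec (P := fun l => (l < n ∧ c l ∈ S ∧ c (l + 1) ∈ S) ∧ l + 1 < q)
        (le_of_lt hkSJ.1) ⟨hkSJ, hq.1.1⟩
    have hk₂max : ∀ l, k₂ < l → l ≤ n → ¬((l < n ∧ c l ∈ S ∧ c (l + 1) ∈ S) ∧ l + 1 < q) :=
      fun l h1 h2 => Nat.findGreatest_is_greatest
        (P := fun l => (l < n ∧ c l ∈ S ∧ c (l + 1) ∈ S) ∧ l + 1 < q) h1 h2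
    have hkk₂ : k ≤ k₂ := Nat.le_findGreatest
      (P := fun l => (l < n ∧ c l ∈ S ∧ c (l + 1) ∈ S) ∧ l + 1 < q)
      (le_of_lt hkSJ.1) ⟨hkSJ, hq.1.1⟩
    -- genuine steps in [p, k₁)
    have hgen1 : ∀ l, p ≤ l → l < k₁ → rhoEta J η (c l) (c (l + 1)) = dist (c l) (c (l + 1)) := by
      intro l h1 h2
      apply hgen l (by omega)
      · exact Or.inr (hinside (l + 1) (by omega) (by omega))
      · intro hmem
        by_cases hlp : l = p
        · exact hmemS_in p (by rw [← hlp]; exact hmem.1) hpOut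
        · exact hk₁min l h2 ⟨by omega, by omega, hmem.1, hmem.2⟩
    -- genuine steps in [k₂+1, q)
    have hgen2 : ∀ l, k₂ + 1 ≤ l → l < q →
        rhoEta J η (c l) (c (l + 1)) = dist (c l) (c (l + 1)) := by
      intro l h1 h2
      apply hgen l (by omega)
      · exact Or.inl (hinside l (by omega) (by omega))
      · intro hmem
        by_cases hlq : l + 1 = q
        · exact hmemS_in q (by rw [← hlq]; exact hmem.2) hq.2
        · exact hk₂max l (by omega) (by omega) ⟨⟨by omega, hmem.1, hmem.2⟩, by omega⟩
    have hquad' : dist (c p) (c q) ≤ dist (c p) (c k₁) + dist (c (k₂ + 1)) (c q) :=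
      hquad σ S hSσ (c p) (c q) hpOut hq.2 (c k₁) hk₁spec.2.2.1 (c (k₂ + 1)) hk₂spec.1.2.2
    have hd1 : dist (c p) (c k₁) ≤ ∑ l ∈ Finset.Ico p k₁, rhoEta J η (c l) (c (l + 1)) :=
      hdist_le p k₁ (by omega) hgen1
    have hd2 : dist (c (k₂ + 1)) (c q) ≤
        ∑ l ∈ Finset.Ico (k₂ + 1) q, rhoEta J η (c l) (c (l + 1)) :=
      hdist_le (k₂ + 1) q (by omega) hgen2
    have hρpq : rhoEta J η (c p) (c q) ≤
        (∑ l ∈ Finset.Ico p k₁, rhoEta J η (c l) (c (l + 1)))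
        + ∑ l ∈ Finset.Ico (k₂ + 1) q, rhoEta J η (c l) (c (l + 1)) :=
      le_trans (hRd _ _) (le_trans hquad' (add_le_add hd1 hd2))
    -- the spliced chain
    set c' : ℕ → X := fun m => if m ≤ p then c m else c (m + (q - p - 1)) with hc'def
    have hc'1 : ∀ m, m ≤ p → c' m = c m := by
      intro m hm; simp only [hc'def]; rw [if_pos hm]
    have hc'2 : ∀ m, p < m → c' m = c (m + (q - p - 1)) := by
      intro m hm; simp only [hc'def]; rw [if_neg (by omega)]
    have hpq1 : p + 1 < q := by omega
    have hn' : p + 1 + (n - q) < n := by omega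
    have hsum' := splice_sum (rhoEta J η) c c' hpq1 hq.1.2 hc'1 hc'2
    have hcost : (∑ k' ∈ Finset.range (p + 1 + (n - q)), rhoEta J η (c' k') (c' (k' + 1)))
        ≤ ∑ k' ∈ Finset.range n, rhoEta J η (c k') (c (k' + 1)) := by
      rw [hsum']
      have et1 : (∑ l ∈ Finset.Ico 0 p, rhoEta J η (c l) (c (l + 1)))
          + (∑ l ∈ Finset.Ico p k₁, rhoEta J η (c l) (c (l + 1)))
          = ∑ l ∈ Finset.Ico 0 k₁, rhoEta J η (c l) (c (l + 1)) :=
        Finset.sum_Ico_consecutive _ (Nat.zero_le p) (by omega)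
      have et2 : (∑ l ∈ Finset.Ico 0 k₁, rhoEta J η (c l) (c (l + 1)))
          + (∑ l ∈ Finset.Ico k₁ (k₂ + 1), rhoEta J η (c l) (c (l + 1)))
          = ∑ l ∈ Finset.Ico 0 (k₂ + 1), rhoEta J η (c l) (c (l + 1)) :=
        Finset.sum_Ico_consecutive _ (Nat.zero_le k₁) (by omega)
      have et3 : (∑ l ∈ Finset.Ico 0 (k₂ + 1), rhoEta J η (c l) (c (l + 1)))
          + (∑ l ∈ Finset.Ico (k₂ + 1) q, rhoEta J η (c l) (c (l + 1)))
          = ∑ l ∈ Finset.Ico 0 q, rhoEta J η (c l) (c (l + 1)) :=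
        Finset.sum_Ico_consecutive _ (Nat.zero_le (k₂ + 1)) (by omega)
      have et4 : (∑ l ∈ Finset.Ico 0 q, rhoEta J η (c l) (c (l + 1)))
          + (∑ l ∈ Finset.Ico q n, rhoEta J η (c l) (c (l + 1)))
          = ∑ l ∈ Finset.Ico 0 n, rhoEta J η (c l) (c (l + 1)) :=
        Finset.sum_Ico_consecutive _ (Nat.zero_le q) hq.1.2
      have hmidnn : 0 ≤ ∑ l ∈ Finset.Ico k₁ (k₂ + 1), rhoEta J η (c l) (c (l + 1)) :=
        Finset.sum_nonneg fun l _ => hRnn _ _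
      simp only [Finset.range_eq_Ico]
      linarith
    have hc'0 : c' 0 = c 0 := hc'1 0 (Nat.zero_le p)
    have hc'end : c' (p + 1 + (n - q)) = c n := by
      rw [hc'2 _ (by omega)]
      congr 1
      omega
    obtain ⟨i', S', hS', pm, hpm, pp, hpp, hnepp, hrq, hbd⟩ :=
      IH (p + 1 + (n - q)) hn' c' (by
        rw [hc'0, hc'end]
        exact lt_of_le_of_lt hcost hL)
    rw [hc'0, hc'end] at hbd
    exact ⟨i', S', hS', pm, hpm, pp, hpp, hnepp, hrq,
      le_trans hbd (mul_le_mul_of_nonneg_left hcost (by linarith))⟩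
  -- no surgery possible
  have hclos : ∀ k, (k < n ∧ c k ∈ S ∧ c (k + 1) ∈ S) →
      (∃ p', p' ≤ k ∧ (∀ w ∈ S, b * δ σ ≤ dist (c p') w)) →
      ∀ q', k + 1 < q' → q' ≤ n → ¬(∀ w ∈ S, b * δ σ ≤ dist (c q') w) :=
    fun k h1 h2 q' hq1 hq2 hOq => hsurg ⟨k, h1, h2, ⟨q', ⟨hq1, hq2⟩, hOq⟩⟩
  by_cases hOL : ∃ m, m ≤ κ₁ ∧ (∀ w ∈ S, b * δ σ ≤ dist (c m) w)
  · -- Config IIb : outside points only before the first S-jump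
    obtain ⟨m₀, hm₀κ, hm₀O⟩ := hOL
    have hnoR : ∀ q', κ₁ + 1 < q' → q' ≤ n → ¬(∀ w ∈ S, b * δ σ ≤ dist (c q') w) :=
      hclos κ₁ hκ₁ ⟨m₀, hm₀κ, hm₀O⟩
    set o' : ℕ := Nat.findGreatest (fun m => ∀ w ∈ S, b * δ σ ≤ dist (c m) w) κ₁ with ho'def
    have ho'O : ∀ w ∈ S, b * δ σ ≤ dist (c o') w :=
      Nat.findGreatest_spec (P := fun m => ∀ w ∈ S, b * δ σ ≤ dist (c m) w) hm₀κ hm₀O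
    have ho'κ : o' ≤ κ₁ := Nat.findGreatest_le κ₁
    have ho'max : ∀ m, o' < m → m ≤ κ₁ → ¬(∀ w ∈ S, b * δ σ ≤ dist (c m) w) :=
      fun m h1 h2 => Nat.findGreatest_is_greatest
        (P := fun m => ∀ w ∈ S, b * δ σ ≤ dist (c m) w) h1 h2
    have ho'lt : o' < κ₁ :=
      lt_of_le_of_ne ho'κ (fun he => hmemS_in κ₁ hκ₁.2.1 (he ▸ ho'O))
    have hinsAll : ∀ m, o' < m → m ≤ n → ¬(∀ w ∈ S, b * δ σ ≤ dist (c m) w) := by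
      intro m h1 h2 ho
      by_cases h3 : m ≤ κ₁
      · exact ho'max m h1 h3 ho
      · by_cases h4 : m = κ₁ + 1
        · exact hmemS_in m (by rw [h4]; exact hκ₁.2.2) ho
        · exact hnoR m (by omega) h2 ho
    have hgen1 : ∀ l, o' ≤ l → l < κ₁ →
        rhoEta J η (c l) (c (l + 1)) = dist (c l) (c (l + 1)) := by
      intro l h1 h2
      apply hgen l (by omega)
      · exact Or.inr (hinsAll (l + 1) (by omega) (by omega))
      · exact fun hmem => hκ₁min l h2 ⟨by omega, hmem.1, hmem.2⟩
    have hg' : dist (c o') (c κ₁) ≤ ∑ l ∈ Finset.Ico o' κ₁, rhoEta J η (c l) (c (l + 1)) :=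
      hdist_le o' κ₁ ho'lt.le hgen1
    have hbδg : b * δ σ ≤ ∑ l ∈ Finset.Ico o' κ₁, rhoEta J η (c l) (c (l + 1)) :=
      le_trans (ho'O (c κ₁) hκ₁.2.1) hg'
    have hg'nn : 0 ≤ ∑ l ∈ Finset.Ico o' κ₁, rhoEta J η (c l) (c (l + 1)) :=
      Finset.sum_nonneg fun l _ => hRnn _ _
    have hwt : ∀ l, κ₁ ≤ l → l < κ₂ + 1 →
        η σ * dist (c l) (c (l + 1)) ≤ rhoEta J η (c l) (c (l + 1)) := by
      intro l h1 h2
      by_cases hmem : c l ∈ S ∧ c (l + 1) ∈ S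
      · rw [hrhoS _ _ hmem.1 hmem.2]
      · rw [hgen l (by omega) (Or.inl (hinsAll l (by omega) (by omega))) hmem]
        exact mul_le_of_le_one_left dist_nonneg (hη σ).2
    have hmidB : rhoEta J η (c κ₁) (c (κ₂ + 1)) ≤
        ∑ l ∈ Finset.Ico κ₁ (κ₂ + 1), rhoEta J η (c l) (c (l + 1)) := by
      rw [hrhoS _ _ hκ₁.2.1 hκ₂.2.2]
      exact weighted_dist_le_sum c _ (hη σ).1.le (by omega) hwt
    have hsufgen : ∀ l, κ₂ + 1 ≤ l → l < n →
        rhoEta J η (c l) (c (l + 1)) = dist (c l) (c (l + 1)) := by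
      intro l h1 h2
      apply hgen l h2 (Or.inl (hinsAll l (by omega) (by omega)))
      exact fun hmem => hκ₂max l (by omega) (by omega) ⟨h2, hmem.1, hmem.2⟩
    have hsufC : dist (c (κ₂ + 1)) (c n) ≤
        ∑ l ∈ Finset.Ico (κ₂ + 1) n, rhoEta J η (c l) (c (l + 1)) :=
      hdist_le _ _ (by omega) hsufgen
    have hcons : (∑ l ∈ Finset.Ico 0 o', rhoEta J η (c l) (c (l + 1)))
        + (∑ l ∈ Finset.Ico o' κ₁, rhoEta J η (c l) (c (l + 1)))
        = ∑ l ∈ Finset.Ico 0 κ₁, rhoEta J η (c l) (c (l + 1)) :=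
      Finset.sum_Ico_consecutive _ (Nat.zero_le o') ho'lt.le
    by_cases hcase : dist (c 0) (c o') ≤ ∑ l ∈ Finset.Ico 0 o', rhoEta J η (c l) (c (l + 1))
    · have hpreA : dist (c 0) (c κ₁) ≤ ∑ l ∈ Finset.Ico 0 κ₁, rhoEta J η (c l) (c (l + 1)) := by
        calc dist (c 0) (c κ₁) ≤ dist (c 0) (c o') + dist (c o') (c κ₁) := dist_triangle _ _ _
          _ ≤ _ := by rw [← hcons]; exact add_le_add hcase hg'
      refine hfinish _ _ _ hpreA hmidB hsufC (by linarith) (by nlinarith)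
    · push_neg at hcase
      have ho'n : o' < n := by omega
      obtain ⟨i', S', hS', pm, hpm, pp, hpp, hnepp, hrq, hbd⟩ :=
        IH o' ho'n c (by rw [Finset.range_eq_Ico]; exact hcase)
      refine ⟨i', S', hS', pm, hpm, pp, hpp, hnepp, hrq, ?_⟩
      rw [Finset.range_eq_Ico] at hbd
      have haδle : a * δ σ ≤ (a / b) * ∑ l ∈ Finset.Ico o' κ₁, rhoEta J η (c l) (c (l + 1)) := by
        have h1 : a * δ σ = (a / b) * (b * δ σ) := by field_simp
        rw [h1]
        exact mul_le_mul_of_nonneg_left hbδg habnn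
      have hppy : dist pp (c n) ≤ dist pp (c o') + dist (c o') (c n) := dist_triangle _ _ _
      have hoy : dist (c o') (c n) ≤
          (∑ l ∈ Finset.Ico o' κ₁, rhoEta J η (c l) (c (l + 1))) + a * δ σ
          + ∑ l ∈ Finset.Ico (κ₂ + 1) n, rhoEta J η (c l) (c (l + 1)) := by
        have h4 := dist_triangle4 (c o') (c κ₁) (c (κ₂ + 1)) (c n)
        linarith
      have hexp : (1 + a / b) * (∑ k ∈ Finset.range n, rhoEta J η (c k) (c (k + 1)))
          = (1 + a / b) * (∑ l ∈ Finset.Ico 0 o', rhoEta J η (c l) (c (l + 1)))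
          + (1 + a / b) * (∑ l ∈ Finset.Ico o' κ₁, rhoEta J η (c l) (c (l + 1)))
          + (1 + a / b) * (∑ l ∈ Finset.Ico κ₁ (κ₂ + 1), rhoEta J η (c l) (c (l + 1)))
          + (1 + a / b) * (∑ l ∈ Finset.Ico (κ₂ + 1) n, rhoEta J η (c l) (c (l + 1))) := by
        rw [← hsplit, ← hcons]; ring
      have he1 : (1 + a / b) * (∑ l ∈ Finset.Ico o' κ₁, rhoEta J η (c l) (c (l + 1)))
          = (∑ l ∈ Finset.Ico o' κ₁, rhoEta J η (c l) (c (l + 1)))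
          + (a / b) * ∑ l ∈ Finset.Ico o' κ₁, rhoEta J η (c l) (c (l + 1)) := by ring
      have he2 : 0 ≤ (a / b) * ∑ l ∈ Finset.Ico (κ₂ + 1) n, rhoEta J η (c l) (c (l + 1)) :=
        mul_nonneg habnn hSCnn
      have he3 : 0 ≤ (1 + a / b) * ∑ l ∈ Finset.Ico κ₁ (κ₂ + 1), rhoEta J η (c l) (c (l + 1)) :=
        mul_nonneg (by linarith) hSBnn
      have he4 : (1 + a / b) * (∑ l ∈ Finset.Ico (κ₂ + 1) n, rhoEta J η (c l) (c (l + 1)))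
          = (∑ l ∈ Finset.Ico (κ₂ + 1) n, rhoEta J η (c l) (c (l + 1)))
          + (a / b) * ∑ l ∈ Finset.Ico (κ₂ + 1) n, rhoEta J η (c l) (c (l + 1)) := by ring
      linarith
  -- here no outside point before the first S-jump
  have hOLn : ∀ m, m ≤ κ₁ → ¬(∀ w ∈ S, b * δ σ ≤ dist (c m) w) :=
    fun m hm ho => hOL ⟨m, hm, ho⟩
  by_cases hOR : ∃ q', (κ₂ + 1 < q' ∧ q' ≤ n) ∧ (∀ w ∈ S, b * δ σ ≤ dist (c q') w)
  · -- Config IIa : outside points only after the last S-jump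
    have hnoL : ∀ m, m ≤ κ₂ → ¬(∀ w ∈ S, b * δ σ ≤ dist (c m) w) := by
      intro m hm ho
      obtain ⟨q', ⟨h1, h2⟩, h3⟩ := hOR
      exact hclos κ₂ hκ₂ ⟨m, hm, ho⟩ q' h1 h2 h3
    have hins02 : ∀ m, m ≤ κ₂ + 1 → ¬(∀ w ∈ S, b * δ σ ≤ dist (c m) w) := by
      intro m hm ho
      by_cases h3 : m ≤ κ₂
      · exact hnoL m h3 ho
      · exact hmemS_in m (by rw [show m = κ₂ + 1 by omega]; exact hκ₂.2.2) ho
    set o : ℕ := Nat.find hOR with hodef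
    have ho : (κ₂ + 1 < o ∧ o ≤ n) ∧ (∀ w ∈ S, b * δ σ ≤ dist (c o) w) := Nat.find_spec hOR
    have homin : ∀ m, m < o → ¬((κ₂ + 1 < m ∧ m ≤ n) ∧ (∀ w ∈ S, b * δ σ ≤ dist (c m) w)) :=
      fun m hm => Nat.find_min hOR hm
    have hinsU : ∀ m, m < o → ¬(∀ w ∈ S, b * δ σ ≤ dist (c m) w) := by
      intro m h1 ho'
      by_cases h3 : m ≤ κ₂ + 1
      · exact hins02 m h3 ho'
      · exact homin m h1 ⟨⟨by omega, by omega⟩, ho'⟩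
    have hpregen : ∀ l, 0 ≤ l → l < κ₁ →
        rhoEta J η (c l) (c (l + 1)) = dist (c l) (c (l + 1)) := by
      intro l _ h2
      apply hgen l (by omega) (Or.inl (hinsU l (by omega)))
      exact fun hmem => hκ₁min l h2 ⟨by omega, hmem.1, hmem.2⟩
    have hpreA : dist (c 0) (c κ₁) ≤ ∑ l ∈ Finset.Ico 0 κ₁, rhoEta J η (c l) (c (l + 1)) :=
      hdist_le 0 κ₁ (Nat.zero_le κ₁) hpregen
    have hwt : ∀ l, κ₁ ≤ l → l < κ₂ + 1 →
        η σ * dist (c l) (c (l + 1)) ≤ rhoEta J η (c l) (c (l + 1)) := by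
      intro l h1 h2
      by_cases hmem : c l ∈ S ∧ c (l + 1) ∈ S
      · rw [hrhoS _ _ hmem.1 hmem.2]
      · rw [hgen l (by omega) (Or.inl (hinsU l (by omega))) hmem]
        exact mul_le_of_le_one_left dist_nonneg (hη σ).2
    have hmidB : rhoEta J η (c κ₁) (c (κ₂ + 1)) ≤
        ∑ l ∈ Finset.Ico κ₁ (κ₂ + 1), rhoEta J η (c l) (c (l + 1)) := by
      rw [hrhoS _ _ hκ₁.2.1 hκ₂.2.2]
      exact weighted_dist_le_sum c _ (hη σ).1.le (by omega) hwt
    have hstgen : ∀ l, κ₂ + 1 ≤ l → l < o →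
        rhoEta J η (c l) (c (l + 1)) = dist (c l) (c (l + 1)) := by
      intro l h1 h2
      apply hgen l (by omega) (Or.inl (hinsU l (by omega)))
      exact fun hmem => hκ₂max l (by omega) (by omega) ⟨by omega, hmem.1, hmem.2⟩
    have hgd : dist (c (κ₂ + 1)) (c o) ≤
        ∑ l ∈ Finset.Ico (κ₂ + 1) o, rhoEta J η (c l) (c (l + 1)) :=
      hdist_le _ _ (by omega) hstgen
    have hbδG : b * δ σ ≤ ∑ l ∈ Finset.Ico (κ₂ + 1) o, rhoEta J η (c l) (c (l + 1)) := by
      have := ho.2 (c (κ₂ + 1)) hκ₂.2.2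
      rw [dist_comm] at this
      exact le_trans this hgd
    have hGnn : 0 ≤ ∑ l ∈ Finset.Ico (κ₂ + 1) o, rhoEta J η (c l) (c (l + 1)) :=
      Finset.sum_nonneg fun l _ => hRnn _ _
    have hτnn : 0 ≤ ∑ l ∈ Finset.Ico o n, rhoEta J η (c l) (c (l + 1)) :=
      Finset.sum_nonneg fun l _ => hRnn _ _
    have hGC : (∑ l ∈ Finset.Ico (κ₂ + 1) o, rhoEta J η (c l) (c (l + 1)))
        + (∑ l ∈ Finset.Ico o n, rhoEta J η (c l) (c (l + 1)))
        = ∑ l ∈ Finset.Ico (κ₂ + 1) n, rhoEta J η (c l) (c (l + 1)) :=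
      Finset.sum_Ico_consecutive _ (by omega) ho.1.2
    by_cases hcase : dist (c o) (c n) ≤ ∑ l ∈ Finset.Ico o n, rhoEta J η (c l) (c (l + 1))
    · have hsufC : dist (c (κ₂ + 1)) (c n) ≤
          ∑ l ∈ Finset.Ico (κ₂ + 1) n, rhoEta J η (c l) (c (l + 1)) := by
        calc dist (c (κ₂ + 1)) (c n) ≤ dist (c (κ₂ + 1)) (c o) + dist (c o) (c n) :=
              dist_triangle _ _ _
          _ ≤ _ := by rw [← hGC]; exact add_le_add hgd hcase
      refine hfinish _ _ _ hpreA hmidB hsufC (by linarith) (by nlinarith)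
    · push_neg at hcase
      have hsum'' : (∑ k' ∈ Finset.range (n - o), rhoEta J η (c (o + k')) (c (o + k' + 1)))
          = ∑ l ∈ Finset.Ico o n, rhoEta J η (c l) (c (l + 1)) :=
        (Finset.sum_Ico_eq_sum_range (fun l => rhoEta J η (c l) (c (l + 1))) o n).symm
      obtain ⟨i', S', hS', pm, hpm, pp, hpp, hnepp, hrq, hbd⟩ :=
        IH (n - o) (by omega) (fun m => c (o + m)) (by
          show (∑ k' ∈ Finset.range (n - o), rhoEta J η (c (o + k')) (c (o + k' + 1)))
            < dist (c (o + 0)) (c (o + (n - o)))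
          rw [hsum'', show o + 0 = o from rfl, show o + (n - o) = n by omega]
          exact hcase)
      have hbd' : dist (c o) pm + rhoEta J η pm pp + dist pp (c n) ≤
          (1 + a / b) * ∑ l ∈ Finset.Ico o n, rhoEta J η (c l) (c (l + 1)) := by
        have hbd2 : dist (c (o + 0)) pm + rhoEta J η pm pp + dist pp (c (o + (n - o))) ≤
            (1 + a / b) * ∑ k' ∈ Finset.range (n - o),
              rhoEta J η (c (o + k')) (c (o + k' + 1)) := hbd
        rw [hsum'', show o + 0 = o from rfl, show o + (n - o) = n by omega] at hbd2
        exact hbd2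
      refine ⟨i', S', hS', pm, hpm, pp, hpp, hnepp, hrq, ?_⟩
      have haδle : a * δ σ ≤
          (a / b) * ∑ l ∈ Finset.Ico (κ₂ + 1) o, rhoEta J η (c l) (c (l + 1)) := by
        have h1 : a * δ σ = (a / b) * (b * δ σ) := by field_simp
        rw [h1]
        exact mul_le_mul_of_nonneg_left hbδG habnn
      have hxpm : dist (c 0) pm ≤
          (∑ l ∈ Finset.Ico 0 κ₁, rhoEta J η (c l) (c (l + 1))) + a * δ σ
          + (∑ l ∈ Finset.Ico (κ₂ + 1) o, rhoEta J η (c l) (c (l + 1))) + dist (c o) pm := by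
        have t1 := dist_triangle4 (c 0) (c (κ₂ + 1)) (c o) pm
        have t2 := dist_triangle (c 0) (c κ₁) (c (κ₂ + 1))
        linarith
      have hexp : (1 + a / b) * (∑ k ∈ Finset.range n, rhoEta J η (c k) (c (k + 1)))
          = (1 + a / b) * (∑ l ∈ Finset.Ico 0 κ₁, rhoEta J η (c l) (c (l + 1)))
          + (1 + a / b) * (∑ l ∈ Finset.Ico κ₁ (κ₂ + 1), rhoEta J η (c l) (c (l + 1)))
          + (1 + a / b) * (∑ l ∈ Finset.Ico (κ₂ + 1) o, rhoEta J η (c l) (c (l + 1)))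
          + (1 + a / b) * (∑ l ∈ Finset.Ico o n, rhoEta J η (c l) (c (l + 1))) := by
        rw [← hsplit, ← hGC]; ring
      have he1 : (1 + a / b) * (∑ l ∈ Finset.Ico (κ₂ + 1) o, rhoEta J η (c l) (c (l + 1)))
          = (∑ l ∈ Finset.Ico (κ₂ + 1) o, rhoEta J η (c l) (c (l + 1)))
          + (a / b) * ∑ l ∈ Finset.Ico (κ₂ + 1) o, rhoEta J η (c l) (c (l + 1)) := by ring
      have he2 : 0 ≤ (a / b) * ∑ l ∈ Finset.Ico 0 κ₁, rhoEta J η (c l) (c (l + 1)) :=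
        mul_nonneg habnn hSAnn
      have he3 : 0 ≤ (1 + a / b) * ∑ l ∈ Finset.Ico κ₁ (κ₂ + 1), rhoEta J η (c l) (c (l + 1)) :=
        mul_nonneg (by linarith) hSBnn
      have he4 : (1 + a / b) * (∑ l ∈ Finset.Ico 0 κ₁, rhoEta J η (c l) (c (l + 1)))
          = (∑ l ∈ Finset.Ico 0 κ₁, rhoEta J η (c l) (c (l + 1)))
          + (a / b) * ∑ l ∈ Finset.Ico 0 κ₁, rhoEta J η (c l) (c (l + 1)) := by ring
      linarith
  · -- no outside points after the last S-jump either
    have hORn : ∀ q', κ₂ + 1 < q' → q' ≤ n → ¬(∀ w ∈ S, b * δ σ ≤ dist (c q') w) :=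
      fun q' h1 h2 ho => hOR ⟨q', ⟨h1, h2⟩, ho⟩
    by_cases hO : ∃ m, m ≤ n ∧ (∀ w ∈ S, b * δ σ ≤ dist (c m) w)
    · -- Config IIc : outside points strictly between the S-jumps
      set o : ℕ := Nat.find hO with hodef
      have ho : o ≤ n ∧ (∀ w ∈ S, b * δ σ ≤ dist (c o) w) := Nat.find_spec hO
      have hinsLow : ∀ m, m < o → ¬(∀ w ∈ S, b * δ σ ≤ dist (c m) w) :=
        fun m h1 ho' => Nat.find_min hO h1 ⟨by omega, ho'⟩
      have hoκ₁ : κ₁ < o := by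
        by_contra h
        exact hOLn o (by omega) ho.2
      have hoκ₂ : o ≤ κ₂ := by
        by_contra h
        push_neg at h
        by_cases h2 : o = κ₂ + 1
        · exact hmemS_in o (by rw [h2]; exact hκ₂.2.2) ho.2
        · exact hORn o (by omega) ho.1 ho.2
      set k : ℕ := Nat.findGreatest
        (fun l => (l < n ∧ c l ∈ S ∧ c (l + 1) ∈ S) ∧ l < o) n with hkdef
      have hk : (k < n ∧ c k ∈ S ∧ c (k + 1) ∈ S) ∧ k < o :=
        Nat.findGreatest_spec (P := fun l => (l < n ∧ c l ∈ S ∧ c (l + 1) ∈ S) ∧ l < o)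
          (le_of_lt hκ₁.1) ⟨hκ₁, hoκ₁⟩
      have hkmax : ∀ l, k < l → l ≤ n → ¬((l < n ∧ c l ∈ S ∧ c (l + 1) ∈ S) ∧ l < o) :=
        fun l h1 h2 => Nat.findGreatest_is_greatest
          (P := fun l => (l < n ∧ c l ∈ S ∧ c (l + 1) ∈ S) ∧ l < o) h1 h2
      have hκ₁k : κ₁ ≤ k := Nat.le_findGreatest
        (P := fun l => (l < n ∧ c l ∈ S ∧ c (l + 1) ∈ S) ∧ l < o) (le_of_lt hκ₁.1) ⟨hκ₁, hoκ₁⟩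
      have hkk₂ : k ≤ κ₂ := Nat.le_findGreatest (le_of_lt hk.1.1) hk.1
      have hk1o : k + 1 < o := by
        by_cases h2 : k + 1 = o
        · exact absurd ho.2 (hmemS_in o (by rw [← h2]; exact hk.1.2.2))
        · omega
      have hstgen : ∀ l, k + 1 ≤ l → l < o →
          rhoEta J η (c l) (c (l + 1)) = dist (c l) (c (l + 1)) := by
        intro l h1 h2
        apply hgen l (by omega) (Or.inl (hinsLow l (by omega)))
        exact fun hmem => hkmax l (by omega) (by omega) ⟨⟨by omega, hmem.1, hmem.2⟩, by omega⟩
      have hst : dist (c (k + 1)) (c o) ≤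
          ∑ l ∈ Finset.Ico (k + 1) o, rhoEta J η (c l) (c (l + 1)) :=
        hdist_le _ _ (by omega) hstgen
      have hbδST : b * δ σ ≤ ∑ l ∈ Finset.Ico (k + 1) o, rhoEta J η (c l) (c (l + 1)) := by
        have := ho.2 (c (k + 1)) hk.1.2.2
        rw [dist_comm] at this
        exact le_trans this hst
      have hSTSB : (∑ l ∈ Finset.Ico (k + 1) o, rhoEta J η (c l) (c (l + 1)))
          ≤ ∑ l ∈ Finset.Ico κ₁ (κ₂ + 1), rhoEta J η (c l) (c (l + 1)) := by
        apply Finset.sum_le_sum_of_subset_of_nonneg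
        · intro x hx
          rw [Finset.mem_Ico] at hx ⊢
          omega
        · exact fun l _ _ => hRnn _ _
      have hmidB' : rhoEta J η (c κ₁) (c (κ₂ + 1)) ≤
          (a / b) * ∑ l ∈ Finset.Ico κ₁ (κ₂ + 1), rhoEta J η (c l) (c (l + 1)) := by
        rw [hrhoS _ _ hκ₁.2.1 hκ₂.2.2]
        have h1 : η σ * dist (c κ₁) (c (κ₂ + 1)) ≤ dist (c κ₁) (c (κ₂ + 1)) :=
          mul_le_of_le_one_left dist_nonneg (hη σ).2
        have h2 : a * δ σ = (a / b) * (b * δ σ) := by field_simp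
        calc η σ * dist (c κ₁) (c (κ₂ + 1)) ≤ a * δ σ := by linarith [hdiam]
          _ = (a / b) * (b * δ σ) := h2
          _ ≤ _ := mul_le_mul_of_nonneg_left (le_trans hbδST hSTSB) habnn
      have hpregen : ∀ l, 0 ≤ l → l < κ₁ →
          rhoEta J η (c l) (c (l + 1)) = dist (c l) (c (l + 1)) := by
        intro l _ h2
        apply hgen l (by omega) (Or.inl (hinsLow l (by omega)))
        exact fun hmem => hκ₁min l h2 ⟨by omega, hmem.1, hmem.2⟩
      have hpreA : dist (c 0) (c κ₁) ≤ ∑ l ∈ Finset.Ico 0 κ₁, rhoEta J η (c l) (c (l + 1)) :=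
        hdist_le 0 κ₁ (Nat.zero_le κ₁) hpregen
      have hsufgen : ∀ l, κ₂ + 1 ≤ l → l < n →
          rhoEta J η (c l) (c (l + 1)) = dist (c l) (c (l + 1)) := by
        intro l h1 h2
        apply hgen l h2
        · refine Or.inl ?_
          by_cases h3 : l = κ₂ + 1
          · exact hmemS_in l (by rw [h3]; exact hκ₂.2.2)
          · exact hORn l (by omega) (by omega)
        · exact fun hmem => hκ₂max l (by omega) (by omega) ⟨h2, hmem.1, hmem.2⟩
      have hsufC : dist (c (κ₂ + 1)) (c n) ≤
          ∑ l ∈ Finset.Ico (κ₂ + 1) n, rhoEta J η (c l) (c (l + 1)) :=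
        hdist_le _ _ (by omega) hsufgen
      have hSBle : (∑ l ∈ Finset.Ico κ₁ (κ₂ + 1), rhoEta J η (c l) (c (l + 1)))
          ≤ ∑ k' ∈ Finset.range n, rhoEta J η (c k') (c (k' + 1)) := by linarith
      refine hfinish _ _ _ hpreA hmidB' hsufC (by linarith) ?_
      have hmul : (a / b) * (∑ l ∈ Finset.Ico κ₁ (κ₂ + 1), rhoEta J η (c l) (c (l + 1)))
          ≤ (a / b) * ∑ k' ∈ Finset.range n, rhoEta J η (c k') (c (k' + 1)) :=
        mul_le_mul_of_nonneg_left hSBle habnn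
      nlinarith
    · -- Config I : everything lies close to S
      have hins : ∀ m, m ≤ n → ¬(∀ w ∈ S, b * δ σ ≤ dist (c m) w) :=
        fun m hm ho => hO ⟨m, hm, ho⟩
      have hpregen : ∀ l, 0 ≤ l → l < κ₁ →
          rhoEta J η (c l) (c (l + 1)) = dist (c l) (c (l + 1)) := by
        intro l _ h2
        apply hgen l (by omega) (Or.inl (hins l (by omega)))
        exact fun hmem => hκ₁min l h2 ⟨by omega, hmem.1, hmem.2⟩
      have hpreA : dist (c 0) (c κ₁) ≤ ∑ l ∈ Finset.Ico 0 κ₁, rhoEta J η (c l) (c (l + 1)) :=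
        hdist_le 0 κ₁ (Nat.zero_le κ₁) hpregen
      have hwt : ∀ l, κ₁ ≤ l → l < κ₂ + 1 →
          η σ * dist (c l) (c (l + 1)) ≤ rhoEta J η (c l) (c (l + 1)) := by
        intro l h1 h2
        by_cases hmem : c l ∈ S ∧ c (l + 1) ∈ S
        · rw [hrhoS _ _ hmem.1 hmem.2]
        · rw [hgen l (by omega) (Or.inl (hins l (by omega))) hmem]
          exact mul_le_of_le_one_left dist_nonneg (hη σ).2
      have hmidB : rhoEta J η (c κ₁) (c (κ₂ + 1)) ≤
          ∑ l ∈ Finset.Ico κ₁ (κ₂ + 1), rhoEta J η (c l) (c (l + 1)) := by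
        rw [hrhoS _ _ hκ₁.2.1 hκ₂.2.2]
        exact weighted_dist_le_sum c _ (hη σ).1.le (by omega) hwt
      have hsufgen : ∀ l, κ₂ + 1 ≤ l → l < n →
          rhoEta J η (c l) (c (l + 1)) = dist (c l) (c (l + 1)) := by
        intro l h1 h2
        apply hgen l h2 (Or.inl (hins l (by omega)))
        exact fun hmem => hκ₂max l (by omega) (by omega) ⟨h2, hmem.1, hmem.2⟩
      have hsufC : dist (c (κ₂ + 1)) (c n) ≤
          ∑ l ∈ Finset.Ico (κ₂ + 1) n, rhoEta J η (c l) (c (l + 1)) :=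
        hdist_le _ _ (by omega) hsufgen
      refine hfinish _ _ _ hpreA hmidB hsufC (by linarith) (by nlinarith)

end Stmt11Aux

/-- single jump. If `d_η(x,y) < d(x,y)`, then for every `ε > 0` there
are distinct points `pm ≠ pp` of a common shortcut `S ∈ 𝒥` with
`d_η(x,y)(1 + a/b + ε) ≥ d(x,pm) + ρ_η(pm,pp) + d(pp,y)`. In particular `d_η` is a
genuine distance on `X`. -/
theorem stmt11 {X : Type*} [MetricSpace X] (J : ℕ → Set (Set X)) (δ : ℕ → ℝ)
    (a₀ a b M : ℝ) (hS : HasShortcuts J δ a₀ a b M)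
    (η : ℕ → ℝ) (hη : ∀ i, 0 < η i ∧ η i ≤ 1) :
    (∀ x y : X, dEta J η x y < dist x y → ∀ ε : ℝ, 0 < ε →
      ∃ (i : ℕ) (S : Set X), S ∈ J i ∧ ∃ pm ∈ S, ∃ pp ∈ S, pm ≠ pp ∧
        dist x pm + rhoEta J η pm pp + dist pp y ≤ dEta J η x y * (1 + a / b + ε)) ∧
    (∀ x y : X, x ≠ y → 0 < dEta J η x y) := by
  classical
  have hmain := Stmt11Aux.main_lemma hS hη
  obtain ⟨ha₀, ha, hb, hM, hδp, hδ0, hJne, hdisj, hpair, hsep, hquad, hcard, hcov⟩ := hS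
  have habnn : 0 ≤ a / b := div_nonneg ha.le hb.le
  have h1ab : (0:ℝ) < 1 + a / b := by linarith
  have hsetne : ∀ x y : X, {t : ℝ | ∃ (n : ℕ) (c : ℕ → X), c 0 = x ∧ c n = y ∧
      t = ∑ k ∈ Finset.range n, rhoEta J η (c k) (c (k + 1))}.Nonempty := by
    intro x y
    refine ⟨rhoEta J η x y, 1, fun k => if k = 0 then x else y, by simp, by simp, ?_⟩
    rw [Finset.sum_range_one]
    simp
  have hlb : ∀ x y : X, ∀ t ∈ {t : ℝ | ∃ (n : ℕ) (c : ℕ → X), c 0 = x ∧ c n = y ∧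
      t = ∑ k ∈ Finset.range n, rhoEta J η (c k) (c (k + 1))}, 0 ≤ t := by
    rintro x y t ⟨n, ch, h0, hn, ht⟩
    rw [ht]
    exact Finset.sum_nonneg fun l _ => Stmt11Aux.rho_nonneg J hη _ _
  have hd0 : ∀ x y : X, 0 ≤ dEta J η x y :=
    fun x y => le_csInf (hsetne x y) (hlb x y)
  have hpos : ∀ x y : X, x ≠ y → 0 < dEta J η x y := by
    intro x y hxy
    have hr : 0 < dist x y := dist_pos.mpr hxy
    have ha' : a ≠ 0 := ne_of_gt ha
    have hev : ∀ᶠ i in atTop, a * δ i < dist x y / 2 := by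
      have h2 : (0:ℝ) < dist x y / (2 * a) := by positivity
      have h3 : ∀ᶠ i in atTop, δ i < dist x y / (2 * a) := hδ0.eventually (gt_mem_nhds h2)
      filter_upwards [h3] with i hi
      calc a * δ i < a * (dist x y / (2 * a)) := mul_lt_mul_of_pos_left hi ha
        _ = dist x y / 2 := by field_simp
    obtain ⟨N, hN⟩ := Filter.eventually_atTop.mp hev
    have hQne : (insert (1:ℝ) ((Finset.range N).image η)).Nonempty :=
      ⟨1, Finset.mem_insert_self _ _⟩
    set η₀ : ℝ := (insert (1:ℝ) ((Finset.range N).image η)).min' hQne with hη₀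
    have hη₀pos : 0 < η₀ := by
      have hmem := (insert (1:ℝ) ((Finset.range N).image η)).min'_mem hQne
      rw [← hη₀] at hmem
      rcases Finset.mem_insert.mp hmem with h | h
      · exact h ▸ one_pos
      · obtain ⟨i, _, hi⟩ := Finset.mem_image.mp h
        exact hi ▸ (hη i).1
    have hη₀le : ∀ i, i < N → η₀ ≤ η i := fun i hi => Finset.min'_le _ _
      (Finset.mem_insert_of_mem (Finset.mem_image_of_mem η (Finset.mem_range.mpr hi)))
    have hη₀le1 : η₀ ≤ 1 := Finset.min'_le _ _ (Finset.mem_insert_self _ _)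
    have hc₀pos : 0 < min (dist x y) (η₀ * dist x y / (2 * (1 + a / b))) :=
      lt_min hr (div_pos (mul_pos hη₀pos hr) (by linarith))
    refine lt_of_lt_of_le hc₀pos (le_csInf (hsetne x y) ?_)
    rintro t ⟨n, ch, h0, hn, ht⟩
    by_contra hlt
    push_neg at hlt
    have htr : (∑ k ∈ Finset.range n, rhoEta J η (ch k) (ch (k + 1))) < dist (ch 0) (ch n) := by
      rw [h0, hn, ← ht]
      exact lt_of_lt_of_le hlt (min_le_left _ _)
    obtain ⟨i, S, hSi, pm, hpm, pp, hpp, hne, hrq, hbd⟩ := hmain n ch htr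
    rw [h0, hn, ← ht] at hbd
    have ht2 : t < η₀ * dist x y / (2 * (1 + a / b)) :=
      lt_of_lt_of_le hlt (min_le_right _ _)
    have hbd2 : dist x pm + rhoEta J η pm pp + dist pp y < η₀ * dist x y / 2 := by
      have h5 : (1 + a / b) * t < (1 + a / b) * (η₀ * dist x y / (2 * (1 + a / b))) :=
        mul_lt_mul_of_pos_left ht2 h1ab
      have h6 : (1 + a / b) * (η₀ * dist x y / (2 * (1 + a / b))) = η₀ * dist x y / 2 := by
        field_simp
      linarith
    have hrnn : 0 ≤ rhoEta J η pm pp := Stmt11Aux.rho_nonneg J hη _ _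
    have hdpm : dist x y / 2 ≤ dist pm pp := by
      have t4 := dist_triangle4 x pm pp y
      have h7 : η₀ * dist x y / 2 ≤ dist x y / 2 := by nlinarith
      linarith [dist_nonneg (x := x) (y := pm), dist_nonneg (x := pp) (y := y)]
    have hlevel : dist x y / 2 ≤ a * δ i :=
      le_trans hdpm (hpair i S hSi pm hpm pp hpp hne).2
    have hiN : i < N := by
      by_contra h
      push_neg at h
      linarith [hN i h]
    have hrho_ge : η₀ * (dist x y / 2) ≤ rhoEta J η pm pp := by
      rw [hrq]
      exact mul_le_mul (hη₀le i hiN) hdpm (by positivity) (hη i).1.le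
    have heq : η₀ * dist x y / 2 = η₀ * (dist x y / 2) := by ring
    linarith [dist_nonneg (x := x) (y := pm), dist_nonneg (x := pp) (y := y)]
  refine ⟨?_, hpos⟩
  intro x y hlt ε hε
  have hxy : x ≠ y := by
    intro h
    rw [h, dist_self] at hlt
    linarith [hd0 y y]
  have hdpos : 0 < dEta J η x y := hpos x y hxy
  have hthr : dEta J η x y <
      min (dist x y) (dEta J η x y * (1 + a / b + ε) / (1 + a / b)) := by
    apply lt_min hlt
    rw [lt_div_iff₀ h1ab]
    nlinarith
  obtain ⟨t, htmem, htlt⟩ := exists_lt_of_csInf_lt (hsetne x y) hthr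
  obtain ⟨n, ch, h0, hn, ht⟩ := htmem
  have htr : (∑ k ∈ Finset.range n, rhoEta J η (ch k) (ch (k + 1))) < dist (ch 0) (ch n) := by
    rw [h0, hn, ← ht]
    exact lt_of_lt_of_le htlt (min_le_left _ _)
  obtain ⟨i, S, hSi, pm, hpm, pp, hpp, hne, hrq, hbd⟩ := hmain n ch htr
  rw [h0, hn, ← ht] at hbd
  refine ⟨i, S, hSi, pm, hpm, pp, hpp, hne, ?_⟩
  have h2 : t < dEta J η x y * (1 + a / b + ε) / (1 + a / b) :=
    lt_of_lt_of_le htlt (min_le_right _ _)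
  rw [lt_div_iff₀ h1ab] at h2
  nlinarith
end

section
/- Let X be a metric doubling metric space with shortcuts {(𝒥_i, δ_i)} and η ⊆ (0,1]. Then the identity map (X, d) → (X, d_η) is David–Semmes regular: it is 1-Lipschitz, and there is C ≥ 1 such that every d_η-ball of radius r is contained in a union of at most C d-balls of radius C·r. -/
open Filter Set
open scoped ENNReal NNReal Topology

/-!
Hops of a chain along shortcuts are the only steps cheaper than the distance. By induction on
the length, cutting a chain at the first and last hops on the shortcut `S` of its hop of largest
scale and bridging the cut through `S` with the bypass axiom, a chain whose hops all have scale
`≤ s` joins points at distance at most its cost plus `2 (a + b) s`. Two hops of scale `> s` on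
different shortcuts would force the chain to cross a gap wider than `b s` with smaller hops only,
so a chain of cost `< b s` has all its hops of scale `> s` on a single shortcut. With
`s = 2r / b`, every point of the `d_η`-ball of radius `r` about `x` is therefore within `O(r)` of
`x` or of a point of a shortcut of scale `> s` that passes within `O(r)` of `x`. Points on such
shortcuts are `min a₀ b · s`-separated, so by doubling only boundedly many of them lie near `x`,
and each shortcut has at most `M` points.
-/

section Shortcut

variable {X : Type*} {J : ℕ → Set (Set X)} {δ : ℕ → ℝ} {a₀ a b M : ℝ}
  {i j : ℕ} {S T : Set X} {p q x y : X}

open scoped Classical in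
/-- The shortcut through `x`, or `∅` if `x` lies on none. -/
noncomputable def shortcutAt (J : ℕ → Set (Set X)) (x : X) : Set X :=
  if h : ∃ i, ∃ S ∈ J i, x ∈ S then h.choose_spec.choose else ∅

open scoped Classical in
/-- A level `δ i` with `S ∈ J i`, chosen once for each set `S` (the same set may occur at
several levels), and `0` if there is none. -/
noncomputable def shortcutScale (J : ℕ → Set (Set X)) (δ : ℕ → ℝ) (S : Set X) : ℝ :=
  if h : ∃ i, S ∈ J i then δ h.choose else 0

theorem exists_mem_of_mem_shortcutAt (hy : y ∈ shortcutAt J x) :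
    ∃ i, shortcutAt J x ∈ J i ∧ x ∈ shortcutAt J x := by
  unfold shortcutAt at hy ⊢
  split_ifs at hy ⊢ with h
  · exact ⟨h.choose, h.choose_spec.choose_spec⟩
  · exact absurd hy (notMem_empty y)

theorem exists_shortcutScale_eq (hSi : S ∈ J i) : ∃ j, S ∈ J j ∧ shortcutScale J δ S = δ j := by
  have h : ∃ i, S ∈ J i := ⟨i, hSi⟩
  exact ⟨h.choose, h.choose_spec, by simp only [shortcutScale, dif_pos h]⟩

variable [MetricSpace X]

def IsFarFrom (J : ℕ → Set (Set X)) (δ : ℕ → ℝ) (b : ℝ) (x : X) (S : Set X) : Prop :=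
  ∀ w ∈ S, b * shortcutScale J δ S ≤ dist x w

namespace HasShortcuts

theorem a₀_pos (hS : HasShortcuts J δ a₀ a b M) : 0 < a₀ := hS.1

theorem a_pos (hS : HasShortcuts J δ a₀ a b M) : 0 < a := hS.2.1

theorem b_pos (hS : HasShortcuts J δ a₀ a b M) : 0 < b := hS.2.2.1

theorem M_pos (hS : HasShortcuts J δ a₀ a b M) : 0 < M := hS.2.2.2.1

theorem δ_pos (hS : HasShortcuts J δ a₀ a b M) (i : ℕ) : 0 < δ i := hS.2.2.2.2.1 i

theorem disjoint (hS : HasShortcuts J δ a₀ a b M) (hSi : S ∈ J i) (hTj : T ∈ J j)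
    (hST : S ≠ T) : Disjoint S T :=
  hS.2.2.2.2.2.2.2.1 i j S hSi T hTj hST

theorem dist_mem_Icc (hS : HasShortcuts J δ a₀ a b M) (hSi : S ∈ J i) (hp : p ∈ S)
    (hq : q ∈ S) (hpq : p ≠ q) : dist p q ∈ Icc (a₀ * δ i) (a * δ i) :=
  hS.2.2.2.2.2.2.2.2.1 i S hSi p hp q hq hpq

theorem le_dist_of_le (hS : HasShortcuts J δ a₀ a b M) (hij : i ≤ j) (hSi : S ∈ J i)
    (hTj : T ∈ J j) (hST : S ≠ T) (hp : p ∈ S) (hq : q ∈ T) : b * δ j ≤ dist p q :=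
  hS.2.2.2.2.2.2.2.2.2.1 i j hij S hSi T hTj hST p hp q hq

theorem dist_le_add_of_le_dist (hS : HasShortcuts J δ a₀ a b M) (hSi : S ∈ J i)
    (hx : ∀ w ∈ S, b * δ i ≤ dist x w) (hy : ∀ w ∈ S, b * δ i ≤ dist y w)
    (hp : p ∈ S) (hq : q ∈ S) : dist x y ≤ dist x p + dist q y :=
  hS.2.2.2.2.2.2.2.2.2.2.1 i S hSi x y hx hy p hp q hq

theorem finite (hS : HasShortcuts J δ a₀ a b M) (hSi : S ∈ J i) : S.Finite :=
  (hS.2.2.2.2.2.2.2.2.2.2.2.1 i S hSi).1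

theorem ncard_le (hS : HasShortcuts J δ a₀ a b M) (hSi : S ∈ J i) : (S.ncard : ℝ) ≤ M :=
  (hS.2.2.2.2.2.2.2.2.2.2.2.1 i S hSi).2.2

theorem shortcutAt_eq (hS : HasShortcuts J δ a₀ a b M) (hSi : S ∈ J i) (hx : x ∈ S) :
    shortcutAt J x = S := by
  have h : ∃ i, ∃ S ∈ J i, x ∈ S := ⟨i, S, hSi, hx⟩
  obtain ⟨hTJ, hxT⟩ := h.choose_spec.choose_spec
  simp only [shortcutAt, dif_pos h]
  by_contra hne
  exact disjoint_left.mp (hS.disjoint hTJ hSi hne) hxT hx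

theorem finite_shortcutAt (hS : HasShortcuts J δ a₀ a b M) (x : X) :
    (shortcutAt J x).Finite := by
  rcases (shortcutAt J x).eq_empty_or_nonempty with h | ⟨y, hy⟩
  · exact h ▸ finite_empty
  · obtain ⟨i, hi, -⟩ := exists_mem_of_mem_shortcutAt hy
    exact hS.finite hi

theorem ncard_shortcutAt_le (hS : HasShortcuts J δ a₀ a b M) (x : X) :
    ((shortcutAt J x).ncard : ℝ) ≤ M := by
  rcases (shortcutAt J x).eq_empty_or_nonempty with h | ⟨y, hy⟩
  · simpa [h] using hS.M_pos.le
  · obtain ⟨i, hi, -⟩ := exists_mem_of_mem_shortcutAt hy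
    exact hS.ncard_le hi

theorem mul_shortcutScale_le_dist (hS : HasShortcuts J δ a₀ a b M) (hSi : S ∈ J i)
    (hp : p ∈ S) (hq : q ∈ S) (hpq : p ≠ q) : a₀ * shortcutScale J δ S ≤ dist p q := by
  obtain ⟨j, hSj, hσ⟩ := exists_shortcutScale_eq (δ := δ) hSi
  exact hσ ▸ (hS.dist_mem_Icc hSj hp hq hpq).1

theorem dist_le_mul_shortcutScale (hS : HasShortcuts J δ a₀ a b M) (hSi : S ∈ J i)
    (hp : p ∈ S) (hq : q ∈ S) : dist p q ≤ a * shortcutScale J δ S := by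
  obtain ⟨j, hSj, hσ⟩ := exists_shortcutScale_eq (δ := δ) hSi
  rcases eq_or_ne p q with rfl | hpq
  · simpa [hσ] using mul_nonneg hS.a_pos.le (hS.δ_pos j).le
  · exact hσ ▸ (hS.dist_mem_Icc hSj hp hq hpq).2

theorem mul_min_le_dist (hS : HasShortcuts J δ a₀ a b M) (hSi : S ∈ J i) (hTj : T ∈ J j)
    (hST : S ≠ T) (hp : p ∈ S) (hq : q ∈ T) :
    b * min (shortcutScale J δ S) (shortcutScale J δ T) ≤ dist p q := by
  obtain ⟨i', hSi', hσS⟩ := exists_shortcutScale_eq (δ := δ) hSi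
  obtain ⟨j', hTj', hσT⟩ := exists_shortcutScale_eq (δ := δ) hTj
  rw [hσS, hσT]
  rcases le_total i' j' with h | h
  · exact (mul_le_mul_of_nonneg_left (min_le_right _ _) hS.b_pos.le).trans
      (hS.le_dist_of_le h hSi' hTj' hST hp hq)
  · exact (mul_le_mul_of_nonneg_left (min_le_left _ _) hS.b_pos.le).trans
      (dist_comm p q ▸ hS.le_dist_of_le h hTj' hSi' hST.symm hq hp)

theorem isFarFrom_of_mem (hS : HasShortcuts J δ a₀ a b M) (hSi : S ∈ J i) (hTj : T ∈ J j)
    (hST : S ≠ T) (hσ : shortcutScale J δ T ≤ shortcutScale J δ S) (hp : p ∈ S) :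
    IsFarFrom J δ b p T := fun w hw => by
  simpa [min_eq_right hσ] using hS.mul_min_le_dist hSi hTj hST hp hw

theorem dist_le_of_isFarFrom (hS : HasShortcuts J δ a₀ a b M) (hSi : S ∈ J i)
    (hx : IsFarFrom J δ b x S) (hy : IsFarFrom J δ b y S) (hp : p ∈ S) (hq : q ∈ S) :
    dist x y ≤ dist x p + dist q y := by
  obtain ⟨j, hSj, hσ⟩ := exists_shortcutScale_eq (δ := δ) hSi
  exact hS.dist_le_add_of_le_dist hSj (hσ ▸ hx) (hσ ▸ hy) hp hq

theorem dist_le_of_detour (hS : HasShortcuts J δ a₀ a b M) (hSi : S ∈ J i)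
    (hp : p ∈ S) (hq : q ∈ S) {A B e₀ e₁ : ℝ} (hA : 0 ≤ A) (hB : 0 ≤ B)
    (hx : IsFarFrom J δ b x S ∨ (a + b) * shortcutScale J δ S ≤ e₀)
    (hy : IsFarFrom J δ b y S ∨ (a + b) * shortcutScale J δ S ≤ e₁)
    (hxp : dist x p ≤ A + e₀) (hqy : dist q y ≤ B + e₁) :
    dist x y ≤ A + B + e₀ + e₁ := by
  by_cases hxS : IsFarFrom J δ b x S
  · by_cases hyS : IsFarFrom J δ b y S
    · linarith [hS.dist_le_of_isFarFrom hSi hxS hyS hp hq]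
    · obtain ⟨z, hz, hyz⟩ : ∃ z ∈ S, dist y z < b * shortcutScale J δ S := by
        simpa [IsFarFrom] using hyS
      linarith [hy.resolve_left hyS, hS.dist_le_mul_shortcutScale hSi hp hz,
        dist_triangle4 x p z y, dist_comm y z]
  · obtain ⟨z, hz, hxz⟩ : ∃ z ∈ S, dist x z < b * shortcutScale J δ S := by
      simpa [IsFarFrom] using hxS
    linarith [hx.resolve_left hxS, hS.dist_le_mul_shortcutScale hSi hz hq,
      dist_triangle4 x z q y]

end HasShortcuts

end Shortcut

section Consecutive

variable {P : ℕ → Prop} {m n : ℕ}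

theorem exists_first_in_Ico (h : ∃ k ∈ Finset.Ico m n, P k) :
    ∃ k ∈ Finset.Ico m n, P k ∧ ∀ j ∈ Finset.Ico m k, ¬ P j := by
  classical
  obtain ⟨k, hk, hmin⟩ := ((Finset.Ico m n).filter P).exists_min_image id
    (by simpa [Finset.filter_nonempty_iff] using h)
  simp only [Finset.mem_filter, Finset.mem_Ico, id] at hk hmin ⊢
  exact ⟨k, hk.1, hk.2, fun j hj hPj => by linarith [hmin j ⟨⟨hj.1, by omega⟩, hPj⟩]⟩

theorem exists_last_in_Ico (h : ∃ k ∈ Finset.Ico m n, P k) :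
    ∃ k ∈ Finset.Ico m n, P k ∧ ∀ j ∈ Finset.Ico (k + 1) n, ¬ P j := by
  classical
  obtain ⟨k, hk, hmax⟩ := ((Finset.Ico m n).filter P).exists_max_image id
    (by simpa [Finset.filter_nonempty_iff] using h)
  simp only [Finset.mem_filter, Finset.mem_Ico, id] at hk hmax ⊢
  exact ⟨k, hk.1, hk.2, fun j hj hPj => by linarith [hmax j ⟨⟨by omega, hj.2⟩, hPj⟩]⟩

theorem eq_of_eq_of_consecutive {α : Type*} (f : ℕ → α)
    (h : ∀ k k', k < k' → P k → P k' → (∀ j ∈ Finset.Ico (k + 1) k', ¬ P j) → f k = f k')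
    {k k' : ℕ} (hk : P k) (hk' : P k') : f k = f k' := by
  wlog hle : k ≤ k' generalizing k k'
  · exact (this hk' hk (by omega)).symm
  induction k' using Nat.strong_induction_on with
  | _ k' ih =>
    rcases hle.eq_or_lt with rfl | hlt
    · rfl
    obtain ⟨j, hj, hPj, hlast⟩ := exists_last_in_Ico ⟨k, Finset.mem_Ico.mpr ⟨le_rfl, hlt⟩, hk⟩
    rw [Finset.mem_Ico] at hj
    exact (ih j hj.2 hPj hj.1).trans (h j k' hj.2 hPj hk' hlast)

end Consecutive

section Chain

variable {X : Type*} [MetricSpace X] {J : ℕ → Set (Set X)} {δ η : ℕ → ℝ} {a₀ a b M : ℝ}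
  {c : ℕ → X} {k m n m' n' : ℕ} {p : X}

def IsHop (J : ℕ → Set (Set X)) (c : ℕ → X) (k : ℕ) : Prop :=
  c k ≠ c (k + 1) ∧ c (k + 1) ∈ shortcutAt J (c k)

noncomputable def chainCost (J : ℕ → Set (Set X)) (η : ℕ → ℝ) (c : ℕ → X) (m n : ℕ) : ℝ :=
  ∑ k ∈ Finset.Ico m n, rhoEta J η (c k) (c (k + 1))

def IsFarFromHops (J : ℕ → Set (Set X)) (δ : ℕ → ℝ) (b : ℝ) (c : ℕ → X) (m n : ℕ) (x : X) :
    Prop :=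
  ∀ k ∈ Finset.Ico m n, IsHop J c k → IsFarFrom J δ b x (shortcutAt J (c k))

theorem IsFarFromHops.mono (h : IsFarFromHops J δ b c m n p) (hm : m ≤ m') (hn : n' ≤ n) :
    IsFarFromHops J δ b c m' n' p :=
  fun k hk => h k (Finset.Ico_subset_Ico hm hn hk)

theorem rhoEta_nonneg (hη : ∀ i, 0 ≤ η i) (x y : X) : 0 ≤ rhoEta J η x y := by
  unfold rhoEta
  split_ifs
  exacts [mul_nonneg (hη _) dist_nonneg, dist_nonneg]

theorem rhoEta_le_dist (hη : ∀ i, η i ≤ 1) (x y : X) : rhoEta J η x y ≤ dist x y := by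
  unfold rhoEta
  split_ifs
  exacts [mul_le_of_le_one_left dist_nonneg (hη _), le_rfl]

theorem HasShortcuts.dist_le_rhoEta (hS : HasShortcuts J δ a₀ a b M) (hη : ∀ i, 0 ≤ η i)
    (h : ¬ IsHop J c k) : dist (c k) (c (k + 1)) ≤ rhoEta J η (c k) (c (k + 1)) := by
  by_cases heq : c k = c (k + 1)
  · simpa [heq] using rhoEta_nonneg hη (c (k + 1)) (c (k + 1))
  have hS' : ¬ ∃ i, ∃ S ∈ J i, c k ∈ S ∧ c (k + 1) ∈ S := by
    rintro ⟨i, S, hSi, hk, hk'⟩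
    exact h ⟨heq, hS.shortcutAt_eq hSi hk ▸ hk'⟩
  simp [rhoEta, hS']

theorem chainCost_nonneg (hη : ∀ i, 0 ≤ η i) : 0 ≤ chainCost J η c m n :=
  Finset.sum_nonneg fun _ _ => rhoEta_nonneg hη _ _

theorem chainCost_mono (hη : ∀ i, 0 ≤ η i) (hm : m ≤ m') (hn : n' ≤ n) :
    chainCost J η c m' n' ≤ chainCost J η c m n :=
  Finset.sum_le_sum_of_subset_of_nonneg (Finset.Ico_subset_Ico hm hn)
    fun _ _ _ => rhoEta_nonneg hη _ _

theorem chainCost_add (hmk : m ≤ k) (hkn : k ≤ n) :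
    chainCost J η c m k + chainCost J η c k n = chainCost J η c m n :=
  Finset.sum_Ico_consecutive _ hmk hkn

theorem HasShortcuts.dist_le_chainCost (hS : HasShortcuts J δ a₀ a b M) (hη : ∀ i, 0 ≤ η i)
    (hmn : m ≤ n) (h : ∀ k ∈ Finset.Ico m n, ¬ IsHop J c k) :
    dist (c m) (c n) ≤ chainCost J η c m n :=
  (dist_le_Ico_sum_dist c hmn).trans
    (Finset.sum_le_sum fun k hk => hS.dist_le_rhoEta hη (h k hk))

theorem HasShortcuts.isFarFromHops_of_mem (hS : HasShortcuts J δ a₀ a b M) {i : ℕ}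
    {T : Set X} {x : X} (hTi : T ∈ J i) (hx : x ∈ T)
    (h : ∀ j ∈ Finset.Ico m n, IsHop J c j →
      shortcutAt J (c j) ≠ T ∧ shortcutScale J δ (shortcutAt J (c j)) ≤ shortcutScale J δ T) :
    IsFarFromHops J δ b c m n x := by
  intro j hj hhop
  obtain ⟨i', hi', -⟩ := exists_mem_of_mem_shortcutAt hhop.2
  exact hS.isFarFrom_of_mem hTi hi' (h j hj hhop).1.symm (h j hj hhop).2 hx

/-- Take a hop of largest scale and cut the chain at the first and the last hop on its
shortcut. -/
theorem HasShortcuts.exists_cut (hS : HasShortcuts J δ a₀ a b M) (c : ℕ → X) {m n : ℕ}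
    (h : ∃ k ∈ Finset.Ico m n, IsHop J c k) :
    ∃ k ∈ Finset.Ico m n, IsHop J c k ∧ ∃ k₁ k₂, m ≤ k₁ ∧ k₁ ≤ k₂ ∧ k₂ < n ∧
      c k₁ ∈ shortcutAt J (c k) ∧ c (k₂ + 1) ∈ shortcutAt J (c k) ∧
      IsFarFromHops J δ b c m k₁ (c k₁) ∧ IsFarFromHops J δ b c (k₂ + 1) n (c (k₂ + 1)) := by
  classical
  obtain ⟨k, hk, hmax⟩ := ((Finset.Ico m n).filter (IsHop J c)).exists_max_image
    (fun k => shortcutScale J δ (shortcutAt J (c k)))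
    (by simpa [Finset.filter_nonempty_iff] using h)
  rw [Finset.mem_filter] at hk
  set S := shortcutAt J (c k)
  obtain ⟨i, hSi, -⟩ := exists_mem_of_mem_shortcutAt hk.2.2
  have hon : ∃ k ∈ Finset.Ico m n, IsHop J c k ∧ shortcutAt J (c k) = S := ⟨k, hk.1, hk.2, rfl⟩
  obtain ⟨k₁, hk₁, ⟨hhop₁, hS₁⟩, hfirst⟩ := exists_first_in_Ico hon
  obtain ⟨k₂, hk₂, ⟨hhop₂, hS₂⟩, hlast⟩ := exists_last_in_Ico hon
  rw [Finset.mem_Ico] at hk₁ hk₂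
  have hk₁₂ : k₁ ≤ k₂ := by
    by_contra! h
    exact hlast k₁ (Finset.mem_Ico.mpr ⟨h, hk₁.2⟩) ⟨hhop₁, hS₁⟩
  obtain ⟨-, -, hp⟩ := exists_mem_of_mem_shortcutAt hhop₁.2
  rw [hS₁] at hp
  have hq : c (k₂ + 1) ∈ S := hS₂ ▸ hhop₂.2
  refine ⟨k, hk.1, hk.2, k₁, k₂, hk₁.1, hk₁₂, hk₂.2, hp, hq, ?_, ?_⟩
  · refine hS.isFarFromHops_of_mem hSi hp fun j hj hhopj => ⟨fun h => hfirst j hj ⟨hhopj, h⟩, ?_⟩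
    exact hmax j (Finset.mem_filter.mpr ⟨Finset.Ico_subset_Ico le_rfl hk₁.2.le hj, hhopj⟩)
  · refine hS.isFarFromHops_of_mem hSi hq fun j hj hhopj => ⟨fun h => hlast j hj ⟨hhopj, h⟩, ?_⟩
    exact hmax j (Finset.mem_filter.mpr ⟨Finset.Ico_subset_Ico (by omega) le_rfl hj, hhopj⟩)

theorem HasShortcuts.dist_le_chainCost_add (hS : HasShortcuts J δ a₀ a b M)
    (hη : ∀ i, 0 ≤ η i) {s : ℝ} (c : ℕ → X) {m n : ℕ} (hmn : m ≤ n)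
    (hs : ∀ k ∈ Finset.Ico m n, IsHop J c k → shortcutScale J δ (shortcutAt J (c k)) ≤ s)
    {e₀ e₁ : ℝ} (he₀ : 0 ≤ e₀) (he₁ : 0 ≤ e₁)
    (h₀ : IsFarFromHops J δ b c m n (c m) ∨ (a + b) * s ≤ e₀)
    (h₁ : IsFarFromHops J δ b c m n (c n) ∨ (a + b) * s ≤ e₁) :
    dist (c m) (c n) ≤ chainCost J η c m n + e₀ + e₁ := by
  induction hd : n - m using Nat.strong_induction_on generalizing m n e₀ e₁ with
  | _ d ih =>
  by_cases hhop : ∃ k ∈ Finset.Ico m n, IsHop J c k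
  swap
  · push Not at hhop
    linarith [hS.dist_le_chainCost hη hmn hhop]
  obtain ⟨k, hk, hhopk, k₁, k₂, hmk₁, hk₁₂, hk₂n, hp, hq, hfar₁, hfar₂⟩ := hS.exists_cut c hhop
  obtain ⟨i, hSi, -⟩ := exists_mem_of_mem_shortcutAt hhopk.2
  have hA := ih (k₁ - m) (by omega) hmk₁
    (fun j hj => hs j (Finset.Ico_subset_Ico le_rfl (by omega) hj)) he₀ le_rfl
    (h₀.imp_left (·.mono le_rfl (by omega))) (Or.inl hfar₁) rfl
  have hB := ih (n - (k₂ + 1)) (by omega) hk₂n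
    (fun j hj => hs j (Finset.Ico_subset_Ico (by omega) le_rfl hj)) le_rfl he₁
    (Or.inl hfar₂) (h₁.imp_left (·.mono (by omega) le_rfl)) rfl
  have hσ : (a + b) * shortcutScale J δ (shortcutAt J (c k)) ≤ (a + b) * s :=
    mul_le_mul_of_nonneg_left (hs k hk hhopk) (by linarith [hS.a_pos, hS.b_pos])
  have hcost : chainCost J η c m k₁ + chainCost J η c (k₂ + 1) n ≤ chainCost J η c m n := by
    rw [← chainCost_add (by omega : m ≤ k₂ + 1) (by omega : k₂ + 1 ≤ n)]
    linarith [chainCost_mono (J := J) (c := c) (m := m) hη le_rfl (by omega : k₁ ≤ k₂ + 1)]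
  have := hS.dist_le_of_detour hSi hp hq (chainCost_nonneg hη) (chainCost_nonneg hη)
    (h₀.imp (· k hk hhopk) hσ.trans) (h₁.imp (· k hk hhopk) hσ.trans)
    (by simpa using hA) (by simpa using hB)
  linarith

theorem HasShortcuts.shortcutAt_eq_of_chainCost_le (hS : HasShortcuts J δ a₀ a b M)
    (hη : ∀ i, 0 ≤ η i) {s : ℝ} (c : ℕ → X) {m n k k' : ℕ}
    (hcost : chainCost J η c m n ≤ b * s)
    (hk : k ∈ Finset.Ico m n ∧ IsHop J c k ∧ s < shortcutScale J δ (shortcutAt J (c k)))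
    (hk' : k' ∈ Finset.Ico m n ∧ IsHop J c k' ∧ s < shortcutScale J δ (shortcutAt J (c k'))) :
    shortcutAt J (c k) = shortcutAt J (c k') := by
  refine eq_of_eq_of_consecutive (P := fun k =>
    k ∈ Finset.Ico m n ∧ IsHop J c k ∧ s < shortcutScale J δ (shortcutAt J (c k)))
    (fun k => shortcutAt J (c k)) ?_ hk hk'
  rintro k k' hlt ⟨hkI, hhop, hbig⟩ ⟨hk'I, hhop', hbig'⟩ hbetween
  by_contra hne
  rw [Finset.mem_Ico] at hkI hk'I
  obtain ⟨i, hi, -⟩ := exists_mem_of_mem_shortcutAt hhop.2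
  obtain ⟨i', hi', hk'mem⟩ := exists_mem_of_mem_shortcutAt hhop'.2
  have hsub : Finset.Ico (k + 1) k' ⊆ Finset.Ico m n := Finset.Ico_subset_Ico (by omega) hk'I.2.le
  have hsmall : ∀ j ∈ Finset.Ico (k + 1) k', IsHop J c j →
      shortcutScale J δ (shortcutAt J (c j)) ≤ s :=
    fun j hj hhopj => not_lt.mp fun h => hbetween j hj ⟨hsub hj, hhopj, h⟩
  have hfar : ∀ {T : Set X} {i : ℕ} {x : X}, T ∈ J i → x ∈ T → s < shortcutScale J δ T →
      IsFarFromHops J δ b c (k + 1) k' x := fun hTi hx hT =>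
    hS.isFarFromHops_of_mem hTi hx fun j hj hhopj =>
      ⟨fun h => (h ▸ hsmall j hj hhopj).not_gt hT, (hsmall j hj hhopj).trans hT.le⟩
  have hdist := hS.dist_le_chainCost_add hη c hlt hsmall (e₀ := 0) (e₁ := 0) le_rfl le_rfl
    (Or.inl (hfar hi hhop.2 hbig)) (Or.inl (hfar hi' hk'mem hbig'))
  have hgap := hS.mul_min_le_dist hi hi' hne hhop.2 hk'mem
  have hmono := chainCost_mono (J := J) (c := c) hη (by omega : m ≤ k + 1) hk'I.2.le
  have hlt : b * s < b * min (shortcutScale J δ (shortcutAt J (c k)))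
      (shortcutScale J δ (shortcutAt J (c k'))) :=
    mul_lt_mul_of_pos_left (lt_min hbig hbig') hS.b_pos
  linarith

theorem HasShortcuts.dist_le_or_exists_large_shortcut (hS : HasShortcuts J δ a₀ a b M)
    (hη : ∀ i, 0 ≤ η i) {s : ℝ} (hs : 0 ≤ s) (c : ℕ → X) {m n : ℕ} (hmn : m ≤ n)
    (hcost : chainCost J η c m n ≤ b * s) :
    dist (c m) (c n) ≤ chainCost J η c m n + 2 * ((a + b) * s) ∨
      ∃ p q, q ∈ shortcutAt J p ∧ s < shortcutScale J δ (shortcutAt J p) ∧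
        dist (c m) p ≤ chainCost J η c m n + 2 * ((a + b) * s) ∧
        dist q (c n) ≤ chainCost J η c m n + 2 * ((a + b) * s) := by
  have hab : 0 ≤ (a + b) * s := mul_nonneg (by linarith [hS.a_pos, hS.b_pos]) hs
  by_cases hbig : ∃ k ∈ Finset.Ico m n, IsHop J c k ∧ s < shortcutScale J δ (shortcutAt J (c k))
  swap
  · push Not at hbig
    left
    linarith [hS.dist_le_chainCost_add hη c hmn hbig hab hab (Or.inr le_rfl) (Or.inr le_rfl)]
  right
  obtain ⟨k₁, hk₁, hbig₁, hfirst⟩ := exists_first_in_Ico hbig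
  obtain ⟨k₂, hk₂, hbig₂, hlast⟩ := exists_last_in_Ico hbig
  have hS₁₂ := hS.shortcutAt_eq_of_chainCost_le hη c hcost ⟨hk₁, hbig₁⟩ ⟨hk₂, hbig₂⟩
  rw [Finset.mem_Ico] at hk₁ hk₂
  have hA := hS.dist_le_chainCost_add hη c hk₁.1 (e₀ := (a + b) * s) (e₁ := (a + b) * s)
    (fun j hj hhopj => not_lt.mp fun h => hfirst j hj ⟨hhopj, h⟩) hab hab
    (Or.inr le_rfl) (Or.inr le_rfl)
  have hB := hS.dist_le_chainCost_add hη c hk₂.2 (e₀ := (a + b) * s) (e₁ := (a + b) * s)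
    (fun j hj hhopj => not_lt.mp fun h => hlast j hj ⟨hhopj, h⟩) hab hab
    (Or.inr le_rfl) (Or.inr le_rfl)
  refine ⟨c k₁, c (k₂ + 1), hS₁₂ ▸ hbig₂.1.2, hbig₁.2, ?_, ?_⟩
  · linarith [chainCost_mono (J := J) (c := c) (m := m) hη le_rfl hk₁.2.le]
  · linarith [chainCost_mono (J := J) (c := c) (n := n) hη (by omega : m ≤ k₂ + 1) le_rfl]

end Chain

section DEta

variable {X : Type*} [MetricSpace X] {J : ℕ → Set (Set X)} {δ η : ℕ → ℝ} {a₀ a b M : ℝ}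

theorem bddBelow_chainCosts (hη : ∀ i, 0 ≤ η i) (x y : X) :
    BddBelow {t : ℝ | ∃ (n : ℕ) (c : ℕ → X), c 0 = x ∧ c n = y ∧
      t = ∑ k ∈ Finset.range n, rhoEta J η (c k) (c (k + 1))} :=
  ⟨0, by rintro _ ⟨n, c, -, -, rfl⟩; exact Finset.sum_nonneg fun _ _ => rhoEta_nonneg hη _ _⟩

theorem rhoEta_mem_chainCosts (x y : X) :
    rhoEta J η x y ∈ {t : ℝ | ∃ (n : ℕ) (c : ℕ → X), c 0 = x ∧ c n = y ∧
      t = ∑ k ∈ Finset.range n, rhoEta J η (c k) (c (k + 1))} :=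
  ⟨1, fun k => if k = 0 then x else y, by simp, by simp, by simp⟩

theorem dEta_le_rhoEta (hη : ∀ i, 0 ≤ η i) (x y : X) : dEta J η x y ≤ rhoEta J η x y :=
  csInf_le (bddBelow_chainCosts hη x y) (rhoEta_mem_chainCosts x y)

theorem exists_chainCost_lt_of_dEta_lt (hη : ∀ i, 0 ≤ η i) {x y : X} {t : ℝ}
    (h : dEta J η x y < t) :
    ∃ (n : ℕ) (c : ℕ → X), c 0 = x ∧ c n = y ∧ chainCost J η c 0 n < t := by
  obtain ⟨_, ⟨n, c, hc0, hcn, rfl⟩, hlt⟩ :=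
    (csInf_lt_iff (bddBelow_chainCosts hη x y) ⟨_, rhoEta_mem_chainCosts x y⟩).mp h
  exact ⟨n, c, hc0, hcn, by rwa [chainCost, ← Finset.range_eq_Ico]⟩

theorem HasShortcuts.dist_le_or_exists_large_shortcut_of_dEta_le
    (hS : HasShortcuts J δ a₀ a b M) (hη : ∀ i, 0 ≤ η i) {r s : ℝ} (hs : 0 ≤ s)
    (hrs : r < b * s) {x z : X} (hz : dEta J η x z ≤ r) :
    dist z x ≤ (2 * a + 3 * b) * s ∨
      ∃ p q, dist x p ≤ (2 * a + 3 * b) * s ∧ q ∈ shortcutAt J p ∧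
        s < shortcutScale J δ (shortcutAt J p) ∧ dist z q ≤ (2 * a + 3 * b) * s := by
  obtain ⟨n, c, rfl, rfl, hcost⟩ := exists_chainCost_lt_of_dEta_lt hη (hz.trans_lt hrs)
  have hR : chainCost J η c 0 n + 2 * ((a + b) * s) ≤ (2 * a + 3 * b) * s := by linarith
  rcases hS.dist_le_or_exists_large_shortcut hη hs c n.zero_le hcost.le with
    h | ⟨p, q, hq, hp, hxp, hqz⟩
  · exact Or.inl (dist_comm (c n) (c 0) ▸ h.trans hR)
  · exact Or.inr ⟨p, q, hxp.trans hR, hq, hp, dist_comm (c n) q ▸ hqz.trans hR⟩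

theorem HasShortcuts.pairwise_lt_dist (hS : HasShortcuts J δ a₀ a b M) {s : ℝ} (hs : 0 ≤ s) :
    {p : X | p ∈ shortcutAt J p ∧ s < shortcutScale J δ (shortcutAt J p)}.Pairwise
      fun p q => min a₀ b * s < dist p q := by
  rintro p ⟨hp, hσp⟩ q ⟨hq, hσq⟩ hpq
  obtain ⟨i, hi, -⟩ := exists_mem_of_mem_shortcutAt hp
  obtain ⟨j, hj, -⟩ := exists_mem_of_mem_shortcutAt hq
  by_cases heq : shortcutAt J p = shortcutAt J q
  · have := hS.mul_shortcutScale_le_dist hi hp (heq ▸ hq) hpq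
    nlinarith [min_le_left a₀ b, hS.a₀_pos]
  · have := hS.mul_min_le_dist hi hj heq hp hq
    have hmin : s < min (shortcutScale J δ (shortcutAt J p)) (shortcutScale J δ (shortcutAt J q)) :=
      lt_min hσp hσq
    nlinarith [min_le_right a₀ b, hS.b_pos]

end DEta

section Doubling

variable {X : Type*} [MetricSpace X] {N : ℕ}

def IsMetricDoubling (X : Type*) [MetricSpace X] (N : ℕ) : Prop :=
  ∀ (x : X) (r : ℝ), 0 < r → ∃ t : Finset X, t.card ≤ N ∧
    Metric.closedBall x r ⊆ ⋃ y ∈ t, Metric.closedBall y (r / 2)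

theorem IsMetricDoubling.exists_cover_pow (hN : IsMetricDoubling X N) (K : ℕ) (x : X) {R : ℝ}
    (hR : 0 < R) : ∃ T : Finset X, T.card ≤ N ^ K ∧
      Metric.closedBall x R ⊆ ⋃ y ∈ T, Metric.closedBall y (R / 2 ^ K) := by
  classical
  induction K with
  | zero => exact ⟨{x}, by simp, by simp⟩
  | succ K ih =>
    obtain ⟨T, hTcard, hT⟩ := ih
    choose F hFcard hF using fun y : X => hN y (R / 2 ^ K) (by positivity)
    refine ⟨T.biUnion F, ?_, fun z hz => ?_⟩
    · calc (T.biUnion F).card ≤ ∑ y ∈ T, (F y).card := Finset.card_biUnion_le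
        _ ≤ T.card * N := Finset.sum_le_card_nsmul _ _ _ fun y _ => hFcard y
        _ ≤ N ^ K * N := Nat.mul_le_mul_right N hTcard
        _ = N ^ (K + 1) := (pow_succ N K).symm
    · obtain ⟨y, hy, hzy⟩ := mem_iUnion₂.mp (hT hz)
      obtain ⟨w, hw, hzw⟩ := mem_iUnion₂.mp (hF y hzy)
      exact mem_iUnion₂.mpr ⟨w, Finset.mem_biUnion.mpr ⟨y, hy, hw⟩, by rwa [pow_succ, ← div_div]⟩

theorem IsMetricDoubling.encard_le_pow (hN : IsMetricDoubling X N) {x : X} {R ε : ℝ}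
    (hR : 0 < R) {K : ℕ} (hK : 2 * R ≤ 2 ^ K * ε) {Y : Set X} (hY : Y ⊆ Metric.closedBall x R)
    (hsep : Y.Pairwise fun p q => ε < dist p q) : Y.encard ≤ N ^ K := by
  obtain ⟨T, hTcard, hT⟩ := hN.exists_cover_pow K x hR
  choose! f hfT hf using fun p (hp : p ∈ Y) => mem_iUnion₂.mp (hT (hY hp))
  have hinj : InjOn f Y := by
    intro p hp q hq hpq
    by_contra hne
    have hp' := Metric.mem_closedBall.mp (hf p hp)
    have hq' := Metric.mem_closedBall'.mp (hf q hq)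
    have h2 : 2 * (R / 2 ^ K) ≤ ε := by
      rw [mul_div_assoc', div_le_iff₀ (by positivity)]; linarith
    linarith [hsep hp hq hne, dist_triangle p (f p) q, hpq ▸ hq']
  calc Y.encard ≤ (T : Set X).encard := encard_le_encard_of_injOn (fun p hp => hfT p hp) hinj
    _ = T.card := encard_coe_eq_coe_finsetCard T
    _ ≤ N ^ K := by exact_mod_cast hTcard

end Doubling

section Covering

variable {X : Type*} [MetricSpace X] {J : ℕ → Set (Set X)} {δ η : ℕ → ℝ} {a₀ a b M : ℝ}
  {N : ℕ}

theorem HasShortcuts.exists_finset_large_shortcut (hS : HasShortcuts J δ a₀ a b M)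
    (hN : IsMetricDoubling X N) {s R : ℝ} (hs : 0 ≤ s) (hR : 0 < R) {K : ℕ}
    (hK : 2 * R ≤ 2 ^ K * (min a₀ b * s)) (x : X) :
    ∃ F : Finset X, F.card ≤ N ^ K ∧ ∀ p, dist x p ≤ R → p ∈ shortcutAt J p →
      s < shortcutScale J δ (shortcutAt J p) → p ∈ F := by
  set Y := {p | dist x p ≤ R ∧ p ∈ shortcutAt J p ∧ s < shortcutScale J δ (shortcutAt J p)}
  have hY : Y.encard ≤ N ^ K := hN.encard_le_pow hR hK
    (fun p hp => Metric.mem_closedBall'.mpr hp.1) ((hS.pairwise_lt_dist hs).mono fun p hp => hp.2)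
  have hYfin := finite_of_encard_le_coe hY
  refine ⟨hYfin.toFinset, ?_, fun p h₁ h₂ h₃ => hYfin.mem_toFinset.mpr ⟨h₁, h₂, h₃⟩⟩
  rw [hYfin.encard_eq_coe_toFinset_card] at hY
  exact_mod_cast hY

theorem HasShortcuts.card_insert_biUnion_le [DecidableEq X] (hS : HasShortcuts J δ a₀ a b M)
    (x : X) (F : Finset X) :
    ((insert x (F.biUnion fun p => (hS.finite_shortcutAt p).toFinset)).card : ℝ) ≤
      F.card * M + 1 := by
  calc ((insert x (F.biUnion fun p => (hS.finite_shortcutAt p).toFinset)).card : ℝ)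
      ≤ ∑ p ∈ F, ((hS.finite_shortcutAt p).toFinset.card : ℝ) + 1 := by
        exact_mod_cast (Finset.card_insert_le _ _).trans (Nat.add_le_add_right
          Finset.card_biUnion_le 1)
    _ ≤ ∑ _p ∈ F, M + 1 := by
        gcongr with p
        rw [← ncard_eq_toFinset_card _ (hS.finite_shortcutAt p)]
        exact hS.ncard_shortcutAt_le p
    _ = F.card * M + 1 := by rw [Finset.sum_const, nsmul_eq_mul]

theorem HasShortcuts.dEta_le_subset [DecidableEq X] (hS : HasShortcuts J δ a₀ a b M)
    (hη : ∀ i, 0 ≤ η i) {r s : ℝ} (hs : 0 ≤ s) (hrs : r < b * s) (x : X) {F : Finset X}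
    (hF : ∀ p, dist x p ≤ (2 * a + 3 * b) * s → p ∈ shortcutAt J p →
      s < shortcutScale J δ (shortcutAt J p) → p ∈ F) :
    {z | dEta J η x z ≤ r} ⊆ ⋃ y ∈ insert x (F.biUnion fun p => (hS.finite_shortcutAt p).toFinset),
      Metric.closedBall y ((2 * a + 3 * b) * s) := by
  intro z hz
  rcases hS.dist_le_or_exists_large_shortcut_of_dEta_le hη hs hrs hz with
    h | ⟨p, q, hxp, hq, hσ, hzq⟩
  · exact mem_iUnion₂.mpr ⟨x, Finset.mem_insert_self _ _, Metric.mem_closedBall.mpr h⟩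
  · obtain ⟨-, -, hp⟩ := exists_mem_of_mem_shortcutAt hq
    refine mem_iUnion₂.mpr ⟨q, Finset.mem_insert_of_mem (Finset.mem_biUnion.mpr ⟨p, ?_, ?_⟩),
      Metric.mem_closedBall.mpr hzq⟩
    exacts [hF p hxp hp hσ, (hS.finite_shortcutAt p).mem_toFinset.mpr hq]

end Covering

/-- If `X` is metric doubling and has shortcuts, then the identity map
`(X, d) → (X, d_η)` is David–Semmes regular: it is `1`-Lipschitz and there is `C ≥ 1` such
that every `d_η`-ball of radius `r` is contained in a union of at most `C` `d`-balls of
radius `C r`. -/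
theorem stmt13 {X : Type*} [MetricSpace X] (J : ℕ → Set (Set X)) (δ : ℕ → ℝ)
    (a₀ a b M : ℝ) (hS : HasShortcuts J δ a₀ a b M)
    (η : ℕ → ℝ) (hη : ∀ i, 0 < η i ∧ η i ≤ 1)
    (hdoub : ∃ N : ℕ, ∀ (x : X) (r : ℝ), 0 < r → ∃ t : Finset X, t.card ≤ N ∧
      Metric.closedBall x r ⊆ ⋃ y ∈ t, Metric.closedBall y (r / 2)) :
    (∀ x y : X, dEta J η x y ≤ dist x y) ∧
    ∃ C : ℝ, 1 ≤ C ∧ ∀ (x : X) (r : ℝ), 0 < r →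
      ∃ t : Finset X, (t.card : ℝ) ≤ C ∧
        {z : X | dEta J η x z ≤ r} ⊆ ⋃ y ∈ t, Metric.closedBall y (C * r) := by
  classical
  obtain ⟨N, hN : IsMetricDoubling X N⟩ := hdoub
  have hη₀ : ∀ i, 0 ≤ η i := fun i => (hη i).1.le
  have hab : 0 < 2 * a + 3 * b := by linarith [hS.a_pos, hS.b_pos]
  obtain ⟨K, hK⟩ := pow_unbounded_of_one_lt (2 * (2 * a + 3 * b) / min a₀ b) one_lt_two
  rw [div_lt_iff₀ (lt_min hS.a₀_pos hS.b_pos)] at hK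
  set C := max (2 * (2 * a + 3 * b) / b) (N ^ K * M + 1)
  have hNKM : 0 ≤ (N : ℝ) ^ K * M := mul_nonneg (by positivity) hS.M_pos.le
  refine ⟨fun x y => (dEta_le_rhoEta hη₀ x y).trans (rhoEta_le_dist (fun i => (hη i).2) x y),
    C, le_max_of_le_right (by linarith), fun x r hr => ?_⟩
  set s := 2 * r / b
  have hs : 0 < s := div_pos (by linarith) hS.b_pos
  have hR : (2 * a + 3 * b) * s ≤ C * r := by
    calc (2 * a + 3 * b) * s = 2 * (2 * a + 3 * b) / b * r := by ring
      _ ≤ C * r := mul_le_mul_of_nonneg_right (le_max_left _ _) hr.le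
  obtain ⟨F, hFcard, hF⟩ := hS.exists_finset_large_shortcut hN hs.le (mul_pos hab hs)
    (by nlinarith) x
  refine ⟨_, (hS.card_insert_biUnion_le x F).trans ?_, (hS.dEta_le_subset hη₀ hs.le
    (by rw [mul_div_cancel₀ _ hS.b_pos.ne']; linarith) x hF).trans
    (iUnion₂_mono fun y _ => Metric.closedBall_subset_closedBall hR)⟩
  have : (F.card : ℝ) * M ≤ N ^ K * M := by gcongr; exacts [hS.M_pos.le, by exact_mod_cast hFcard]
  linarith [le_max_right (2 * (2 * a + 3 * b) / b) (N ^ K * M + 1)]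
end

section
/- Let X be a metric space, E, F ⊆ X, and γ : C → E ∪ F a continuous map from a nonempty closed set C ⊆ ℝ whose image meets both E and F. Then gap(γ) ≥ d(E, F). -/
/-!
If `d(E, F) > 0`, the closures of `E` and `F` are disjoint, so `C` splits into the disjoint closed
sets `S = C ∩ γ⁻¹(closure E)` and `T = C ∩ γ⁻¹(closure F)`, both nonempty. Taking the last point
`u` of `S` before a point of `T`, and then the first point `v` of `T` after `u`, gives a
complementary gap `(u, v)` of `C` whose endpoints lie in `closure E` and `closure F`, so this single
term of `gap(γ)` is already at least `d(E, F)`.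
-/

open Set

section Metric

variable {X : Type*} [PseudoEMetricSpace X]

theorem iInf_edist_le_edist_of_mem_closure {E F : Set X} {p q : X} (hp : p ∈ closure E)
    (hq : q ∈ closure F) : (⨅ x ∈ E, ⨅ y ∈ F, edist x y) ≤ edist p q :=
  calc (⨅ x ∈ E, ⨅ y ∈ F, edist x y) ≤ ⨅ x ∈ E, edist q x :=
        iInf₂_mono fun x _ => by
          change Metric.infEDist x F ≤ _
          rw [edist_comm, ← Metric.infEDist_closure]
          exact Metric.infEDist_le_edist_of_mem hq
    _ = Metric.infEDist q (closure E) := Metric.infEDist_closure.symm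
    _ ≤ edist p q := by
        rw [edist_comm]
        exact Metric.infEDist_le_edist_of_mem hp

theorem disjoint_closure_of_iInf_edist_ne_zero {E F : Set X}
    (hd : (⨅ x ∈ E, ⨅ y ∈ F, edist x y) ≠ 0) : Disjoint (closure E) (closure F) :=
  disjoint_left.2 fun x hE hF =>
    hd (le_antisymm (by simpa using iInf_edist_le_edist_of_mem_closure hE hF) bot_le)

end Metric

section Order

variable {α : Type*} [ConditionallyCompleteLinearOrder α] [TopologicalSpace α] [OrderTopology α]

theorem IsClosed.exists_mem_disjoint_Ioc {S : Set α} (hS : IsClosed S) {s t : α} (hs : s ∈ S)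
    (hst : s ≤ t) : ∃ u ∈ S, u ≤ t ∧ Disjoint (Ioc u t) S := by
  obtain ⟨u, ⟨huS, hsu, hut⟩, hmax⟩ :=
    (isCompact_Icc.inter_left hS).exists_isGreatest ⟨s, hs, le_rfl, hst⟩
  exact ⟨u, huS, hut, disjoint_right.2 fun w hwS hw =>
    hw.1.not_ge (hmax ⟨hwS, hsu.trans hw.1.le, hw.2⟩)⟩

theorem IsClosed.exists_mem_disjoint_Ico {T : Set α} (hT : IsClosed T) {u t : α} (ht : t ∈ T)
    (hut : u ≤ t) : ∃ v ∈ T, u ≤ v ∧ v ≤ t ∧ Disjoint (Ico u v) T := by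
  obtain ⟨v, ⟨hvT, huv, hvt⟩, hmin⟩ :=
    (isCompact_Icc.inter_left hT).exists_isLeast ⟨t, ht, hut, le_rfl⟩
  exact ⟨v, hvT, huv, hvt, disjoint_right.2 fun w hwT hw =>
    hw.2.not_ge (hmin ⟨hwT, hw.1, hw.2.le.trans hvt⟩)⟩

theorem exists_Ioo_disjoint_union_of_lt {S T : Set α} (hS : IsClosed S) (hT : IsClosed T)
    (hST : Disjoint S T) {s t : α} (hs : s ∈ S) (ht : t ∈ T) (hst : s < t) :
    ∃ u ∈ S, ∃ v ∈ T, u < v ∧ Disjoint (Ioo u v) (S ∪ T) := by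
  obtain ⟨u, huS, hut, hS_after⟩ := hS.exists_mem_disjoint_Ioc hs hst.le
  obtain ⟨v, hvT, huv, hvt, hT_before⟩ := hT.exists_mem_disjoint_Ico ht hut
  refine ⟨u, huS, v, hvT, huv.lt_of_ne (hST.ne_of_mem huS hvT), disjoint_union_right.2
    ⟨hS_after.mono_left (Ioo_subset_Ioc_self.trans (Ioc_subset_Ioc_right hvt)),
     hT_before.mono_left Ioo_subset_Ico_self⟩⟩

theorem exists_Ioo_disjoint_union {S T : Set α} (hS : IsClosed S) (hT : IsClosed T)
    (hST : Disjoint S T) {s t : α} (hs : s ∈ S) (ht : t ∈ T) :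
    ∃ u v, u < v ∧ Disjoint (Ioo u v) (S ∪ T) ∧ (u ∈ S ∧ v ∈ T ∨ u ∈ T ∧ v ∈ S) := by
  rcases (hST.ne_of_mem hs ht).lt_or_gt with hst | hts
  · obtain ⟨u, hu, v, hv, huv, hgap⟩ := exists_Ioo_disjoint_union_of_lt hS hT hST hs ht hst
    exact ⟨u, v, huv, hgap, .inl ⟨hu, hv⟩⟩
  · obtain ⟨u, hu, v, hv, huv, hgap⟩ := exists_Ioo_disjoint_union_of_lt hT hS hST.symm ht hs hts
    exact ⟨u, v, huv, union_comm S T ▸ hgap, .inr ⟨hu, hv⟩⟩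

end Order

theorem stmt14_general {X : Type*} [MetricSpace X] (E F : Set X) (C : Set ℝ)
    (hC : IsClosed C) (γ : ℝ → X)
    (hγ : ContinuousOn γ C) (hmap : Set.MapsTo γ C (E ∪ F))
    (hE : ∃ t ∈ C, γ t ∈ E) (hF : ∃ t ∈ C, γ t ∈ F) :
    (⨅ x ∈ E, ⨅ y ∈ F, edist x y) ≤
      ∑' q : {q : ℝ × ℝ // q.1 ∈ C ∧ q.2 ∈ C ∧ q.1 < q.2 ∧ Set.Ioo q.1 q.2 ∩ C = ∅},
        edist (γ (q : ℝ × ℝ).1) (γ (q : ℝ × ℝ).2) := by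
  obtain ⟨s, hsC, hsE⟩ := hE
  obtain ⟨t, htC, htF⟩ := hF
  by_cases hd : (⨅ x ∈ E, ⨅ y ∈ F, edist x y) = 0
  · exact hd ▸ bot_le
  have hST : Disjoint (C ∩ γ ⁻¹' closure E) (C ∩ γ ⁻¹' closure F) :=
    ((disjoint_closure_of_iInf_edist_ne_zero hd).preimage γ).mono
      inter_subset_right inter_subset_right
  have hC_sub : C ⊆ (C ∩ γ ⁻¹' closure E) ∪ (C ∩ γ ⁻¹' closure F) := fun w hw =>
    (hmap hw).imp (fun h => ⟨hw, subset_closure h⟩) (fun h => ⟨hw, subset_closure h⟩)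
  obtain ⟨u, v, huv, hgap, hends⟩ :=
    exists_Ioo_disjoint_union (hγ.preimage_isClosed_of_isClosed hC isClosed_closure)
      (hγ.preimage_isClosed_of_isClosed hC isClosed_closure) hST
      ⟨hsC, subset_closure hsE⟩ ⟨htC, subset_closure htF⟩
  have hgapC : Ioo u v ∩ C = ∅ := (hgap.mono_right hC_sub).inter_eq
  obtain ⟨huC, hvC, hle⟩ : u ∈ C ∧ v ∈ C ∧
      (⨅ x ∈ E, ⨅ y ∈ F, edist x y) ≤ edist (γ u) (γ v) := by
    rcases hends with ⟨hu, hv⟩ | ⟨hu, hv⟩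
    · exact ⟨hu.1, hv.1, iInf_edist_le_edist_of_mem_closure hu.2 hv.2⟩
    · exact ⟨hu.1, hv.1, edist_comm (γ u) (γ v) ▸ iInf_edist_le_edist_of_mem_closure hv.2 hu.2⟩
  exact hle.trans (ENNReal.le_tsum
    (⟨(u, v), huC, hvC, huv, hgapC⟩ :
      {q : ℝ × ℝ // q.1 ∈ C ∧ q.2 ∈ C ∧ q.1 < q.2 ∧ Set.Ioo q.1 q.2 ∩ C = ∅}))

/-- Let `γ : C → E ∪ F` be continuous on a nonempty closed set `C ⊆ ℝ`,
with image meeting both `E` and `F`. Then `gap(γ) ≥ d(E, F)`, where `gap(γ)` is the sum of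
`d(γ a, γ b)` over the complementary gaps `(a, b)` of `C` (pairs `a < b` in `C` with
`(a, b) ∩ C = ∅`). -/
theorem stmt14 {X : Type*} [MetricSpace X] (E F : Set X) (C : Set ℝ)
    (hC : IsClosed C) (hCne : C.Nonempty) (γ : ℝ → X)
    (hγ : ContinuousOn γ C) (hmap : Set.MapsTo γ C (E ∪ F))
    (hE : ∃ t ∈ C, γ t ∈ E) (hF : ∃ t ∈ C, γ t ∈ F) :
    (⨅ x ∈ E, ⨅ y ∈ F, edist x y) ≤
      ∑' q : {q : ℝ × ℝ // q.1 ∈ C ∧ q.2 ∈ C ∧ q.1 < q.2 ∧ Set.Ioo q.1 q.2 ∩ C = ∅},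
        edist (γ (q : ℝ × ℝ).1) (γ (q : ℝ × ℝ).2) :=
  stmt14_general E F C hC γ hγ hmap hE hF
end

section
/- Let X be a metric space, x ∈ X, n ∈ ℕ, and φ : X → ℝⁿ Lipschitz such that Lip(⟨v, φ⟩; x) > 0 for every v ∈ ℝⁿ \ {0}. Then there is a constant c > 0 such that for every Banach space Y and every linear map T : ℝⁿ → Y, Lip(T∘φ; x) ≥ c·‖T‖. -/
open Filter
open scoped ENNReal NNReal Topology

-- Unlike `limsup_add_const`, no `NeBot` assumption: `𝓝[≠] x` is `⊥` at isolated points.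
lemma ENNReal.limsup_add_const_le {α : Type*} (f : Filter α) (u : α → ℝ≥0∞) (c : ℝ≥0∞) :
    limsup (fun y => u y + c) f ≤ limsup u f + c := by
  rw [limsup_eq, limsup_eq, ENNReal.sInf_add]
  refine le_iInf₂ fun a ha => sInf_le ?_
  filter_upwards [ha] with y h using add_le_add_left h c

section pLip

variable {X : Type*} [MetricSpace X] {x : X}

lemma LipschitzWith.pLip_comp_le {E F : Type*} [MetricSpace E] [MetricSpace F] {g : E → F}
    {C : ℝ≥0} (hg : LipschitzWith C g) (f : X → E) :
    pLip (fun y => g (f y)) x ≤ C * pLip f x := by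
  rw [pLip, pLip, ← ENNReal.limsup_const_mul_of_ne_top ENNReal.coe_ne_top]
  refine limsup_le_limsup (Eventually.of_forall fun y => ?_)
  dsimp only
  rw [← mul_div_assoc]
  exact ENNReal.div_le_div_right (hg.edist_le_mul _ _) _

lemma pLip_add_le_of_lipschitzWith {E : Type*} [NormedAddCommGroup E] {f g : X → E} {C : ℝ≥0}
    (hg : LipschitzWith C g) : pLip (fun y => f y + g y) x ≤ pLip f x + C := by
  refine le_trans (limsup_le_limsup (Eventually.of_forall fun y => ?_))
    (ENNReal.limsup_add_const_le _ _ C)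
  calc edist (f x + g x) (f y + g y) / edist x y
      ≤ (edist (f x) (f y) + C * edist x y) / edist x y := by
        gcongr
        exact (edist_add_add_le _ _ _ _).trans (add_le_add_right (hg.edist_le_mul x y) _)
    _ ≤ edist (f x) (f y) / edist x y + C := by
        rw [ENNReal.add_div]
        exact add_le_add_right (ENNReal.div_le_of_le_mul le_rfl) _

lemma pLip_const_smul {𝕜 E : Type*} [NormedField 𝕜] [NormedAddCommGroup E] [NormedSpace 𝕜 E]
    (f : X → E) (r : 𝕜) :
    pLip (fun y => r • f y) x = ‖r‖₊ * pLip f x := by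
  rw [pLip, pLip, ← ENNReal.limsup_const_mul_of_ne_top ENNReal.coe_ne_top]
  simp only [edist_smul₀, ENNReal.smul_def, smul_eq_mul, mul_div_assoc]

end pLip

lemma exists_pos_mul_norm_le_of_continuous_of_smul {E : Type*} [NormedAddCommGroup E]
    [NormedSpace ℝ E] [FiniteDimensional ℝ E] {F : E → ℝ≥0∞} (hF : Continuous F)
    (hsmul : ∀ (t : ℝ) v, F (t • v) = ‖t‖₊ * F v) (hpos : ∀ v, v ≠ 0 → 0 < F v) :
    ∃ c : ℝ, 0 < c ∧ ∀ v, ENNReal.ofReal (c * ‖v‖) ≤ F v := by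
  rcases subsingleton_or_nontrivial E with hE | hE
  · exact ⟨1, one_pos, fun v => by simp [Subsingleton.elim v 0]⟩
  obtain ⟨v₀, hv₀, hmin⟩ := (isCompact_sphere (0 : E) 1).exists_isMinOn
    (NormedSpace.sphere_nonempty.mpr zero_le_one) hF.continuousOn
  have hv₀ : v₀ ≠ 0 := ne_zero_of_mem_unit_sphere ⟨v₀, hv₀⟩
  obtain ⟨c, hc0, hc⟩ := ENNReal.lt_iff_exists_nnreal_btwn.1 (hpos v₀ hv₀)
  refine ⟨c, mod_cast hc0, fun v => ?_⟩
  rcases eq_or_ne v 0 with rfl | hv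
  · simp
  have hu : ‖v‖⁻¹ • v ∈ Metric.sphere (0 : E) 1 := by
    simp [norm_smul, inv_mul_cancel₀ (norm_ne_zero_iff.2 hv)]
  calc ENNReal.ofReal (c * ‖v‖) = ‖‖v‖‖₊ * c := by
        rw [mul_comm, ENNReal.ofReal_mul (norm_nonneg v), ENNReal.ofReal_coe_nnreal,
          nnnorm_norm, ofReal_norm]
        rfl
    _ ≤ ‖‖v‖‖₊ * F (‖v‖⁻¹ • v) := by gcongr; exact hc.le.trans (hmin hu)
    _ = F v := by
        rw [← hsmul, smul_inv_smul₀ (norm_ne_zero_iff.2 hv)]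

section Inner

variable {X E : Type*} [MetricSpace X] [NormedAddCommGroup E] [InnerProductSpace ℝ E] {x : X}

lemma pLip_inner_le_add {φ : X → E} {K : ℝ≥0} (hφ : LipschitzWith K φ) (v w : E) :
    pLip (fun y => inner ℝ v (φ y)) x ≤ pLip (fun y => inner ℝ w (φ y)) x + K * edist v w := by
  have hnorm : ‖innerSL ℝ (v - w)‖₊ = ‖v - w‖₊ := Subtype.ext (innerSL_apply_norm ℝ _)
  have hvw : LipschitzWith (‖v - w‖₊ * K) fun y => inner ℝ (v - w) (φ y) :=
    hnorm ▸ (innerSL ℝ (v - w)).lipschitz.comp hφ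
  have h := pLip_add_le_of_lipschitzWith (f := fun y => inner ℝ w (φ y)) (x := x) hvw
  simp only [inner_sub_left, add_sub_cancel] at h
  rwa [ENNReal.coe_mul, mul_comm, ← nndist_eq_nnnorm, ← edist_nndist] at h

lemma exists_pos_mul_norm_le_pLip_inner [FiniteDimensional ℝ E] {φ : X → E} {K : ℝ≥0}
    (hφ : LipschitzWith K φ) (hpos : ∀ v : E, v ≠ 0 → 0 < pLip (fun y => inner ℝ v (φ y)) x) :
    ∃ c : ℝ, 0 < c ∧ ∀ w : E, ENNReal.ofReal (c * ‖w‖) ≤ pLip (fun y => inner ℝ w (φ y)) x := by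
  refine exists_pos_mul_norm_le_of_continuous_of_smul
    (continuous_of_le_add_edist K ENNReal.coe_ne_top (pLip_inner_le_add hφ))
    (fun t v => ?_) hpos
  simp only [real_inner_smul_left]
  exact pLip_const_smul _ t

lemma pLip_inner_toDual_symm_le [CompleteSpace E] {Y : Type*} [NormedAddCommGroup Y]
    [NormedSpace ℝ Y] (φ : X → E) (T : E →L[ℝ] Y) (ξ : StrongDual ℝ Y) :
    pLip (fun y => inner ℝ ((InnerProductSpace.toDual ℝ E).symm (ξ.comp T)) (φ y)) x
      ≤ ‖ξ‖₊ * pLip (fun y => T (φ y)) x := by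
  simp only [InnerProductSpace.toDual_symm_apply, ContinuousLinearMap.comp_apply]
  exact ξ.lipschitz.pLip_comp_le _

end Inner

lemma ContinuousLinearMap.opNorm_le_of_comp_le {𝕜 E Y : Type*} [RCLike 𝕜]
    [NormedAddCommGroup E] [NormedSpace 𝕜 E] [NormedAddCommGroup Y] [NormedSpace 𝕜 Y]
    (T : E →L[𝕜] Y) {M : ℝ} (hM : 0 ≤ M) (h : ∀ ξ : StrongDual 𝕜 Y, ‖ξ.comp T‖ ≤ M * ‖ξ‖) :
    ‖T‖ ≤ M :=
  T.opNorm_le_bound hM fun u => NormedSpace.norm_le_dual_bound 𝕜 _ (by positivity) fun ξ =>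
    calc ‖ξ (T u)‖ ≤ ‖ξ.comp T‖ * ‖u‖ := (ξ.comp T).le_opNorm u
      _ ≤ M * ‖u‖ * ‖ξ‖ := by nlinarith [h ξ, norm_nonneg u]

/-- If `φ : X → ℝⁿ` is Lipschitz and `Lip(⟨v, φ⟩; x) > 0` for every
`v ≠ 0`, then there is `c > 0` such that for every Banach space `Y` and linear map
`T : ℝⁿ → Y` one has `Lip(T ∘ φ; x) ≥ c ‖T‖`. -/
theorem stmt15 {X : Type*} [MetricSpace X] (x : X) (n : ℕ)
    (φ : X → EuclideanSpace ℝ (Fin n)) (K : ℝ≥0) (hφ : LipschitzWith K φ)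
    (hnd : ∀ v : EuclideanSpace ℝ (Fin n), v ≠ 0 →
      0 < pLip (fun y => (inner ℝ v (φ y) : ℝ)) x) :
    ∃ c : ℝ, 0 < c ∧
      ∀ (Y : Type*) [NormedAddCommGroup Y] [NormedSpace ℝ Y]
        (T : EuclideanSpace ℝ (Fin n) →L[ℝ] Y),
        ENNReal.ofReal (c * ‖T‖) ≤ pLip (fun y => T (φ y)) x := by
  obtain ⟨c, hc, hcoer⟩ := exists_pos_mul_norm_le_pLip_inner hφ hnd
  refine ⟨c, hc, fun Y _ _ T => ?_⟩
  set L := pLip (fun y => T (φ y)) x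
  rcases eq_or_ne L ⊤ with hL | hL
  · simp [hL]
  rw [← ENNReal.ofReal_toReal hL]
  refine ENNReal.ofReal_le_ofReal ((le_div_iff₀' hc).1 ?_)
  refine T.opNorm_le_of_comp_le (by positivity) fun ξ => ?_
  have hξ := (hcoer _).trans (pLip_inner_toDual_symm_le φ T ξ)
  rw [LinearIsometryEquiv.norm_map, ENNReal.ofReal_le_iff_le_toReal
    (ENNReal.mul_ne_top ENNReal.coe_ne_top hL), ENNReal.toReal_mul, ENNReal.coe_toReal,
    coe_nnnorm] at hξ
  rw [div_mul_eq_mul_div, le_div_iff₀' hc]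
  linarith
end

section
/- Let X be a metric space, C₁ ≥ 1, C₂ > 0, and suppose A₁, A₂ ⊆ X are nonempty subsets such that for every r ≥ r₀ every r-component of A₁ has diameter at most C₁·r and every r-component of A₂ has diameter at most C₂·r. Then there is a constant C depending only on C₁ and C₂ such that for every r ≥ r₀, every r-component of A₁ ∪ A₂ has diameter at most C·r. -/
/-- `x` and `y` are joined by an `r`-chain inside `A`. -/
def RChainConn {X : Type*} [MetricSpace X] (A : Set X) (r : ℝ) (x y : X) : Prop :=
  ∃ (n : ℕ) (c : ℕ → X), c 0 = x ∧ c n = y ∧ (∀ k ≤ n, c k ∈ A) ∧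
    ∀ k < n, dist (c k) (c (k + 1)) ≤ r

lemma rchain_single {X : Type*} [MetricSpace X] {A : Set X} {r : ℝ} {x : X} (hx : x ∈ A) :
    RChainConn A r x x :=
  ⟨0, fun _ => x, rfl, rfl, fun _ _ => hx, fun k hk => absurd hk (Nat.not_lt_zero k)⟩

lemma rchain_cons {X : Type*} [MetricSpace X] {A : Set X} {r : ℝ} {x y z : X}
    (hx : x ∈ A) (hxy : dist x y ≤ r) (h : RChainConn A r y z) : RChainConn A r x z := by
  obtain ⟨n, c, h0, hn, hmem, hd⟩ := h
  refine ⟨n + 1, fun i => if i = 0 then x else c (i - 1), by simp, by simp [hn], ?_, ?_⟩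
  · intro k hk
    rcases k with _ | k
    · simpa using hx
    · simpa using hmem k (by omega)
  · intro k hk
    rcases k with _ | k
    · simpa [h0] using hxy
    · simpa using hd k (by omega)

/-- extract a sub-segment chain -/
lemma rchain_seg {X : Type*} [MetricSpace X] {A : Set X} {r : ℝ} {c : ℕ → X} {a b : ℕ}
    (hab : a ≤ b) (hmem : ∀ k, a ≤ k → k ≤ b → c k ∈ A)
    (hd : ∀ k, a ≤ k → k < b → dist (c k) (c (k + 1)) ≤ r) :
    RChainConn A r (c a) (c b) := by
  refine ⟨b - a, fun i => c (a + i), by simp, ?_, ?_, ?_⟩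
  · show c (a + (b - a)) = c b
    rw [Nat.add_sub_cancel' hab]
  · intro k hk
    exact hmem _ (Nat.le_add_right _ _) (by omega)
  · intro k hk
    show dist (c (a + k)) (c (a + (k + 1))) ≤ r
    have h1 : a + (k + 1) = a + k + 1 := by ring
    rw [h1]
    exact hd _ (by omega) (by omega)

open Classical in
/-- The `A₁` points of a chain in `A₁ ∪ A₂` are `(C₂+2)r`-connected in `A₁`. -/
lemma chainA {X : Type*} [MetricSpace X] {A₁ A₂ : Set X} {r : ℝ} (hr : 0 < r)
    {C₂ : ℝ} (hC₂ : 0 < C₂)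
    (h₂ : ∀ x y : X, RChainConn A₂ r x y → dist x y ≤ C₂ * r) :
    ∀ n : ℕ, ∀ c : ℕ → X, c 0 ∈ A₁ → c n ∈ A₁ → (∀ k ≤ n, c k ∈ A₁ ∪ A₂) →
      (∀ k < n, dist (c k) (c (k + 1)) ≤ r) →
      RChainConn A₁ ((C₂ + 2) * r) (c 0) (c n) := by
  intro n
  induction n using Nat.strong_induction_on with
  | _ n IH =>
    intro c h0 hn hmem hd
    rcases Nat.eq_zero_or_pos n with rfl | hpos
    · exact rchain_single h0
    · -- least index i ≥ 1 with c i ∈ A₁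
      have hex : ∃ k, 1 ≤ k ∧ k ≤ n ∧ c k ∈ A₁ := ⟨n, hpos, le_rfl, hn⟩
      classical
      set i := Nat.find hex with hidef
      obtain ⟨hi1, hin, hiA⟩ := Nat.find_spec hex
      rw [← hidef] at hi1 hin hiA
      have hleast : ∀ m, m < i → ¬(1 ≤ m ∧ m ≤ n ∧ c m ∈ A₁) := fun m hm => Nat.find_min hex hm
      -- points strictly between 0 and i are in A₂
      have hmid : ∀ k, 1 ≤ k → k < i → c k ∈ A₂ := by
        intro k hk1 hki
        have hkA : c k ∈ A₁ ∪ A₂ := hmem k (by omega)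
        rcases hkA with h | h
        · exact absurd ⟨hk1, by omega, h⟩ (hleast k hki)
        · exact h
      -- bound dist (c 0) (c i)
      have hdist : dist (c 0) (c i) ≤ (C₂ + 2) * r := by
        rcases eq_or_lt_of_le hi1 with h1 | h2
        · have : dist (c 0) (c i) ≤ r := by rw [← h1]; exact hd 0 (by omega)
          nlinarith
        · -- i ≥ 2 : segment 1 .. i-1 in A₂
          have hseg : RChainConn A₂ r (c 1) (c (i - 1)) := by
            refine rchain_seg (by omega) (fun k hk1 hk2 => hmid k hk1 (by omega)) ?_
            intro k hk1 hk2
            exact hd k (by omega)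
          have hseg' := h₂ _ _ hseg
          have e1 : dist (c 0) (c 1) ≤ r := hd 0 (by omega)
          have e2 : dist (c (i - 1)) (c i) ≤ r := by
            have := hd (i - 1) (by omega)
            have heq : i - 1 + 1 = i := by omega
            rwa [heq] at this
          calc dist (c 0) (c i) ≤ dist (c 0) (c 1) + dist (c 1) (c (i - 1)) + dist (c (i - 1)) (c i) :=
                dist_triangle4 _ _ _ _
            _ ≤ r + C₂ * r + r := by linarith
            _ = (C₂ + 2) * r := by ring
      -- apply IH to the shifted chain
      have hrest : RChainConn A₁ ((C₂ + 2) * r) (c i) (c n) := by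
        have := IH (n - i) (by omega) (fun t => c (i + t)) (by simpa using hiA)
          (by show c (i + (n - i)) ∈ A₁; rw [Nat.add_sub_cancel' hin]; exact hn)
          (fun k hk => hmem _ (by omega))
          (fun k hk => by
            show dist (c (i + k)) (c (i + (k + 1))) ≤ r
            have h1 : i + (k + 1) = i + k + 1 := by ring
            rw [h1]; exact hd _ (by omega))
        simpa [Nat.add_sub_cancel' hin] using this
      exact rchain_cons h0 hdist hrest

/-- If, for all `r ≥ r₀`, every `r`-component of `A₁` has diameter at
most `C₁ r` and every `r`-component of `A₂` has diameter at most `C₂ r`, then there is a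
constant `C` depending only on `C₁, C₂` such that for all `r ≥ r₀` every `r`-component of
`A₁ ∪ A₂` has diameter at most `C r`. -/
theorem stmt19 (C₁ C₂ : ℝ) (hC₁ : 1 ≤ C₁) (hC₂ : 0 < C₂) :
    ∃ C : ℝ, 0 < C ∧
      ∀ (X : Type) [MetricSpace X] (A₁ A₂ : Set X) (r₀ : ℝ), 0 < r₀ →
        A₁.Nonempty → A₂.Nonempty →
        (∀ r : ℝ, r₀ ≤ r → ∀ x y : X, RChainConn A₁ r x y → dist x y ≤ C₁ * r) →
        (∀ r : ℝ, r₀ ≤ r → ∀ x y : X, RChainConn A₂ r x y → dist x y ≤ C₂ * r) →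
        ∀ r : ℝ, r₀ ≤ r → ∀ x y : X, RChainConn (A₁ ∪ A₂) r x y → dist x y ≤ C * r := by
  classical
  refine ⟨C₁ * (C₂ + 2) + 2 * (C₂ + 1) + C₂, by nlinarith, ?_⟩
  intro X _ A₁ A₂ r₀ hr₀ _ _ h₁ h₂ r hr x y hchain
  have hrpos : 0 < r := lt_of_lt_of_le hr₀ hr
  obtain ⟨n, c, h0, hn, hmem, hd⟩ := hchain
  subst h0; subst hn
  by_cases hA1 : ∃ k, k ≤ n ∧ c k ∈ A₁
  · -- least and greatest A₁ indices
    obtain ⟨k₀, hk₀n, hk₀A⟩ := hA1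
    set P : ℕ → Prop := fun k => c k ∈ A₁ with hP
    -- least index
    have hex : ∃ k, k ≤ n ∧ P k := ⟨k₀, hk₀n, hk₀A⟩
    have hex' : ∃ k, P k ∧ k ≤ n := ⟨k₀, hk₀A, hk₀n⟩
    set i := Nat.find hex' with hi
    obtain ⟨hiA, hin⟩ := Nat.find_spec hex'
    have hi_min : ∀ m < i, ¬(P m ∧ m ≤ n) := fun m hm => Nat.find_min hex' hm
    set j := Nat.findGreatest P n with hj
    have hjA : P j := Nat.findGreatest_spec hk₀n hk₀A
    have hjn : j ≤ n := Nat.findGreatest_le n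
    have hij : i ≤ j := by
      by_contra hcon
      exact hi_min j (by omega) ⟨hjA, hjn⟩
    -- dist (c 0) (c i) ≤ (C₂ + 1) * r
    have hleft : dist (c 0) (c i) ≤ (C₂ + 1) * r := by
      rcases Nat.eq_zero_or_pos i with h | h
      · rw [h]; simp; nlinarith
      · have hpre : ∀ k, k ≤ i - 1 → c k ∈ A₂ := by
          intro k hk
          have := hmem k (by omega)
          rcases this with hA | hA
          · exact absurd ⟨hA, by omega⟩ (hi_min k (by omega))
          · exact hA
        have hseg : RChainConn A₂ r (c 0) (c (i - 1)) :=
          rchain_seg (by omega) (fun k _ hk => hpre k hk) (fun k _ hk => hd k (by omega))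
        have hb := h₂ r hr _ _ hseg
        have he : dist (c (i - 1)) (c i) ≤ r := by
          have := hd (i - 1) (by omega)
          have heq : i - 1 + 1 = i := by omega
          rwa [heq] at this
        calc dist (c 0) (c i) ≤ dist (c 0) (c (i - 1)) + dist (c (i - 1)) (c i) :=
              dist_triangle _ _ _
          _ ≤ C₂ * r + r := by linarith
          _ = (C₂ + 1) * r := by ring
    -- dist (c j) (c n) ≤ (C₂ + 1) * r
    have hright : dist (c j) (c n) ≤ (C₂ + 1) * r := by
      rcases eq_or_lt_of_le hjn with h | h
      · rw [h]; simp; nlinarith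
      · have hpost : ∀ k, j + 1 ≤ k → k ≤ n → c k ∈ A₂ := by
          intro k hk1 hk2
          have := hmem k hk2
          rcases this with hA | hA
          · exact absurd hA (Nat.findGreatest_is_greatest (P := P) (by omega) hk2)
          · exact hA
        have hseg : RChainConn A₂ r (c (j + 1)) (c n) :=
          rchain_seg (by omega) hpost (fun k hk1 hk2 => hd k hk2)
        have hb := h₂ r hr _ _ hseg
        have he : dist (c j) (c (j + 1)) ≤ r := hd j h
        calc dist (c j) (c n) ≤ dist (c j) (c (j + 1)) + dist (c (j + 1)) (c n) :=
              dist_triangle _ _ _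
          _ ≤ r + C₂ * r := by linarith
          _ = (C₂ + 1) * r := by ring
    -- middle part
    have hmidchain : RChainConn A₁ ((C₂ + 2) * r) (c i) (c j) := by
      have := chainA hrpos hC₂ (h₂ r hr) (j - i) (fun t => c (i + t)) (by simpa using hiA)
        (by show c (i + (j - i)) ∈ A₁; rw [Nat.add_sub_cancel' hij]; exact hjA)
        (fun k hk => hmem _ (by omega))
        (fun k hk => by
          show dist (c (i + k)) (c (i + (k + 1))) ≤ r
          have h1 : i + (k + 1) = i + k + 1 := by ring
          rw [h1]; exact hd _ (by omega))
      simpa [Nat.add_sub_cancel' hij] using this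
    have hmidr : r₀ ≤ (C₂ + 2) * r := by nlinarith
    have hmid := h₁ _ hmidr _ _ hmidchain
    calc dist (c 0) (c n) ≤ dist (c 0) (c i) + dist (c i) (c j) + dist (c j) (c n) :=
          dist_triangle4 _ _ _ _
      _ ≤ (C₂ + 1) * r + C₁ * ((C₂ + 2) * r) + (C₂ + 1) * r := by linarith
      _ ≤ (C₁ * (C₂ + 2) + 2 * (C₂ + 1) + C₂) * r := by nlinarith [mul_pos hC₂ hrpos]
  · -- all points in A₂
    push_neg at hA1
    have hall : ∀ k ≤ n, c k ∈ A₂ := by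
      intro k hk
      rcases hmem k hk with h | h
      · exact absurd h (hA1 k hk)
      · exact h
    have hseg : RChainConn A₂ r (c 0) (c n) :=
      rchain_seg (Nat.zero_le n) (fun k _ hk => hall k hk) (fun k _ hk => hd k hk)
    have hb := h₂ r hr _ _ hseg
    have hp : 0 < (C₁ * (C₂ + 2) + 2 * (C₂ + 1)) * r :=
      mul_pos (by nlinarith) hrpos
    nlinarith
end
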